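/- arXiv:2211.10777 — 7 statements merged into one kernel-verified Lean document; each statement's English description precedes it below -/
import Mathlib

section
/- Let (Ω, P) be a probability space and J a finite index set. For each j ∈ J let H_j be a square-integrable complex-valued random variable with E[H_j] = 0 and E[|H_j|²] = Λ_j, let χ_j be a {0,1}-valued random variable with P(χ_j = 1) = p_tx, where p_tx ∈ (0,1), and let n be a square-integrable complex-valued random variable with E[n] = 0 and E[|n|²] = N₀; assume the family {H_j} ∪ {χ_j} ∪ {n} (j ∈ J) is mutually independent. Fix reals E > 0, M ≥ 1 and nonnegative reals (q_j)_{j∈J}, set x_j = √(E·M·q_j) and Y = Σ_{j∈J} χ_j H_j x_j + n. Let χ be a further {0,1}-valued random variable with P(χ = 1) = p_tx, independent of Y. Then the energy estimator r = (1 − χ)·(|Y|² − N₀)/(p_tx(1 − p_tx)·E·M) satisfies E[r] = Σ_{j∈J} Λ_j q_j; that is, r is an unbiased estimate of the Λ-weighted sum of the transmitted energy levels q_j. -/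
open MeasureTheory ProbabilityTheory
open scoped ComplexConjugate ENNReal

section Helpers
variable {Ω : Type*} [MeasurableSpace Ω] {P : Measure Ω}

/-- a.e.-modification preserves joint independence. -/
lemma iIndepFun_ae_eq' {ι : Type*} {β : ι → Type*} {m : ∀ i, MeasurableSpace (β i)}
    {f g : ∀ i, Ω → β i} (hf : iIndepFun f P) (h : ∀ i, f i =ᵐ[P] g i) :
    iIndepFun g P := by
  rw [iIndepFun_iff_measure_inter_preimage_eq_mul] at hf ⊢
  intro S sets hsets
  have h1 : ∀ᵐ ω ∂P, ∀ i ∈ S, f i ω = g i ω :=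
    (Filter.eventually_all_finset S).2 fun i _ => h i
  have h2 : (⋂ i ∈ S, g i ⁻¹' sets i : Set Ω) =ᵐ[P] (⋂ i ∈ S, f i ⁻¹' sets i : Set Ω) :=
    Filter.eventuallyEq_set.2 (h1.mono fun ω hω => by
      simp only [Set.mem_iInter, Set.mem_preimage]
      exact forall₂_congr fun i hi => by rw [hω i hi])
  rw [measure_congr h2, hf S hsets]
  exact Finset.prod_congr rfl fun i hi =>
    (measure_congr (Filter.eventuallyEq_set.2 ((h i).mono fun ω hω => by simp [hω]))).symm

/-- integral of a {0,1}-valued random variable. -/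
lemma integral_zero_one {𝕜 : Type*} [RCLike 𝕜] [IsProbabilityMeasure P] {f : Ω → 𝕜}
    (h01 : ∀ ω, f ω = 0 ∨ f ω = 1) (hm : Measurable f) {p : ℝ} (hp : 0 ≤ p)
    (hP : P {ω | f ω = 1} = ENNReal.ofReal p) :
    Integrable f P ∧ ∫ ω, f ω ∂P = (p : 𝕜) := by
  have hs : MeasurableSet {ω | f ω = 1} := hm (measurableSet_singleton 1)
  have hfi : f = Set.indicator {ω | f ω = 1} (fun _ => (1 : 𝕜)) := by
    funext ω
    rcases h01 ω with h | h <;>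
      simp [Set.indicator_apply, Set.mem_setOf_eq, h]
  constructor
  · rw [hfi]; exact (integrable_const (1 : 𝕜)).indicator hs
  · rw [hfi, integral_indicator_const _ hs, measureReal_def, hP, ENNReal.toReal_ofReal hp,
      RCLike.real_smul_eq_coe_mul, mul_one]

lemma memLp_conj {p : ℝ≥0∞} {f : Ω → ℂ} (h : MemLp f p P) :
    MemLp (fun ω => conj (f ω)) p P :=
  h.of_le (Complex.continuous_conj.comp_aestronglyMeasurable h.1)
    (Filter.Eventually.of_forall fun ω => by simp)

lemma integrable_mul_L2 {f g : Ω → ℂ} (hf : MemLp f 2 P) (hg : MemLp g 2 P) :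
    Integrable (fun ω => f ω * g ω) P := by
  refine Integrable.mono' ((hf.norm.integrable_sq.add hg.norm.integrable_sq).div_const 2)
    (hf.1.mul hg.1) (Filter.Eventually.of_forall fun ω => ?_)
  simp only [Pi.add_apply, norm_mul]
  have := two_mul_le_add_sq ‖f ω‖ ‖g ω‖
  linarith

/-- product formula for complex-valued independent integrable random variables. -/
lemma ProbabilityTheory.IndepFun.integral_mul_complex {X Y : Ω → ℂ} (h : IndepFun X Y P)
    (hX : Integrable X P) (hY : Integrable Y P) :
    ∫ ω, X ω * Y ω ∂P = (∫ ω, X ω ∂P) * (∫ ω, Y ω ∂P) := by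
  have hre : IndepFun (fun ω => (X ω).re) (fun ω => (Y ω).re) P :=
    h.comp Complex.measurable_re Complex.measurable_re
  have him : IndepFun (fun ω => (X ω).im) (fun ω => (Y ω).im) P :=
    h.comp Complex.measurable_im Complex.measurable_im
  have hri : IndepFun (fun ω => (X ω).re) (fun ω => (Y ω).im) P :=
    h.comp Complex.measurable_re Complex.measurable_im
  have hir : IndepFun (fun ω => (X ω).im) (fun ω => (Y ω).re) P :=
    h.comp Complex.measurable_im Complex.measurable_re
  have hXr : Integrable (fun ω => (X ω).re) P := by
    have := hX.re; simpa only [RCLike.re_to_complex] using this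
  have hXi : Integrable (fun ω => (X ω).im) P := by
    have := hX.im; simpa only [RCLike.im_to_complex] using this
  have hYr : Integrable (fun ω => (Y ω).re) P := by
    have := hY.re; simpa only [RCLike.re_to_complex] using this
  have hYi : Integrable (fun ω => (Y ω).im) P := by
    have := hY.im; simpa only [RCLike.im_to_complex] using this
  have hXY : Integrable (fun ω => X ω * Y ω) P := h.integrable_mul hX hY
  have hXre := integral_re (𝕜 := ℂ) hX
  have hXim := integral_im (𝕜 := ℂ) hX
  have hYre := integral_re (𝕜 := ℂ) hY
  have hYim := integral_im (𝕜 := ℂ) hY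
  have hXYre := integral_re (𝕜 := ℂ) hXY
  have hXYim := integral_im (𝕜 := ℂ) hXY
  simp only [RCLike.re_to_complex, RCLike.im_to_complex] at hXre hXim hYre hYim hXYre hXYim
  have i1 : Integrable (fun a => (X a).re * (Y a).re) P := by
    simpa [Pi.mul_def] using hre.integrable_mul hXr hYr
  have i2 : Integrable (fun a => (X a).im * (Y a).im) P := by
    simpa [Pi.mul_def] using him.integrable_mul hXi hYi
  have i3 : Integrable (fun a => (X a).re * (Y a).im) P := by
    simpa [Pi.mul_def] using hri.integrable_mul hXr hYi
  have i4 : Integrable (fun a => (X a).im * (Y a).re) P := by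
    simpa [Pi.mul_def] using hir.integrable_mul hXi hYr
  have e1 : ∫ a, (X a).re * (Y a).re ∂P = (∫ a, (X a).re ∂P) * ∫ a, (Y a).re ∂P := by
    simpa [Pi.mul_def] using hre.integral_fun_mul_eq_mul_integral hXr.1 hYr.1
  have e2 : ∫ a, (X a).im * (Y a).im ∂P = (∫ a, (X a).im ∂P) * ∫ a, (Y a).im ∂P := by
    simpa [Pi.mul_def] using him.integral_fun_mul_eq_mul_integral hXi.1 hYi.1
  have e3 : ∫ a, (X a).re * (Y a).im ∂P = (∫ a, (X a).re ∂P) * ∫ a, (Y a).im ∂P := by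
    simpa [Pi.mul_def] using hri.integral_fun_mul_eq_mul_integral hXr.1 hYi.1
  have e4 : ∫ a, (X a).im * (Y a).re ∂P = (∫ a, (X a).im ∂P) * ∫ a, (Y a).re ∂P := by
    simpa [Pi.mul_def] using hir.integral_fun_mul_eq_mul_integral hXi.1 hYr.1
  apply Complex.ext
  · rw [← hXYre]
    have : ∀ ω, (X ω * Y ω).re = (X ω).re * (Y ω).re - (X ω).im * (Y ω).im := fun ω =>
      Complex.mul_re _ _
    rw [integral_congr_ae (Filter.Eventually.of_forall this), integral_sub i1 i2,
      e1, e2, Complex.mul_re, hXre, hXim, hYre, hYim]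
  · rw [← hXYim]
    have : ∀ ω, (X ω * Y ω).im = (X ω).re * (Y ω).im + (X ω).im * (Y ω).re := fun ω =>
      Complex.mul_im _ _
    rw [integral_congr_ae (Filter.Eventually.of_forall this), integral_add i3 i4,
      e3, e4, Complex.mul_im, hXre, hXim, hYre, hYim]

end Helpers


/-- **Unbiasedness of the received-energy estimator** (Eq. (14)): with transmitted
amplitudes `x j = √(E·M·q j)`, received signal `Y = Σ_j χ_j H_j x_j + n`, and an
independent receive/transmit indicator `χ` with `P(χ = 1) = p_tx`, the estimator
`r = (1 − χ)(|Y|² − N₀)/(p_tx(1 − p_tx)·E·M)` satisfies `E[r] = Σ_j Λ_j q_j`. -/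
theorem stmt1 {Ω : Type*} [MeasurableSpace Ω] (P : Measure Ω) [IsProbabilityMeasure P]
    {J : Type*} [Fintype J]
    (H χtx : J → Ω → ℂ) (n : Ω → ℂ) (Λ : J → ℝ) (ptx N0 : ℝ)
    (hptx : ptx ∈ Set.Ioo (0:ℝ) 1)
    (hH2 : ∀ j, MemLp (H j) 2 P)
    (hHmean : ∀ j, ∫ ω, H j ω ∂P = 0)
    (hHvar : ∀ j, ∫ ω, ‖H j ω‖ ^ 2 ∂P = Λ j)
    (hχtx01 : ∀ j ω, χtx j ω = 0 ∨ χtx j ω = 1)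
    (hχtxmeas : ∀ j, Measurable (χtx j))
    (hχtxp : ∀ j, P {ω | χtx j ω = 1} = ENNReal.ofReal ptx)
    (hn2 : MemLp n 2 P)
    (hnmean : ∫ ω, n ω ∂P = 0)
    (hnvar : ∫ ω, ‖n ω‖ ^ 2 ∂P = N0)
    (hindep : iIndepFun
      (Sum.elim (fun j => H j) (Sum.elim (fun j => χtx j) (fun _ : Unit => n))) P)
    (E M : ℝ) (hE : 0 < E) (hM : 1 ≤ M)
    (q : J → ℝ) (hq : ∀ j, 0 ≤ q j)
    (x : J → ℂ) (hx : ∀ j, x j = (Real.sqrt (E * M * q j) : ℂ))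
    (Y : Ω → ℂ) (hY : ∀ ω, Y ω = (∑ j, χtx j ω * H j ω * x j) + n ω)
    (χ : Ω → ℝ) (hχ01 : ∀ ω, χ ω = 0 ∨ χ ω = 1)
    (hχmeas : Measurable χ)
    (hχp : P {ω | χ ω = 1} = ENNReal.ofReal ptx)
    (hχY : IndepFun χ Y P)
    (r : Ω → ℝ)
    (hr : ∀ ω, r ω = (1 - χ ω) * (‖Y ω‖ ^ 2 - N0) / (ptx * (1 - ptx) * E * M)) :
    ∫ ω, r ω ∂P = ∑ j, Λ j * q j := by
  classical
  obtain ⟨hp0, hp1⟩ := hptx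
  -- measurable modifications
  set H' : J → Ω → ℂ := fun j => (hH2 j).1.mk (H j) with hH'def
  set n' : Ω → ℂ := hn2.1.mk n with hn'def
  set g : J ⊕ (J ⊕ Unit) → Ω → ℂ :=
    Sum.elim (fun j => H' j) (Sum.elim (fun j => χtx j) (fun _ => n')) with hgdef
  have hHae : ∀ j, H j =ᵐ[P] H' j := fun j => (hH2 j).1.ae_eq_mk
  have hnae : n =ᵐ[P] n' := hn2.1.ae_eq_mk
  have hgae : ∀ i, (Sum.elim (fun j => H j)
      (Sum.elim (fun j => χtx j) (fun _ : Unit => n))) i =ᵐ[P] g i := by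
    rintro (j | j | ⟨⟩)
    · exact hHae j
    · exact Filter.EventuallyEq.refl _ _
    · exact hnae
  have hindep' : iIndepFun g P :=
    iIndepFun_ae_eq' hindep hgae
  have hgmeas : ∀ i, Measurable (g i) := by
    rintro (j | j | ⟨⟩)
    · exact (hH2 j).1.stronglyMeasurable_mk.measurable
    · exact hχtxmeas j
    · exact hn2.1.stronglyMeasurable_mk.measurable
  have hH'meas : ∀ j, Measurable (H' j) := fun j => hgmeas (Sum.inl j)
  have hn'meas : Measurable n' := hgmeas (Sum.inr (Sum.inr ()))
  -- transferred facts
  have hH'2 : ∀ j, MemLp (H' j) 2 P := fun j => (hH2 j).ae_eq (hHae j)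
  have hn'2 : MemLp n' 2 P := hn2.ae_eq hnae
  have hH'mean : ∀ j, ∫ ω, H' j ω ∂P = 0 := fun j =>
    (integral_congr_ae (hHae j)).symm.trans (hHmean j)
  have hn'mean : ∫ ω, n' ω ∂P = 0 := (integral_congr_ae hnae).symm.trans hnmean
  have hH'var : ∀ j, ∫ ω, ‖H' j ω‖ ^ 2 ∂P = Λ j := fun j =>
    (integral_congr_ae ((hHae j).mono fun ω hω => by rw [hω])).symm.trans (hHvar j)
  have hn'var : ∫ ω, ‖n' ω‖ ^ 2 ∂P = N0 :=
    (integral_congr_ae (hnae.mono fun ω hω => by rw [hω])).symm.trans hnvar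
  have hH'int : ∀ j, Integrable (H' j) P := fun j => (hH'2 j).integrable one_le_two
  have hn'int : Integrable n' P := hn'2.integrable one_le_two
  have hχtxI : ∀ j, Integrable (χtx j) P ∧ ∫ ω, χtx j ω ∂P = ((ptx : ℝ) : ℂ) := fun j =>
    integral_zero_one (hχtx01 j) (hχtxmeas j) hp0.le (hχtxp j)
  -- the products χ·H'
  set Z : J → Ω → ℂ := fun j ω => χtx j ω * H' j ω with hZdef
  have memZ : ∀ j, MemLp (Z j) 2 P := by
    intro j
    refine (hH'2 j).of_le (((hχtxmeas j).mul (hH'meas j)).aestronglyMeasurable)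
      (Filter.Eventually.of_forall fun ω => ?_)
    rcases hχtx01 j ω with h | h <;> simp [Z, h]
  have hZint : ∀ j, Integrable (Z j) P := fun j => (memZ j).integrable one_le_two
  have hZmean : ∀ j, ∫ ω, Z j ω ∂P = 0 := by
    intro j
    have hiZ : IndepFun (χtx j) (H' j) P :=
      hindep'.indepFun (show (Sum.inr (Sum.inl j) : J ⊕ (J ⊕ Unit)) ≠ Sum.inl j by simp)
    rw [show (fun ω => Z j ω) = fun ω => χtx j ω * H' j ω from rfl,
      hiZ.integral_mul_complex (hχtxI j).1 (hH'int j), hH'mean j, mul_zero]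
  -- the summands of Y'
  set W : J ⊕ Unit → Ω → ℂ := Sum.elim (fun j ω => Z j ω * x j) (fun _ => n') with hWdef
  have memW : ∀ u, MemLp (W u) 2 P := by
    rintro (j | ⟨⟩)
    · have := (memZ j).const_mul (x j)
      refine this.ae_eq (Filter.Eventually.of_forall fun ω => ?_)
      simp [W, mul_comm]
    · exact hn'2
  have intWW : ∀ u v, Integrable (fun ω => W u ω * conj (W v ω)) P := fun u v =>
    integrable_mul_L2 (memW u) (memLp_conj (memW v))
  -- Y' and its relation to Y
  set Y' : Ω → ℂ := fun ω => (∑ j, Z j ω * x j) + n' ω with hY'def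
  have hY'sum : ∀ ω, Y' ω = ∑ u : J ⊕ Unit, W u ω := by
    intro ω
    simp [Y', W, Fintype.sum_sum_type]
  have hYae : Y =ᵐ[P] Y' := by
    have h1 : ∀ᵐ ω ∂P, ∀ j, H j ω = H' j ω := ae_all_iff.2 hHae
    filter_upwards [h1, hnae] with ω hω₁ hω₂
    rw [hY ω]
    simp only [Y', Z]
    rw [hω₂]
    congr 1
    exact Finset.sum_congr rfl fun j _ => by rw [hω₁ j]
  have memY' : MemLp Y' 2 P := by
    have h := memLp_finset_sum' (μ := P) (p := 2) Finset.univ (fun (u : J ⊕ Unit) _ => memW u)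
    refine h.ae_eq (Filter.Eventually.of_forall fun ω => ?_)
    rw [hY'sum ω]
    simp
  have intY'sq : Integrable (fun ω => ‖Y' ω‖ ^ 2) P :=
    (memLp_two_iff_integrable_sq_norm memY'.1).1 memY'
  -- the five integral evaluations
  have hmulconj : Measurable fun z : ℂ => conj z := Complex.continuous_conj.measurable
  have diagH : ∀ j, ∫ ω, H' j ω * conj (H' j ω) ∂P = ((Λ j : ℝ) : ℂ) := by
    intro j
    have hpt : ∀ ω, H' j ω * conj (H' j ω) = ((‖H' j ω‖ ^ 2 : ℝ) : ℂ) := fun ω => by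
      rw [Complex.mul_conj]
      norm_cast
      simp [Complex.normSq_eq_norm_sq]
    rw [integral_congr_ae (Filter.Eventually.of_forall hpt)]
    exact integral_ofReal.trans (congrArg Complex.ofReal (hH'var j))
  have diagn : ∫ ω, n' ω * conj (n' ω) ∂P = ((N0 : ℝ) : ℂ) := by
    have hpt : ∀ ω, n' ω * conj (n' ω) = ((‖n' ω‖ ^ 2 : ℝ) : ℂ) := fun ω => by
      rw [Complex.mul_conj]
      norm_cast
      simp [Complex.normSq_eq_norm_sq]
    rw [integral_congr_ae (Filter.Eventually.of_forall hpt)]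
    exact integral_ofReal.trans (congrArg Complex.ofReal hn'var)
  have diagW : ∀ j, ∫ ω, W (Sum.inl j) ω * conj (W (Sum.inl j) ω) ∂P
      = ((ptx * Λ j * (E * M * q j) : ℝ) : ℂ) := by
    intro j
    have hxconj : conj (x j) = x j := by rw [hx]; exact Complex.conj_ofReal _
    have hxsq : x j * x j = ((E * M * q j : ℝ) : ℂ) := by
      rw [hx, ← Complex.ofReal_mul, Real.mul_self_sqrt (mul_nonneg (mul_nonneg hE.le (le_trans zero_le_one hM)) (hq j))]
    have hpt : ∀ ω, W (Sum.inl j) ω * conj (W (Sum.inl j) ω)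
        = ((E * M * q j : ℝ) : ℂ) * (χtx j ω * (H' j ω * conj (H' j ω))) := by
      intro ω
      have hconjχ : conj (χtx j ω) = χtx j ω := by rcases hχtx01 j ω with h | h <;> simp [h]
      have hχsq : χtx j ω * χtx j ω = χtx j ω := by rcases hχtx01 j ω with h | h <;> simp [h]
      simp only [W, Sum.elim_inl, Z, map_mul, hconjχ, hxconj]
      calc χtx j ω * H' j ω * x j * (χtx j ω * conj (H' j ω) * x j)
          = (χtx j ω * χtx j ω) * (H' j ω * conj (H' j ω)) * (x j * x j) := by ring
        _ = ((E * M * q j : ℝ) : ℂ) * (χtx j ω * (H' j ω * conj (H' j ω))) := by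
            rw [hχsq, hxsq]; ring
    have hiZ : IndepFun (χtx j) (fun ω => H' j ω * conj (H' j ω)) P := by
      have h0 : IndepFun (g (Sum.inr (Sum.inl j))) (g (Sum.inl j)) P :=
        hindep'.indepFun (by simp)
      have := h0.comp measurable_id (measurable_id.mul hmulconj)
      simpa [Function.comp_def, Pi.mul_def, hgdef] using this
    rw [integral_congr_ae (Filter.Eventually.of_forall hpt), integral_const_mul,
      hiZ.integral_mul_complex (hχtxI j).1
        (integrable_mul_L2 (hH'2 j) (memLp_conj (hH'2 j))),
      (hχtxI j).2, diagH j]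
    push_cast
    ring
  have crossll : ∀ j k, j ≠ k →
      ∫ ω, W (Sum.inl j) ω * conj (W (Sum.inl k) ω) ∂P = 0 := by
    intro j k hjk
    have hpt : ∀ ω, W (Sum.inl j) ω * conj (W (Sum.inl k) ω)
        = (x j * conj (x k)) * (Z j ω * conj (Z k ω)) := by
      intro ω
      simp only [W, Sum.elim_inl, map_mul]
      ring
    have hiZZ : IndepFun (Z j) (fun ω => conj (Z k ω)) P := by
      have h0 : IndepFun (g (Sum.inr (Sum.inl j)) * g (Sum.inl j))
          (g (Sum.inr (Sum.inl k)) * g (Sum.inl k)) P :=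
        hindep'.indepFun_mul_mul hgmeas _ _ _ _ (by simp [hjk]) (by simp) (by simp)
          (by simp [hjk])
      have := h0.comp measurable_id hmulconj
      simpa [Function.comp_def, hgdef, Z, Pi.mul_def, map_mul] using this
    rw [integral_congr_ae (Filter.Eventually.of_forall hpt), integral_const_mul,
      hiZZ.integral_mul_complex (hZint j) ((memLp_conj (memZ k)).integrable one_le_two),
      hZmean j, zero_mul, mul_zero]
  have crossln : ∀ j, ∫ ω, W (Sum.inl j) ω * conj (W (Sum.inr ()) ω) ∂P = 0 := by
    intro j
    have hpt : ∀ ω, W (Sum.inl j) ω * conj (W (Sum.inr ()) ω)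
        = x j * (Z j ω * conj (n' ω)) := by
      intro ω; simp only [W, Sum.elim_inl, Sum.elim_inr]; ring
    have hiZn : IndepFun (Z j) (fun ω => conj (n' ω)) P := by
      have h0 : IndepFun (g (Sum.inr (Sum.inl j)) * g (Sum.inl j))
          (g (Sum.inr (Sum.inr ()))) P :=
        hindep'.indepFun_mul_left hgmeas _ _ _ (by simp) (by simp)
      have := h0.comp measurable_id hmulconj
      simpa [Function.comp_def, hgdef, Z, Pi.mul_def, map_mul] using this
    rw [integral_congr_ae (Filter.Eventually.of_forall hpt), integral_const_mul,
      hiZn.integral_mul_complex (hZint j) ((memLp_conj hn'2).integrable one_le_two),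
      hZmean j, zero_mul, mul_zero]
  have crossnl : ∀ k, ∫ ω, W (Sum.inr ()) ω * conj (W (Sum.inl k) ω) ∂P = 0 := by
    intro k
    have hpt : ∀ ω, W (Sum.inr ()) ω * conj (W (Sum.inl k) ω)
        = conj (x k) * (n' ω * conj (Z k ω)) := by
      intro ω; simp only [W, Sum.elim_inl, Sum.elim_inr, map_mul]; ring
    have hinZ : IndepFun n' (fun ω => conj (Z k ω)) P := by
      have h0 : IndepFun (g (Sum.inr (Sum.inr ())))
          (g (Sum.inr (Sum.inl k)) * g (Sum.inl k)) P :=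
        hindep'.indepFun_mul_right hgmeas _ _ _ (by simp) (by simp)
      have := h0.comp measurable_id hmulconj
      simpa [Function.comp_def, hgdef, Z, Pi.mul_def, map_mul] using this
    rw [integral_congr_ae (Filter.Eventually.of_forall hpt), integral_const_mul,
      hinZ.integral_mul_complex hn'int ((memLp_conj (memZ k)).integrable one_le_two),
      hn'mean, zero_mul, mul_zero]
  -- assembling the second moment of Y'
  have hYY' : ∫ ω, Y' ω * conj (Y' ω) ∂P
      = ∑ u : J ⊕ Unit, ∑ v : J ⊕ Unit, ∫ ω, W u ω * conj (W v ω) ∂P := by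
    have hpt : ∀ ω, Y' ω * conj (Y' ω)
        = ∑ u : J ⊕ Unit, ∑ v : J ⊕ Unit, W u ω * conj (W v ω) := by
      intro ω
      rw [hY'sum ω, map_sum, Finset.sum_mul_sum]
    rw [integral_congr_ae (Filter.Eventually.of_forall hpt),
      integral_finset_sum _ fun u _ => integrable_finset_sum _ fun v _ => intWW u v]
    exact Finset.sum_congr rfl fun u _ => integral_finset_sum _ fun v _ => intWW u v
  have hsumval : ∑ u : J ⊕ Unit, ∑ v : J ⊕ Unit, ∫ ω, W u ω * conj (W v ω) ∂P
      = ((∑ j, ptx * Λ j * (E * M * q j) + N0 : ℝ) : ℂ) := by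
    rw [Fintype.sum_sum_type]
    have hrow : ∀ j, ∑ v : J ⊕ Unit, ∫ ω, W (Sum.inl j) ω * conj (W v ω) ∂P
        = ((ptx * Λ j * (E * M * q j) : ℝ) : ℂ) := by
      intro j
      rw [Fintype.sum_sum_type]
      have : ∑ k, ∫ ω, W (Sum.inl j) ω * conj (W (Sum.inl k) ω) ∂P
          = ((ptx * Λ j * (E * M * q j) : ℝ) : ℂ) := by
        rw [Finset.sum_eq_single j]
        · exact diagW j
        · exact fun k _ hkj => crossll j k (Ne.symm hkj)
        · exact fun h => absurd (Finset.mem_univ j) h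
      simp [this, crossln j]
    have hlast : ∑ v : J ⊕ Unit, ∫ ω, W (Sum.inr ()) ω * conj (W v ω) ∂P = ((N0 : ℝ) : ℂ) := by
      rw [Fintype.sum_sum_type]
      have h1 : ∑ k, ∫ ω, W (Sum.inr ()) ω * conj (W (Sum.inl k) ω) ∂P = 0 := by
        exact Finset.sum_eq_zero fun k _ => crossnl k
      have h2 : ∫ ω, W (Sum.inr ()) ω * conj (W (Sum.inr ()) ω) ∂P = ((N0 : ℝ) : ℂ) := by
        simpa [W] using diagn
      simp [h1, h2]
    rw [Finset.sum_congr rfl fun j _ => hrow j]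
    simp only [hlast]
    push_cast
    simp
  -- conclude: second moment of Y
  have hmom' : ∫ ω, ‖Y' ω‖ ^ 2 ∂P = ∑ j, ptx * Λ j * (E * M * q j) + N0 := by
    have hcoe : ((∫ ω, ‖Y' ω‖ ^ 2 ∂P : ℝ) : ℂ)
        = ((∑ j, ptx * Λ j * (E * M * q j) + N0 : ℝ) : ℂ) := by
      have hpt : ∀ ω, ((‖Y' ω‖ ^ 2 : ℝ) : ℂ) = Y' ω * conj (Y' ω) := fun ω => by
        rw [Complex.mul_conj]
        norm_cast
        simp [Complex.normSq_eq_norm_sq]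
      calc ((∫ ω, ‖Y' ω‖ ^ 2 ∂P : ℝ) : ℂ) = ∫ ω, ((‖Y' ω‖ ^ 2 : ℝ) : ℂ) ∂P :=
            integral_ofReal.symm
        _ = ∫ ω, Y' ω * conj (Y' ω) ∂P :=
            integral_congr_ae (Filter.Eventually.of_forall hpt)
        _ = ((∑ j, ptx * Λ j * (E * M * q j) + N0 : ℝ) : ℂ) := hYY'.trans hsumval
    exact_mod_cast hcoe
  have hmom : ∫ ω, ‖Y ω‖ ^ 2 ∂P = ∑ j, ptx * Λ j * (E * M * q j) + N0 := by
    rw [integral_congr_ae (hYae.mono fun ω hω => by rw [hω])]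
    exact hmom'
  have intYsq : Integrable (fun ω => ‖Y ω‖ ^ 2) P := by
    have hsq : (fun ω => ‖Y' ω‖ ^ 2) =ᵐ[P] (fun ω => ‖Y ω‖ ^ 2) :=
      hYae.mono fun ω (hω : Y ω = Y' ω) => by simp [hω]
    exact intY'sq.congr hsq
  -- split off the independent indicator
  set c : ℝ := ptx * (1 - ptx) * E * M with hcdef
  have hχI : Integrable χ P ∧ ∫ ω, χ ω ∂P = ptx :=
    integral_zero_one hχ01 hχmeas hp0.le hχp
  have hind2 : IndepFun (fun ω => 1 - χ ω) (fun ω => (‖Y ω‖ ^ 2 - N0) / c) P := by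
    have hm1 : Measurable (fun t : ℝ => 1 - t) := measurable_const.sub measurable_id
    have hm2 : Measurable (fun z : ℂ => (‖z‖ ^ 2 - N0) / c) :=
      ((measurable_norm.pow measurable_const).sub measurable_const).div measurable_const
    have := hχY.comp hm1 hm2
    simpa [Function.comp_def] using this
  have int1 : Integrable (fun ω => 1 - χ ω) P := (integrable_const (1 : ℝ)).sub hχI.1
  have int2 : Integrable (fun ω => (‖Y ω‖ ^ 2 - N0) / c) P :=
    (intYsq.sub (integrable_const N0)).div_const c
  have hrint : ∫ ω, r ω ∂P
      = (∫ ω, (1 - χ ω) ∂P) * ∫ ω, (‖Y ω‖ ^ 2 - N0) / c ∂P := by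
    have hreq : ∀ ω, r ω = (1 - χ ω) * ((‖Y ω‖ ^ 2 - N0) / c) := fun ω => by
      rw [hr ω, mul_div_assoc]
    rw [integral_congr_ae (Filter.Eventually.of_forall hreq)]
    have := hind2.integral_fun_mul_eq_mul_integral int1.1 int2.1
    simpa [Pi.mul_def] using this
  have hint1 : ∫ ω, (1 - χ ω) ∂P = 1 - ptx := by
    rw [integral_sub (integrable_const 1) hχI.1, hχI.2]
    simp
  have hint2 : ∫ ω, (‖Y ω‖ ^ 2 - N0) / c ∂P = ptx * (E * M) * (∑ j, Λ j * q j) / c := by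
    rw [integral_div, integral_sub intYsq (integrable_const N0), hmom, integral_const]
    simp only [probReal_univ, measure_univ, ENNReal.toReal_one, smul_eq_mul, one_mul]
    congr 1
    rw [Finset.mul_sum]
    ring_nf
    exact Finset.sum_congr rfl fun j _ => by ring
  rw [hrint, hint1, hint2]
  have hM0 : (0:ℝ) < M := lt_of_lt_of_le zero_lt_one hM
  have hc0 : c ≠ 0 := by
    rw [hcdef]
    exact mul_ne_zero (mul_ne_zero (mul_ne_zero (ne_of_gt hp0)
      (ne_of_gt (sub_pos.2 hp1))) (ne_of_gt hE)) (ne_of_gt hM0)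
  calc (1 - ptx) * ((ptx * (E * M) * ∑ j, Λ j * q j) / c)
      = (c * ∑ j, Λ j * q j) / c := by rw [hcdef]; ring
    _ = ∑ j, Λ j * q j := by rw [mul_comm c, mul_div_assoc, div_self hc0, mul_one]
end

section
/- Let N, d ≥ 1 be integers, let 0 < μ ≤ L_c, and let U > 0. Let 𝐋 be a symmetric positive semidefinite N×N real matrix with 𝐋·𝟏_N = 0, and let ρ₂ > 0 satisfy vᵀ𝐋v ≥ ρ₂‖v‖² for every v ∈ ℝ^N orthogonal to 𝟏_N. Set 𝐋̂ = 𝐋 ⊗ I_d. Let A be a symmetric Nd×Nd real matrix with μ·I ⪯ A ⪯ L_c·I and set B = A + U·𝐋̂. Then B is invertible, and for every v ∈ ℝ^{Nd} that is orthogonal to 𝟏_N ⊗ u for every u ∈ ℝ^d (equivalently, the sum of the N consecutive d-dimensional blocks of v is zero): ‖B⁻¹ v‖ ≤ (1/U)·(L_c/(μ·ρ₂))·‖v‖. -/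
open Matrix
open scoped Kronecker

private lemma dot_self_nonneg' {ι : Type*} [Fintype ι] (x : ι → ℝ) : 0 ≤ x ⬝ᵥ x :=
  Finset.sum_nonneg fun _ _ => mul_self_nonneg _

private lemma bilin_symm {ι : Type*} [Fintype ι] {M : Matrix ι ι ℝ} (hM : M.IsSymm)
    (x y : ι → ℝ) : x ⬝ᵥ M.mulVec y = y ⬝ᵥ M.mulVec x := by
  conv_lhs => rw [Matrix.dotProduct_mulVec, ← hM, Matrix.vecMul_transpose]
  rw [dotProduct_comm]

private lemma psd_cauchy {ι : Type*} [Fintype ι] {M : Matrix ι ι ℝ} (hM : M.IsSymm)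
    (hpsd : ∀ x, 0 ≤ x ⬝ᵥ M.mulVec x) (x y : ι → ℝ) :
    (x ⬝ᵥ M.mulVec y)^2 ≤ (x ⬝ᵥ M.mulVec x) * (y ⬝ᵥ M.mulVec y) := by
  have key : ∀ t : ℝ, 0 ≤ (y ⬝ᵥ M.mulVec y) * (t * t) + (2 * (x ⬝ᵥ M.mulVec y)) * t + (x ⬝ᵥ M.mulVec x) := by
    intro t
    have h := hpsd (x + t • y)
    have expand : (x + t • y) ⬝ᵥ M.mulVec (x + t • y)
        = (y ⬝ᵥ M.mulVec y) * (t * t) + (2 * (x ⬝ᵥ M.mulVec y)) * t + (x ⬝ᵥ M.mulVec x) := by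
      rw [Matrix.mulVec_add, Matrix.mulVec_smul]
      simp only [dotProduct_add, add_dotProduct, smul_dotProduct, dotProduct_smul,
        smul_eq_mul]
      rw [bilin_symm hM y x]
      ring
    linarith [expand ▸ h]
  have hd := discrim_le_zero key
  simp only [discrim] at hd
  nlinarith [hd]

set_option maxHeartbeats 1000000 in
/-- **Resolvent bound on the consensus-orthogonal subspace** (Lemma 4, Appendix B.IV):
with `𝐋` a Laplacian-like PSD matrix with algebraic connectivity `ρ₂ > 0`,
`𝐋̂ = 𝐋 ⊗ I_d`, `A` symmetric with `μ·I ⪯ A ⪯ L_c·I`, and `B = A + U·𝐋̂`, the matrix `B`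
is invertible and `‖B⁻¹v‖ ≤ (1/U)(L_c/(μρ₂))‖v‖` for every `v` whose `d`-blocks sum to
zero. -/
theorem stmt7 {N d : ℕ} (hN : 1 ≤ N) (hd : 1 ≤ d)
    {μ Lc U ρ₂ : ℝ} (hμ : 0 < μ) (hμL : μ ≤ Lc) (hU : 0 < U) (hρ : 0 < ρ₂)
    (Lap : Matrix (Fin N) (Fin N) ℝ)
    (hLsym : Lap.IsSymm) (hLpsd : Lap.PosSemidef)
    (hL1 : Lap.mulVec (fun _ => 1) = 0)
    (hρ₂ : ∀ v : Fin N → ℝ, (∑ i, v i) = 0 → ρ₂ * (v ⬝ᵥ v) ≤ v ⬝ᵥ Lap.mulVec v)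
    (A : Matrix (Fin N × Fin d) (Fin N × Fin d) ℝ)
    (hAsym : A.IsSymm)
    (hAlow : ∀ v, μ * (v ⬝ᵥ v) ≤ v ⬝ᵥ A.mulVec v)
    (hAup : ∀ v, v ⬝ᵥ A.mulVec v ≤ Lc * (v ⬝ᵥ v))
    (B : Matrix (Fin N × Fin d) (Fin N × Fin d) ℝ)
    (hB : B = A + U • (Lap ⊗ₖ (1 : Matrix (Fin d) (Fin d) ℝ))) :
    IsUnit B.det ∧
    ∀ v : Fin N × Fin d → ℝ, (∀ i : Fin d, ∑ m : Fin N, v (m, i) = 0) →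
      Real.sqrt (B⁻¹.mulVec v ⬝ᵥ B⁻¹.mulVec v)
        ≤ (1 / U) * (Lc / (μ * ρ₂)) * Real.sqrt (v ⬝ᵥ v) := by
  set Lhat : Matrix (Fin N × Fin d) (Fin N × Fin d) ℝ :=
    Lap ⊗ₖ (1 : Matrix (Fin d) (Fin d) ℝ) with hLhat
  -- entrywise formula for Lhat.mulVec
  have hmul : ∀ (x : Fin N × Fin d → ℝ) (p : Fin N × Fin d),
      Lhat.mulVec x p = ∑ n, Lap p.1 n * x (n, p.2) := by
    intro x p
    simp [hLhat, Matrix.mulVec, dotProduct, Fintype.sum_prod_type, Matrix.one_apply,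
      mul_ite, ite_mul, mul_assoc]
  -- Lhat is symmetric
  have hLhatsym : Lhat.IsSymm := by
    unfold Matrix.IsSymm
    ext ⟨m,i⟩ ⟨n,j⟩
    simp only [hLhat, Matrix.transpose_apply, Matrix.kroneckerMap_apply, Matrix.one_apply]
    rw [hLsym.apply]
    rcases eq_or_ne i j with h|h
    · subst h; simp
    · simp [h, h.symm]
  -- quadratic form of Lhat decomposes over columns
  have hquad : ∀ x : Fin N × Fin d → ℝ,
      x ⬝ᵥ Lhat.mulVec x
        = ∑ i : Fin d, (fun m => x (m,i)) ⬝ᵥ Lap.mulVec (fun m => x (m,i)) := by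
    intro x
    calc x ⬝ᵥ Lhat.mulVec x
        = ∑ p : Fin N × Fin d, x p * ∑ n, Lap p.1 n * x (n, p.2) :=
          Finset.sum_congr rfl (fun p _ => by rw [hmul])
      _ = ∑ m, ∑ i, x (m,i) * ∑ n, Lap m n * x (n,i) := by rw [Fintype.sum_prod_type]
      _ = ∑ i, ∑ m, x (m,i) * ∑ n, Lap m n * x (n,i) := Finset.sum_comm
      _ = _ := by simp [dotProduct, Matrix.mulVec]
  have hLhatpsd : ∀ x : Fin N × Fin d → ℝ, 0 ≤ x ⬝ᵥ Lhat.mulVec x := by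
    intro x
    rw [hquad]
    exact Finset.sum_nonneg fun i _ => by simpa using hLpsd.dotProduct_mulVec_nonneg (fun m => x (m,i))
  -- quadratic form of B
  have hBquad : ∀ x : Fin N × Fin d → ℝ,
      x ⬝ᵥ B.mulVec x = x ⬝ᵥ A.mulVec x + U * (x ⬝ᵥ Lhat.mulVec x) := by
    intro x
    rw [hB]
    simp [Matrix.add_mulVec, Matrix.smul_mulVec, dotProduct_add, dotProduct_smul]
  have hBsym : B.IsSymm := by
    rw [hB]
    unfold Matrix.IsSymm
    rw [Matrix.transpose_add, Matrix.transpose_smul, hAsym, hLhatsym]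
  have hBposdef : B.PosDef := by
    refine Matrix.PosDef.of_dotProduct_mulVec_pos ?_ ?_
    · rw [Matrix.IsHermitian, Matrix.conjTranspose_eq_transpose_of_trivial]; exact hBsym
    · intro x hx
      have h1 : 0 < x ⬝ᵥ x := by
        rcases lt_or_eq_of_le (dot_self_nonneg' x) with h|h
        · exact h
        · exact absurd ((dotProduct_self_eq_zero).1 h.symm) hx
      have := hAlow x
      have := hLhatpsd x
      have := hBquad x
      simp only [star_trivial]
      nlinarith
  have hdet : IsUnit B.det := hBposdef.det_pos.ne'.isUnit
  refine ⟨hdet, ?_⟩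
  intro v hv
  set w : Fin N × Fin d → ℝ := B⁻¹.mulVec v with hwdef
  have hw : B.mulVec w = v := by
    rw [hwdef, Matrix.mulVec_mulVec, Matrix.mul_nonsing_inv B hdet, Matrix.one_mulVec]
  set wbar : Fin d → ℝ := fun i => (∑ m, w (m,i)) / N with hwbar
  set wpar : Fin N × Fin d → ℝ := fun p => wbar p.2 with hwpar
  set wperp : Fin N × Fin d → ℝ := fun p => w p - wbar p.2 with hwperp
  have hNne : (N:ℝ) ≠ 0 := Nat.cast_ne_zero.2 (by omega)
  have hsum : ∀ i : Fin d, ∑ m, wperp (m,i) = 0 := by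
    intro i
    simp only [hwperp, Finset.sum_sub_distrib, Finset.sum_const, Finset.card_univ,
      Fintype.card_fin, nsmul_eq_mul, hwbar]
    field_simp
    simp
  have hwsplit : w = fun p => wperp p + wpar p := by
    funext p; simp [hwperp, hwpar]
  -- Lhat kills the consensus part
  have hLpar : Lhat.mulVec wpar = 0 := by
    funext p
    rw [hmul]
    have : ∑ n, Lap p.1 n * wpar (n, p.2) = (∑ n, Lap p.1 n * 1) * wbar p.2 := by
      rw [Finset.sum_mul]
      exact Finset.sum_congr rfl fun n _ => by simp [hwpar]
    rw [this]
    have h0 : (Lap.mulVec (fun _ => 1)) p.1 = 0 := by rw [hL1]; rfl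
    simp only [Matrix.mulVec, dotProduct] at h0
    rw [h0, zero_mul, Pi.zero_apply]
  have hLw : Lhat.mulVec w = Lhat.mulVec wperp := by
    rw [hwsplit]
    have : (fun p => wperp p + wpar p) = wperp + wpar := rfl
    rw [this, Matrix.mulVec_add, hLpar, add_zero]
  -- consensus part is orthogonal to v
  have hparv : wpar ⬝ᵥ v = 0 := by
    simp only [dotProduct, Fintype.sum_prod_type, hwpar]
    calc ∑ m, ∑ i, wbar i * v (m,i) = ∑ i, ∑ m, wbar i * v (m,i) := Finset.sum_comm
      _ = ∑ i : Fin d, wbar i * ∑ m, v (m,i) := by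
          exact Finset.sum_congr rfl fun i _ => (Finset.mul_sum _ _ _).symm
      _ = 0 := by simp [hv]
  have hparL : wpar ⬝ᵥ Lhat.mulVec w = 0 := by
    rw [bilin_symm hLhatsym, hLpar]
    simp
  have hparA : wpar ⬝ᵥ A.mulVec w = 0 := by
    have hv' : wpar ⬝ᵥ B.mulVec w = 0 := by rw [hw]; exact hparv
    rw [hB] at hv'
    rw [Matrix.add_mulVec, Matrix.smul_mulVec, dotProduct_add,
      dotProduct_smul, smul_eq_mul, hparL, mul_zero, add_zero] at hv'
    exact hv'
  have hperpA : wperp ⬝ᵥ A.mulVec w = w ⬝ᵥ A.mulVec w := by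
    have : wperp = w - wpar := by funext p; simp [hwperp, hwpar]
    rw [this, sub_dotProduct, hparA, sub_zero]
  set s : ℝ := w ⬝ᵥ w with hs
  set t : ℝ := wperp ⬝ᵥ wperp with ht
  set V : ℝ := v ⬝ᵥ v with hV
  have hs0 : 0 ≤ s := dot_self_nonneg' w
  have ht0 : 0 ≤ t := dot_self_nonneg' wperp
  have hV0 : 0 ≤ V := dot_self_nonneg' v
  set Q : ℝ := w ⬝ᵥ A.mulVec w with hQ
  have hQμ : μ * s ≤ Q := hAlow w
  have hQ0 : 0 ≤ Q := le_trans (by nlinarith) hQμ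
  have hApsd : ∀ x : Fin N × Fin d → ℝ, 0 ≤ x ⬝ᵥ A.mulVec x :=
    fun x => le_trans (by nlinarith [dot_self_nonneg' x]) (hAlow x)
  -- Q ≤ Lc * t
  have hQt : Q ≤ Lc * t := by
    have hcs := psd_cauchy hAsym hApsd wperp w
    rw [hperpA] at hcs
    have hup := hAup wperp
    rcases eq_or_lt_of_le hQ0 with h|h
    · rw [← h]; have hLc : 0 < Lc := lt_of_lt_of_le hμ hμL; positivity
    · nlinarith
  -- lower bound on wperp ⬝ v
  have hperpLquad : ρ₂ * t ≤ wperp ⬝ᵥ Lhat.mulVec wperp := by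
    rw [hquad]
    have htexp : t = ∑ i : Fin d, (fun m => wperp (m,i)) ⬝ᵥ (fun m => wperp (m,i)) := by
      rw [ht]
      simp only [dotProduct, Fintype.sum_prod_type]
      exact Finset.sum_comm
    rw [htexp, Finset.mul_sum]
    exact Finset.sum_le_sum fun i _ => hρ₂ _ (hsum i)
  have hperpv : U * ρ₂ * t ≤ wperp ⬝ᵥ v := by
    have h1 : wperp ⬝ᵥ v = Q + U * (wperp ⬝ᵥ Lhat.mulVec wperp) := by
      rw [← hw, hB, Matrix.add_mulVec, Matrix.smul_mulVec, dotProduct_add,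
        dotProduct_smul, smul_eq_mul, hperpA, ← hLw]
    nlinarith
  -- Cauchy-Schwarz against v
  have hcsv : (wperp ⬝ᵥ v)^2 ≤ t * V := by
    have hcs := Finset.sum_mul_sq_le_sq_mul_sq Finset.univ wperp v
    simp only [dotProduct, ht, hV]
    calc (∑ p, wperp p * v p)^2 ≤ (∑ p, wperp p ^2) * ∑ p, v p ^2 := hcs
      _ = (∑ p, wperp p * wperp p) * ∑ p, v p * v p := by simp only [pow_two]
  have htV : U^2 * ρ₂^2 * t ≤ V := by
    rcases eq_or_lt_of_le ht0 with h|h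
    · rw [← h]; simpa using hV0
    · have h1 : (U*ρ₂*t)^2 ≤ (wperp ⬝ᵥ v)^2 :=
        pow_le_pow_left₀ (by positivity) hperpv 2
      nlinarith [h1, hcsv, h]
  -- final bound on s
  set C : ℝ := (1 / U) * (Lc / (μ * ρ₂)) with hC
  have hC0 : 0 ≤ C := by
    rw [hC]
    exact mul_nonneg (by positivity) (div_nonneg (hμ.trans_le hμL).le (by positivity))
  have h1 : μ * s ≤ Lc * t := le_trans hQμ hQt
  have h2 : U^2*ρ₂^2*μ * (μ * s) ≤ U^2*ρ₂^2*μ * (Lc * t) :=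
    mul_le_mul_of_nonneg_left h1 (by positivity)
  have h3 : μ * Lc * (U^2*ρ₂^2*t) ≤ μ * Lc * V :=
    mul_le_mul_of_nonneg_left htV (mul_nonneg hμ.le (hμ.le.trans hμL))
  have h4 : μ * Lc * V ≤ Lc * Lc * V := by
    nlinarith [mul_nonneg (sub_nonneg.2 hμL) (mul_nonneg (le_of_lt (lt_of_lt_of_le hμ hμL)) hV0)]
  have hkey : (U*μ*ρ₂)^2 * s ≤ Lc^2 * V := by nlinarith [h2, h3, h4]
  have hfinal : s ≤ C^2 * V := by
    have hCeq : C^2 * V = Lc^2 * V / (U*μ*ρ₂)^2 := by rw [hC]; ring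
    rw [hCeq, le_div_iff₀ (by positivity)]
    nlinarith [hkey]
  calc Real.sqrt s ≤ Real.sqrt (C^2 * V) := Real.sqrt_le_sqrt hfinal
    _ = C * Real.sqrt V := by
        rw [Real.sqrt_mul (sq_nonneg C), Real.sqrt_sq hC0]
end

section
/- Let N, d ≥ 1 and 0 < μ ≤ L. Let 𝐋 be a symmetric positive semidefinite N×N real matrix with 𝐋·𝟏_N = 0, let ρ₂ > 0 satisfy vᵀ𝐋v ≥ ρ₂‖v‖² for every v ∈ ℝ^N orthogonal to 𝟏_N, and set 𝐋̂ = 𝐋 ⊗ I_d. Let f : ℝ^{Nd} → ℝ be twice continuously differentiable with μ·I ⪯ ∇²f(W) ⪯ L·I for all W ∈ ℝ^{Nd}. Fix w* ∈ ℝ^d, set W* = 𝟏_N ⊗ w*, and assume ⟨∇f(W*), 𝟏_N ⊗ u⟩ = 0 for every u ∈ ℝ^d and ‖∇f(W*)‖ ≤ √N·∇* for a constant ∇* ≥ 0. Let γ, η > 0 and suppose Ŵ ∈ ℝ^{Nd} satisfies ∇f(Ŵ) + (γ/η)·𝐋̂·Ŵ = 0. Then ‖𝐋̂·Ŵ‖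 ≤ (η/γ)·√N·∇*·(1 + (L²/(μ·ρ₂))·(η/γ)). -/
open Matrix
open scoped Kronecker RealInnerProductSpace

lemma aux_op_bound {E : Type*} [NormedAddCommGroup E] [InnerProductSpace ℝ E]
    {A : E →L[ℝ] E} {L : ℝ} (hsym : ∀ v w, ⟪A v, w⟫ = ⟪A w, v⟫)
    (h0 : ∀ v, 0 ≤ ⟪A v, v⟫) (hL : ∀ v, ⟪A v, v⟫ ≤ L * ‖v‖ ^ 2) (v : E) :
    ‖A v‖ ≤ L * ‖v‖ := by
  rcases eq_or_ne (A v) 0 with h | h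
  · rw [h, norm_zero]
    have h1 : 0 ≤ L * ‖v‖ ^ 2 := (h0 v).trans (hL v)
    rcases eq_or_lt_of_le (norm_nonneg v) with h2 | h2
    · rw [← h2]; simp
    · nlinarith
  · have hv : v ≠ 0 := by rintro rfl; simp at h
    have hvn : 0 < ‖v‖ := norm_pos_iff.mpr hv
    have hAvn : 0 < ‖A v‖ := norm_pos_iff.mpr h
    have hLpos : 0 ≤ L := by
      have h1 : 0 ≤ L * ‖v‖ ^ 2 := (h0 v).trans (hL v)
      nlinarith [pow_pos hvn 2]
    set w : E := (‖v‖ / ‖A v‖) • A v with hw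
    have hwn : ‖w‖ = ‖v‖ := by
      rw [hw, norm_smul, Real.norm_eq_abs, abs_of_nonneg (by positivity),
        div_mul_cancel₀ _ (ne_of_gt hAvn)]
    have hinner : ⟪A v, w⟫ = ‖v‖ * ‖A v‖ := by
      rw [hw, real_inner_smul_right, real_inner_self_eq_norm_sq]
      field_simp
    have hkey : 4 * ⟪A v, w⟫ = ⟪A (v + w), v + w⟫ - ⟪A (v - w), v - w⟫ := by
      have h1 := hsym v w
      simp only [map_add, map_sub, inner_add_left, inner_add_right, inner_sub_left,
        inner_sub_right]
      linarith
    have h2 : 4 * (‖v‖ * ‖A v‖) ≤ L * ‖v + w‖ ^ 2 := by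
      rw [← hinner]
      have := h0 (v - w)
      have := hL (v + w)
      linarith [hkey]
    have h3 : ‖v + w‖ ≤ 2 * ‖v‖ := by
      calc ‖v + w‖ ≤ ‖v‖ + ‖w‖ := norm_add_le v w
      _ = 2 * ‖v‖ := by rw [hwn]; ring
    have h4 : L * ‖v + w‖ ^ 2 ≤ L * (2 * ‖v‖) ^ 2 := by
      apply mul_le_mul_of_nonneg_left _ hLpos
      nlinarith [norm_nonneg (v + w)]
    nlinarith

lemma aux_grad_ineq {ι : Type*} [Fintype ι] {μ L : ℝ} (hL0 : 0 ≤ L) (hμ0 : 0 ≤ μ)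
    (f : EuclideanSpace ℝ ι → ℝ) (hf : ContDiff ℝ 2 f)
    (hHess : ∀ W v, μ * ‖v‖ ^ 2 ≤ ⟪fderiv ℝ (gradient f) W v, v⟫ ∧
      ⟪fderiv ℝ (gradient f) W v, v⟫ ≤ L * ‖v‖ ^ 2)
    (x y : EuclideanSpace ℝ ι) :
    ‖gradient f y - gradient f x‖ ≤ L * ‖y - x‖ ∧
      μ * ‖y - x‖ ^ 2 ≤ ⟪gradient f y - gradient f x, y - x⟫ := by
  have hgrad_eq : gradient f
      = fun z => (InnerProductSpace.toDual ℝ (EuclideanSpace ℝ ι)).symm (fderiv ℝ f z) := rfl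
  have hg1 : ContDiff ℝ 1 (gradient f) := by
    rw [hgrad_eq]
    exact (InnerProductSpace.toDual ℝ (EuclideanSpace ℝ ι)).symm.contDiff.comp
      (hf.fderiv_right (by norm_num))
  have hdiff : Differentiable ℝ (gradient f) := hg1.differentiable one_ne_zero
  have hfg : ∀ z w, fderiv ℝ f z w = ⟪gradient f z, w⟫ := by
    intro z w
    rw [hgrad_eq]
    rw [InnerProductSpace.toDual_apply_apply.symm,
      (InnerProductSpace.toDual ℝ (EuclideanSpace ℝ ι)).apply_symm_apply]
  -- symmetry of the Hessian
  have hsym : ∀ z v w, ⟪fderiv ℝ (gradient f) z v, w⟫ = ⟪fderiv ℝ (gradient f) z w, v⟫ := by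
    intro z v w
    set T : EuclideanSpace ℝ ι →L[ℝ] (EuclideanSpace ℝ ι →L[ℝ] ℝ) :=
      innerSL ℝ with hT
    have hf' : (fderiv ℝ f) = fun z => T (gradient f z) := by
      funext z
      ext w
      rw [hfg z w]
      rfl
    have hfd : ∀ y, HasFDerivAt f (fderiv ℝ f y) y := fun y =>
      ((hf.differentiable (by norm_num)) y).hasFDerivAt
    have hcomp : HasFDerivAt (fderiv ℝ f) (T.comp (fderiv ℝ (gradient f) z)) z := by
      rw [hf']
      exact T.hasFDerivAt.comp z (hdiff z).hasFDerivAt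
    have hss := second_derivative_symmetric hfd hcomp v w
    exact hss
  -- Lipschitz bound on the gradient
  have hbound : ∀ z, ‖fderiv ℝ (gradient f) z‖ ≤ L := by
    intro z
    apply ContinuousLinearMap.opNorm_le_bound _ hL0
    intro v
    exact aux_op_bound (hsym z)
      (fun v => le_trans (by positivity) (hHess z v).1) (fun v => (hHess z v).2) v
  constructor
  · have := Convex.norm_image_sub_le_of_norm_fderiv_le (s := Set.univ) (f := gradient f)
      (fun z _ => hdiff z) (fun z _ => hbound z) convex_univ
      (Set.mem_univ x) (Set.mem_univ y)
    simpa using this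
  · -- strong monotonicity along the segment
    set D := y - x with hD
    have hφ : ∀ t : ℝ, HasDerivAt
        (fun t : ℝ => ⟪gradient f (x + t • D), D⟫ - t * (μ * ‖D‖ ^ 2))
        (⟪fderiv ℝ (gradient f) (x + t • D) D, D⟫ - μ * ‖D‖ ^ 2) t := by
      intro t
      have hc : HasDerivAt (fun t : ℝ => x + t • D) D t := by
        simpa using ((hasDerivAt_id t).smul_const D).const_add x
      have hcomp : HasDerivAt (fun t : ℝ => gradient f (x + t • D))
          (fderiv ℝ (gradient f) (x + t • D) D) t := by
        have := (hdiff (x + t • D)).hasFDerivAt.comp_hasDerivAt t hc; exact this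
      have hinner := (HasDerivAt.inner ℝ hcomp (hasDerivAt_const t D))
      simp only [inner_zero_right, zero_add, add_zero] at hinner
      have hlin : HasDerivAt (fun t : ℝ => t * (μ * ‖D‖ ^ 2)) (μ * ‖D‖ ^ 2) t := by
        simpa using (hasDerivAt_id t).mul_const (μ * ‖D‖ ^ 2)
      exact hinner.sub hlin
    have hmono : Monotone
        (fun t : ℝ => ⟪gradient f (x + t • D), D⟫ - t * (μ * ‖D‖ ^ 2)) := by
      apply monotone_of_deriv_nonneg (fun t => (hφ t).differentiableAt)
      intro t
      rw [(hφ t).deriv]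
      have := (hHess (x + t • D) D).1
      linarith
    have h01 := hmono (by norm_num : (0:ℝ) ≤ 1)
    simp only [zero_smul, add_zero, one_smul, zero_mul, sub_zero, one_mul] at h01
    have hxy : x + D = y := by rw [hD]; abel
    rw [hxy] at h01
    rw [inner_sub_left]
    linarith

set_option maxHeartbeats 1000000 in
/-- **Bound on the Laplacian image of the penalized stationary point** (Lemma 5,
Appendix B.IV): if `Ŵ` satisfies `∇f(Ŵ) + (γ/η)·𝐋̂·Ŵ = 0`, where `f` is `μ`-strongly
convex and `L`-smooth, `∇f(W*)` is orthogonal to the consensus subspace with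
`‖∇f(W*)‖ ≤ √N·∇*`, then `‖𝐋̂·Ŵ‖ ≤ (η/γ)·√N·∇*·(1 + (L²/(μρ₂))·(η/γ))`. -/
theorem stmt8 {N d : ℕ} (hN : 1 ≤ N) (hd : 1 ≤ d)
    {μ L ρ₂ gstar γ η : ℝ} (hμ : 0 < μ) (hμL : μ ≤ L) (hρ : 0 < ρ₂)
    (hgstar : 0 ≤ gstar) (hγ : 0 < γ) (hη : 0 < η)
    (Lap : Matrix (Fin N) (Fin N) ℝ)
    (hLsym : Lap.IsSymm) (hLpsd : Lap.PosSemidef)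
    (hL1 : Lap.mulVec (fun _ => 1) = 0)
    (hρ₂ : ∀ v : Fin N → ℝ, (∑ i, v i) = 0 → ρ₂ * (v ⬝ᵥ v) ≤ v ⬝ᵥ Lap.mulVec v)
    (f : EuclideanSpace ℝ (Fin N × Fin d) → ℝ) (hf : ContDiff ℝ 2 f)
    (hHess : ∀ W v, μ * ‖v‖ ^ 2 ≤ ⟪fderiv ℝ (gradient f) W v, v⟫ ∧
      ⟪fderiv ℝ (gradient f) W v, v⟫ ≤ L * ‖v‖ ^ 2)
    (wstar : EuclideanSpace ℝ (Fin d))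
    (Wstar : EuclideanSpace ℝ (Fin N × Fin d)) (hWstar : ∀ p, Wstar p = wstar p.2)
    (horth : ∀ u : EuclideanSpace ℝ (Fin d),
      ⟪gradient f Wstar, (WithLp.toLp 2 (fun p : Fin N × Fin d => u p.2) : EuclideanSpace ℝ (Fin N × Fin d))⟫ = 0)
    (hgrad : ‖gradient f Wstar‖ ≤ Real.sqrt N * gstar)
    (What : EuclideanSpace ℝ (Fin N × Fin d))
    (hstat : gradient f What
        + (γ / η) • Matrix.toEuclideanLin (Lap ⊗ₖ (1 : Matrix (Fin d) (Fin d) ℝ)) What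
      = 0) :
    ‖Matrix.toEuclideanLin (Lap ⊗ₖ (1 : Matrix (Fin d) (Fin d) ℝ)) What‖
      ≤ (η / γ) * (Real.sqrt N * gstar) * (1 + (L ^ 2 / (μ * ρ₂)) * (η / γ)) := by
  have hL0 : 0 ≤ L := le_trans hμ.le hμL
  have hη0 : (0:ℝ) < η / γ := by positivity
  set Km := Matrix.toEuclideanLin (Lap ⊗ₖ (1 : Matrix (Fin d) (Fin d) ℝ)) with hKm
  set g := gradient f What with hg
  set gs := gradient f Wstar with hgs
  set D : EuclideanSpace ℝ (Fin N × Fin d) := What - Wstar with hDdef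
  -- entrywise formula for Km
  have hKapp : ∀ (x : EuclideanSpace ℝ (Fin N × Fin d)) p,
      Km x p = ∑ j, Lap p.1 j * x (j, p.2) := by
    intro x p
    rw [hKm, Matrix.toEuclideanLin_apply]
    show (Lap ⊗ₖ (1 : Matrix (Fin d) (Fin d) ℝ)).mulVec _ p = _
    simp [Matrix.mulVec, dotProduct, Fintype.sum_prod_type, Matrix.one_apply,
      mul_ite, ite_mul, Finset.sum_ite_eq, WithLp.equiv]
  have hrow : ∀ i, ∑ j, Lap i j = 0 := by
    intro i
    have h := congrFun hL1 i
    simpa [Matrix.mulVec, dotProduct] using h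
  have hKcons : ∀ u : EuclideanSpace ℝ (Fin d),
      Km (WithLp.toLp 2 (fun q : Fin N × Fin d => u q.2) : EuclideanSpace ℝ (Fin N × Fin d)) = 0 := by
    intro u
    ext p
    rw [hKapp]
    show ∑ j, Lap p.1 j * u p.2 = 0
    rw [← Finset.sum_mul, hrow, zero_mul]
  -- self-adjointness of Km
  have hherm : (Lap ⊗ₖ (1 : Matrix (Fin d) (Fin d) ℝ)).conjTranspose
      = Lap ⊗ₖ (1 : Matrix (Fin d) (Fin d) ℝ) := by
    ext ⟨i, k⟩ ⟨j, l⟩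
    simp only [Matrix.conjTranspose_apply, Matrix.kroneckerMap_apply, star_trivial,
      Matrix.one_apply]
    rw [hLsym.apply i j]
    by_cases h : k = l <;> simp [h, eq_comm]
  have hsymK : ∀ x y : EuclideanSpace ℝ (Fin N × Fin d), ⟪Km x, y⟫ = ⟪x, Km y⟫ := by
    intro x y
    have hadj := Matrix.toEuclideanLin_conjTranspose_eq_adjoint
      (Lap ⊗ₖ (1 : Matrix (Fin d) (Fin d) ℝ))
    rw [hherm] at hadj
    rw [hKm]
    conv_lhs => rw [hadj]
    rw [LinearMap.adjoint_inner_left]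
  -- stationarity rearrangements
  have hgK : g = -((γ / η) • Km What) := eq_neg_of_add_eq_zero_left hstat
  have hKWg : Km What = -((η / γ) • g) := by
    have h1 : (η / γ) • (g + (γ / η) • Km What) = (0 : EuclideanSpace ℝ (Fin N × Fin d)) := by
      rw [hstat, smul_zero]
    rw [smul_add, smul_smul] at h1
    have h2 : (η / γ) * (γ / η) = 1 := by field_simp
    rw [h2, one_smul] at h1
    exact eq_neg_of_add_eq_zero_right h1
  have hnormKW : ‖Km What‖ = (η / γ) * ‖g‖ := by
    rw [hKWg, norm_neg, norm_smul, Real.norm_eq_abs, abs_of_pos hη0]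
  -- consensus decomposition
  set u0 : EuclideanSpace ℝ (Fin d) := WithLp.toLp 2 (fun k => (∑ j, D (j, k)) / N) with hu0
  set c : EuclideanSpace ℝ (Fin N × Fin d) :=
    (WithLp.toLp 2 (fun q : Fin N × Fin d => u0 q.2) : EuclideanSpace ℝ (Fin N × Fin d)) with hc
  set pp : EuclideanSpace ℝ (Fin N × Fin d) := D - c with hpp
  have hNne : (N:ℝ) ≠ 0 := by positivity
  have hppapp : ∀ q, pp q = D q - c q := fun q => rfl
  have hcapp : ∀ q, c q = u0 q.2 := fun q => rfl
  have hppsum : ∀ k, ∑ i, pp (i, k) = 0 := by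
    intro k
    simp only [hppapp, hcapp, hu0]
    rw [Finset.sum_sub_distrib, Finset.sum_const, Finset.card_univ]
    simp
    field_simp
    ring
  have hKc : Km c = 0 := hKcons u0
  have hKWs : Km Wstar = 0 := by
    have hW : Wstar = (WithLp.toLp 2 (fun q : Fin N × Fin d => wstar q.2) : EuclideanSpace ℝ (Fin N × Fin d)) := by
      ext p; exact hWstar p
    rw [hW]
    exact hKcons wstar
  have hKD : Km D = Km What := by rw [hDdef, map_sub, hKWs, sub_zero]
  have hKpp : Km pp = Km What := by rw [hpp, map_sub, hKD, hKc, sub_zero]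
  have hgsc : ⟪gs, c⟫ = 0 := horth u0
  have hgc : ⟪g, c⟫ = 0 := by
    rw [hgK, inner_neg_left, real_inner_smul_left]
    rw [hsymK, hKc, inner_zero_right]
    ring
  -- spectral gap inequality
  have hspec : ρ₂ * ‖pp‖ ^ 2 ≤ ⟪pp, Km pp⟫ := by
    have hn : ‖pp‖ ^ 2 = ∑ k : Fin d, (fun i => pp (i, k)) ⬝ᵥ (fun i => pp (i, k)) := by
      rw [← real_inner_self_eq_norm_sq]
      simp only [PiLp.inner_apply, RCLike.inner_apply, conj_trivial, dotProduct]
      rw [Fintype.sum_prod_type]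
      rw [Finset.sum_comm]
    have hip : ⟪pp, Km pp⟫
        = ∑ k : Fin d, (fun i => pp (i, k)) ⬝ᵥ Lap.mulVec (fun i => pp (i, k)) := by
      simp only [PiLp.inner_apply, RCLike.inner_apply, conj_trivial]
      simp only [hKapp, dotProduct, Matrix.mulVec]
      rw [Fintype.sum_prod_type]
      rw [Finset.sum_comm]
      exact Finset.sum_congr rfl fun _ _ => Finset.sum_congr rfl fun _ _ => mul_comm _ _
    rw [hn, hip, Finset.mul_sum]
    apply Finset.sum_le_sum
    intro k _
    exact hρ₂ _ (hppsum k)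
  -- gradient inequalities
  obtain ⟨hlip, hsc⟩ := aux_grad_ineq hL0 hμ.le f hf hHess Wstar What
  rw [← hg, ← hgs, ← hDdef] at hlip hsc
  clear_value Km g gs D u0 c pp
  -- bound on ‖pp‖
  have hDpc : D = pp + c := by rw [hpp]; abel
  have hpb : ρ₂ * ‖pp‖ ≤ (η / γ) * ‖gs‖ := by
    have h2 : ⟪pp, Km pp⟫ = -((η / γ) * ⟪pp, g⟫) := by
      rw [hKpp, hKWg, inner_neg_right, real_inner_smul_right]
    have h3 : ⟪pp, g⟫ = ⟪g, D⟫ := by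
      rw [real_inner_comm, hDpc, inner_add_right, hgc, add_zero]
    have h4 : ⟪gs, D⟫ + μ * ‖D‖ ^ 2 ≤ ⟪g, D⟫ := by
      rw [inner_sub_left] at hsc; linarith
    have h5 : ⟪gs, D⟫ = ⟪gs, pp⟫ := by
      rw [hDpc, inner_add_right, hgsc, add_zero]
    have h6 : -(‖gs‖ * ‖pp‖) ≤ ⟪gs, pp⟫ := by
      have := abs_real_inner_le_norm gs pp
      have := neg_abs_le ⟪gs, pp⟫
      linarith
    have h9 : -(‖gs‖ * ‖pp‖) ≤ ⟪g, D⟫ := by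
      have hb2 : 0 ≤ μ * ‖D‖ ^ 2 := by positivity
      linarith
    have h10 : -⟪pp, g⟫ ≤ ‖gs‖ * ‖pp‖ := by rw [h3]; linarith
    have h7 : ρ₂ * ‖pp‖ ^ 2 ≤ (η / γ) * (‖gs‖ * ‖pp‖) := by
      calc ρ₂ * ‖pp‖ ^ 2 ≤ ⟪pp, Km pp⟫ := hspec
      _ = (η / γ) * (-⟪pp, g⟫) := by rw [h2]; ring
      _ ≤ (η / γ) * (‖gs‖ * ‖pp‖) := mul_le_mul_of_nonneg_left h10 hη0.le
    rcases eq_or_lt_of_le (norm_nonneg pp) with h8 | h8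
    · rw [← h8, mul_zero]; positivity
    · have h11 : (ρ₂ * ‖pp‖) * ‖pp‖ ≤ ((η / γ) * ‖gs‖) * ‖pp‖ := by nlinarith
      exact le_of_mul_le_mul_right h11 h8
  -- bound on ‖D‖
  have hDb : μ * ‖D‖ ≤ L * ‖pp‖ := by
    have h1 : ⟪g - gs, D⟫ = ⟪g - gs, pp⟫ := by
      have hc0 : ⟪g - gs, c⟫ = (0:ℝ) := by rw [inner_sub_left, hgc, hgsc, sub_zero]
      rw [hDpc, inner_add_right, hc0, add_zero]
    have h2 : ⟪g - gs, pp⟫ ≤ ‖g - gs‖ * ‖pp‖ := real_inner_le_norm _ _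
    have h3 : μ * ‖D‖ ^ 2 ≤ L * ‖D‖ * ‖pp‖ := by
      nlinarith [hsc, norm_nonneg pp]
    rcases eq_or_lt_of_le (norm_nonneg D) with h4 | h4
    · rw [← h4, mul_zero]; positivity
    · have h5 : (μ * ‖D‖) * ‖D‖ ≤ (L * ‖pp‖) * ‖D‖ := by nlinarith
      exact le_of_mul_le_mul_right h5 h4
  -- bound on ‖g‖
  have hGt : ‖g‖ ≤ ‖gs‖ + L * ‖D‖ := by
    have h1 : ‖g‖ ≤ ‖gs‖ + ‖g - gs‖ := by
      have := norm_add_le gs (g - gs)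
      simpa using this
    linarith
  have hLb : L * ‖D‖ ≤ (L ^ 2 / (μ * ρ₂)) * (η / γ) * ‖gs‖ := by
    refine le_of_mul_le_mul_left ?_ (show (0:ℝ) < μ * ρ₂ by positivity)
    have e1 : ρ₂ * L * (μ * ‖D‖) ≤ ρ₂ * L * (L * ‖pp‖) :=
      mul_le_mul_of_nonneg_left hDb (by positivity)
    have e2 : L ^ 2 * (ρ₂ * ‖pp‖) ≤ L ^ 2 * ((η / γ) * ‖gs‖) :=
      mul_le_mul_of_nonneg_left hpb (by positivity)
    have e3 : μ * ρ₂ * ((L ^ 2 / (μ * ρ₂)) * (η / γ) * ‖gs‖)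
        = L ^ 2 * ((η / γ) * ‖gs‖) := by field_simp
    rw [e3]
    nlinarith
  have hGb : ‖g‖ ≤ ‖gs‖ * (1 + (L ^ 2 / (μ * ρ₂)) * (η / γ)) := by
    have : ‖g‖ ≤ ‖gs‖ + (L ^ 2 / (μ * ρ₂)) * (η / γ) * ‖gs‖ := by linarith
    linarith [this]
  -- conclusion
  have hQ : (0:ℝ) ≤ 1 + (L ^ 2 / (μ * ρ₂)) * (η / γ) := by positivity
  have hfinal : ‖g‖ ≤ (Real.sqrt N * gstar) * (1 + (L ^ 2 / (μ * ρ₂)) * (η / γ)) := by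
    calc ‖g‖ ≤ ‖gs‖ * (1 + (L ^ 2 / (μ * ρ₂)) * (η / γ)) := hGb
    _ ≤ (Real.sqrt N * gstar) * (1 + (L ^ 2 / (μ * ρ₂)) * (η / γ)) := by
        apply mul_le_mul_of_nonneg_right _ hQ
        exact hgrad
  calc ‖Km What‖ = (η / γ) * ‖g‖ := hnormKW
  _ ≤ (η / γ) * ((Real.sqrt N * gstar) * (1 + (L ^ 2 / (μ * ρ₂)) * (η / γ))) :=
      mul_le_mul_of_nonneg_left hfinal hη0.le
  _ = (η / γ) * (Real.sqrt N * gstar) * (1 + (L ^ 2 / (μ * ρ₂)) * (η / γ)) := by ring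
end

section
/- Let N, d ≥ 1 and 0 < μ ≤ L. Let 𝐋 be a symmetric positive semidefinite N×N real matrix with 𝐋·𝟏_N = 0, let ρ₂ > 0 satisfy vᵀ𝐋v ≥ ρ₂‖v‖² for every v ∈ ℝ^N orthogonal to 𝟏_N, and set 𝐋̂ = 𝐋 ⊗ I_d. Let f : ℝ^{Nd} → ℝ be twice continuously differentiable with μ·I ⪯ ∇²f(W) ⪯ L·I for all W ∈ ℝ^{Nd}. Fix w* ∈ ℝ^d, set W* = 𝟏_N ⊗ w*, and assume ⟨∇f(W*), 𝟏_N ⊗ u⟩ = 0 for every u ∈ ℝ^d and ‖∇f(W*)‖ ≤ √N·∇* for a constant ∇* ≥ 0. Let γ, η > 0 and define G(W) = f(W) + (γ/(2η))·Wᵀ𝐋̂W. Then G has a unique stationary point Ŵ on ℝ^{Nd} (its unique global minimizer), and ‖Ŵ − W*‖ ≤ (√N·∇*·L/(μ·ρ₂))·(η/γ). -/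
open Matrix
open scoped Kronecker RealInnerProductSpace

section auxgen
variable {F : Type*} [NormedAddCommGroup F] [InnerProductSpace ℝ F] [CompleteSpace F]

lemma aux_op_bound_s9 (A : F →L[ℝ] F) {μ L : ℝ} (hμ : 0 ≤ μ) (hμL : μ ≤ L)
    (hsymm : ∀ v w : F, ⟪A v, w⟫ = ⟪A w, v⟫)
    (h1 : ∀ v : F, μ * ‖v‖ ^ 2 ≤ ⟪A v, v⟫) (h2 : ∀ v : F, ⟪A v, v⟫ ≤ L * ‖v‖ ^ 2) :
    ∀ v : F, ‖A v‖ ≤ L * ‖v‖ := by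
  set m := (L + μ) / 2 with hm
  set r := (L - μ) / 2 with hr
  have hr0 : 0 ≤ r := by rw [hr]; linarith
  have hm0 : 0 ≤ m := by rw [hm]; linarith
  have key : ∀ v w : F, ⟪A v, w⟫ - m * ⟪v, w⟫ ≤ r / 2 * (‖v‖ ^ 2 + ‖w‖ ^ 2) := by
    intro v w
    have e1 : ⟪A (v + w), v + w⟫ = ⟪A v, v⟫ + 2 * ⟪A v, w⟫ + ⟪A w, w⟫ := by
      have hs := hsymm v w
      have hc : ⟪A w, v⟫ = ⟪v, A w⟫ := real_inner_comm _ _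
      simp only [map_add, inner_add_left, inner_add_right]
      linarith
    have e2 : ⟪A (v - w), v - w⟫ = ⟪A v, v⟫ - 2 * ⟪A v, w⟫ + ⟪A w, w⟫ := by
      have hs := hsymm v w
      have hc : ⟪A w, v⟫ = ⟪v, A w⟫ := real_inner_comm _ _
      simp only [map_sub, inner_sub_left, inner_sub_right]
      linarith
    have u1 : μ * ‖v - w‖ ^ 2 ≤ ⟪A (v - w), v - w⟫ := h1 _
    have u2 : ⟪A (v + w), v + w⟫ ≤ L * ‖v + w‖ ^ 2 := h2 _
    have p1 : ‖v + w‖ ^ 2 = ‖v‖ ^ 2 + 2 * ⟪v, w⟫ + ‖w‖ ^ 2 := norm_add_sq_real v w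
    have p2 : ‖v - w‖ ^ 2 = ‖v‖ ^ 2 - 2 * ⟪v, w⟫ + ‖w‖ ^ 2 := norm_sub_sq_real v w
    rw [hm, hr]
    nlinarith [u1, u2, e1, e2, p1, p2]
  intro v
  have hD : ‖A v - m • v‖ ≤ r * ‖v‖ := by
    by_cases hz : A v - m • v = 0
    · rw [hz]; simp; positivity
    · by_cases hv : v = 0
      · exfalso; apply hz; rw [hv]; simp
      set D := A v - m • v with hDdef
      have hDn : 0 < ‖D‖ := norm_pos_iff.mpr hz
      set w := (‖v‖ / ‖D‖) • D with hw
      have hinner : ⟪A v, w⟫ - m * ⟪v, w⟫ = ‖v‖ * ‖D‖ := by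
        have : ⟪A v, w⟫ - m * ⟪v, w⟫ = ⟪D, w⟫ := by
          rw [hDdef, inner_sub_left, real_inner_smul_left]
        rw [this, hw, real_inner_smul_right, real_inner_self_eq_norm_sq]
        field_simp
      have hwn : ‖w‖ = ‖v‖ := by
        rw [hw, norm_smul, Real.norm_eq_abs,
          abs_of_nonneg (by positivity : (0:ℝ) ≤ ‖v‖ / ‖D‖)]
        field_simp
      have := key v w
      rw [hinner, hwn] at this
      have hvn : 0 < ‖v‖ := norm_pos_iff.mpr hv
      have h2' : ‖v‖ * ‖D‖ ≤ r * ‖v‖ ^ 2 := by nlinarith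
      exact le_of_mul_le_mul_left (by nlinarith : ‖v‖ * ‖D‖ ≤ ‖v‖ * (r * ‖v‖)) hvn
  calc ‖A v‖ = ‖(A v - m • v) + m • v‖ := by congr 1; abel
    _ ≤ ‖A v - m • v‖ + ‖m • v‖ := norm_add_le _ _
    _ ≤ r * ‖v‖ + m * ‖v‖ := by
        rw [norm_smul, Real.norm_eq_abs, abs_of_nonneg hm0]
        linarith
    _ = L * ‖v‖ := by rw [hr, hm]; ring

noncomputable def dSymm (F : Type*) [NormedAddCommGroup F] [InnerProductSpace ℝ F]
    [CompleteSpace F] : StrongDual ℝ F ≃ₗᵢ[ℝ] F :=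
  (InnerProductSpace.toDual ℝ F).symm

lemma aux_grad_comp (f : F → ℝ) : gradient f = fun x => dSymm F (fderiv ℝ f x) := rfl

lemma dSymm_inner (y : StrongDual ℝ F) (w : F) : ⟪dSymm F y, w⟫ = y w :=
  InnerProductSpace.toDual_symm_apply

lemma aux_grad_diff {f : F → ℝ} (hf : ContDiff ℝ 2 f) : Differentiable ℝ (gradient f) := by
  have h1 : ContDiff ℝ 1 (fderiv ℝ f) := hf.fderiv_right (by norm_num)
  rw [aux_grad_comp f]
  exact (dSymm F).differentiable.comp (h1.differentiable (by norm_num))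

lemma aux_fderiv_grad_inner {f : F → ℝ} (hf : ContDiff ℝ 2 f) (x v w : F) :
    ⟪fderiv ℝ (gradient f) x v, w⟫ = fderiv ℝ (fderiv ℝ f) x v w := by
  have hcomp : fderiv ℝ (gradient f) x
      = ((dSymm F).toContinuousLinearEquiv :
          StrongDual ℝ F →L[ℝ] F).comp (fderiv ℝ (fderiv ℝ f) x) := by
    rw [aux_grad_comp f]
    exact (dSymm F).comp_fderiv (f := fderiv ℝ f) (x := x)
  rw [hcomp]
  exact dSymm_inner _ _

lemma aux_fderiv_grad_symm {f : F → ℝ} (hf : ContDiff ℝ 2 f) (x v w : F) :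
    ⟪fderiv ℝ (gradient f) x v, w⟫ = ⟪fderiv ℝ (gradient f) x w, v⟫ := by
  rw [aux_fderiv_grad_inner hf, aux_fderiv_grad_inner hf]
  exact second_derivative_symmetric
    (fun y => ((hf.differentiable (by norm_num)) y).hasFDerivAt)
    (((hf.fderiv_right (m := 1) (by norm_num)).differentiable (by norm_num) x).hasFDerivAt) v w

lemma aux_grad_lipschitz {f : F → ℝ} (hf : ContDiff ℝ 2 f) {μ L : ℝ} (hμ : 0 ≤ μ) (hμL : μ ≤ L)
    (hH : ∀ W v : F, μ * ‖v‖ ^ 2 ≤ ⟪fderiv ℝ (gradient f) W v, v⟫ ∧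
      ⟪fderiv ℝ (gradient f) W v, v⟫ ≤ L * ‖v‖ ^ 2) :
    ∀ x y : F, ‖gradient f x - gradient f y‖ ≤ L * ‖x - y‖ := by
  intro x y
  have hbound : ∀ z : F, ‖fderiv ℝ (gradient f) z‖ ≤ L := by
    intro z
    refine ContinuousLinearMap.opNorm_le_bound _ (le_trans hμ hμL) ?_
    exact aux_op_bound_s9 _ hμ hμL (aux_fderiv_grad_symm hf z)
      (fun v => (hH z v).1) (fun v => (hH z v).2)
  exact Convex.norm_image_sub_le_of_norm_fderiv_le
    (fun z _ => (aux_grad_diff hf) z) (fun z _ => hbound z)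
    convex_univ (Set.mem_univ y) (Set.mem_univ x)

lemma aux_line_deriv {f : F → ℝ} (hf : ContDiff ℝ 2 f) (y d : F) (t : ℝ) :
    HasDerivAt (fun s : ℝ => ⟪gradient f (y + s • d), d⟫)
      ⟪fderiv ℝ (gradient f) (y + t • d) d, d⟫ t := by
  have hline : HasDerivAt (fun s : ℝ => y + s • d) d t := by
    simpa using ((hasDerivAt_id t).smul_const d).const_add y
  have hg : HasDerivAt (fun s : ℝ => gradient f (y + s • d))
      (fderiv ℝ (gradient f) (y + t • d) d) t :=
    ((aux_grad_diff hf) (y + t • d)).hasFDerivAt.comp_hasDerivAt (l := gradient f) t hline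
  simpa using hg.inner ℝ (hasDerivAt_const t d)

lemma aux_strong_mono {f : F → ℝ} (hf : ContDiff ℝ 2 f) {μ : ℝ}
    (hH : ∀ W v : F, μ * ‖v‖ ^ 2 ≤ ⟪fderiv ℝ (gradient f) W v, v⟫) :
    ∀ x y : F, μ * ‖x - y‖ ^ 2 ≤ ⟪gradient f x - gradient f y, x - y⟫ := by
  intro x y
  set d := x - y with hd
  set φ : ℝ → ℝ := fun t => ⟪gradient f (y + t • d), d⟫ - μ * ‖d‖ ^ 2 * t with hφ
  have hderiv : ∀ t : ℝ, HasDerivAt φ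
      (⟪fderiv ℝ (gradient f) (y + t • d) d, d⟫ - μ * ‖d‖ ^ 2) t := by
    intro t
    simpa [-inner_gradient_left, hφ, Pi.sub_def] using (aux_line_deriv hf y d t).sub ((hasDerivAt_id t).const_mul (μ * ‖d‖ ^ 2))
  have hmono : Monotone φ := by
    apply monotone_of_deriv_nonneg
    · exact fun t => (hderiv t).differentiableAt
    · intro t
      rw [(hderiv t).deriv]
      have := hH (y + t • d) d
      linarith
  have h01 := hmono (by norm_num : (0:ℝ) ≤ 1)
  have e0 : y + (0:ℝ) • d = y := by simp
  have e1 : y + (1:ℝ) • d = x := by simp [hd]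
  rw [hφ] at h01
  simp only [e0, e1] at h01
  have : ⟪gradient f x - gradient f y, d⟫ = ⟪gradient f x, d⟫ - ⟪gradient f y, d⟫ :=
    inner_sub_left _ _ _
  rw [hd] at this ⊢
  rw [this]
  simp [-inner_gradient_left] at h01
  linarith

lemma aux_exists_zero (Φ : F → F) {μ K : ℝ} (hμ : 0 < μ) (hK : μ ≤ K) [Nonempty F]
    (hlip : ∀ x y : F, ‖Φ x - Φ y‖ ≤ K * ‖x - y‖)
    (hmono : ∀ x y : F, μ * ‖x - y‖ ^ 2 ≤ ⟪Φ x - Φ y, x - y⟫) :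
    ∃ x : F, Φ x = 0 := by
  have hK0 : 0 < K := lt_of_lt_of_le hμ hK
  set t := μ / K ^ 2 with ht
  have ht0 : 0 < t := by positivity
  have hnn : 0 ≤ 1 - μ ^ 2 / K ^ 2 := by
    have : μ ^ 2 ≤ K ^ 2 := by nlinarith
    have h2 : μ ^ 2 / K ^ 2 ≤ 1 := by
      rw [div_le_one (by positivity)]; exact this
    linarith
  set k : ℝ := Real.sqrt (1 - μ ^ 2 / K ^ 2) with hk
  have hk0 : 0 ≤ k := Real.sqrt_nonneg _
  have hksq : k ^ 2 = 1 - μ ^ 2 / K ^ 2 := Real.sq_sqrt hnn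
  have hk1 : k < 1 := by
    rw [hk]
    calc Real.sqrt (1 - μ ^ 2 / K ^ 2) < Real.sqrt 1 := by
          apply Real.sqrt_lt_sqrt hnn
          have : 0 < μ ^ 2 / K ^ 2 := by positivity
          linarith
      _ = 1 := Real.sqrt_one
  set T : F → F := fun x => x - t • Φ x with hT
  have hTlip : ∀ x y : F, ‖T x - T y‖ ≤ k * ‖x - y‖ := by
    intro x y
    set d := x - y with hd
    set g := Φ x - Φ y with hg
    have hTd : T x - T y = d - t • g := by
      rw [hT, hd, hg]; simp only [smul_sub]; abel
    have hsq : ‖T x - T y‖ ^ 2 ≤ k ^ 2 * ‖d‖ ^ 2 := by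
      rw [hTd, norm_sub_sq_real]
      have h1 : ⟪d, t • g⟫ = t * ⟪g, d⟫ := by
        rw [real_inner_smul_right, real_inner_comm]
      have h2 : ‖t • g‖ ^ 2 = t ^ 2 * ‖g‖ ^ 2 := by
        rw [norm_smul, Real.norm_eq_abs, abs_of_pos ht0]; ring
      have h3 : μ * ‖d‖ ^ 2 ≤ ⟪g, d⟫ := hmono x y
      have h4 : ‖g‖ ≤ K * ‖d‖ := hlip x y
      have h5 : ‖g‖ ^ 2 ≤ K ^ 2 * ‖d‖ ^ 2 := by nlinarith [norm_nonneg g, norm_nonneg d]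
      have e1 : t * (μ * ‖d‖ ^ 2) ≤ t * ⟪g, d⟫ := mul_le_mul_of_nonneg_left h3 ht0.le
      have e2 : t ^ 2 * ‖g‖ ^ 2 ≤ t ^ 2 * (K ^ 2 * ‖d‖ ^ 2) :=
        mul_le_mul_of_nonneg_left h5 (by positivity)
      have eid2 : (1 - 2 * t * μ + t ^ 2 * K ^ 2) * ‖d‖ ^ 2 = (1 - μ ^ 2 / K ^ 2) * ‖d‖ ^ 2 := by
        have eid : 1 - 2 * t * μ + t ^ 2 * K ^ 2 = 1 - μ ^ 2 / K ^ 2 := by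
          rw [ht]; field_simp; ring
        rw [eid]
      rw [h1, h2, hksq]
      nlinarith [e1, e2, eid2]
    calc ‖T x - T y‖ = Real.sqrt (‖T x - T y‖ ^ 2) := by
          rw [Real.sqrt_sq (norm_nonneg _)]
      _ ≤ Real.sqrt (k ^ 2 * ‖d‖ ^ 2) := Real.sqrt_le_sqrt hsq
      _ = k * ‖d‖ := by
          rw [Real.sqrt_mul (by positivity), Real.sqrt_sq hk0, Real.sqrt_sq (norm_nonneg _)]
  have hC : ContractingWith k.toNNReal T := by
    constructor
    · exact_mod_cast Real.toNNReal_lt_one.2 hk1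
    · apply LipschitzWith.of_dist_le_mul
      intro x y
      rw [dist_eq_norm, dist_eq_norm, Real.coe_toNNReal _ hk0]
      exact hTlip x y
  refine ⟨hC.fixedPoint T, ?_⟩
  have hfix : hC.fixedPoint T - t • Φ (hC.fixedPoint T) = hC.fixedPoint T :=
    hC.fixedPoint_isFixedPt
  have hz : t • Φ (hC.fixedPoint T) = 0 := by
    have := sub_eq_self.1 hfix
    exact this
  rcases smul_eq_zero.1 hz with h | h
  · exact absurd h (ne_of_gt ht0)
  · exact h

lemma aux_min (Gf : F → ℝ) (Φ : F → F) (hgrad : ∀ x : F, HasGradientAt Gf (Φ x) x)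
    (hmono : ∀ x y : F, 0 ≤ ⟪Φ x - Φ y, x - y⟫) (x₀ : F) (h0 : Φ x₀ = 0) :
    ∀ W : F, Gf x₀ ≤ Gf W := by
  intro W
  set d := W - x₀ with hd
  set ψ : ℝ → ℝ := fun s => Gf (x₀ + s • d) with hψ
  have hline : ∀ s : ℝ, HasDerivAt (fun s : ℝ => x₀ + s • d) d s := by
    intro s
    simpa using ((hasDerivAt_id s).smul_const d).const_add x₀
  have hder : ∀ s : ℝ, HasDerivAt ψ ⟪Φ (x₀ + s • d), d⟫ s := by
    intro s
    have := ((hgrad (x₀ + s • d)).hasFDerivAt).comp_hasDerivAt s (hline s)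
    simpa [InnerProductSpace.toDual_apply_apply, Function.comp_def, hψ] using this
  have hmonoOn : MonotoneOn ψ (Set.Icc (0:ℝ) 1) := by
    apply monotoneOn_of_deriv_nonneg (convex_Icc 0 1)
    · exact Continuous.continuousOn (by
        have : Differentiable ℝ ψ := fun s => (hder s).differentiableAt
        exact this.continuous)
    · exact fun s _ => ((hder s).differentiableAt).differentiableWithinAt
    · intro s hs
      rw [interior_Icc] at hs
      rw [(hder s).deriv]
      have key := hmono (x₀ + s • d) x₀
      rw [h0, sub_zero] at key
      have he : x₀ + s • d - x₀ = s • d := by abel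
      rw [he, real_inner_smul_right] at key
      have hs0 : 0 < s := hs.1
      nlinarith [key]
  have h01 := hmonoOn (Set.mem_Icc.2 ⟨le_refl 0, by norm_num⟩)
    (Set.mem_Icc.2 ⟨by norm_num, le_refl 1⟩) (by norm_num : (0:ℝ) ≤ 1)
  rw [hψ] at h01
  simpa [hd] using h01

end auxgen

section lap
variable {N d : ℕ} (Lap : Matrix (Fin N) (Fin N) ℝ)

lemma kron_apply (x : EuclideanSpace ℝ (Fin N × Fin d)) (p : Fin N × Fin d) :
    Matrix.toEuclideanLin (Lap ⊗ₖ (1 : Matrix (Fin d) (Fin d) ℝ)) x p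
      = ∑ j, Lap p.1 j * x (j, p.2) := by
  rw [Matrix.toEuclideanLin_apply]
  show ((Lap ⊗ₖ (1 : Matrix (Fin d) (Fin d) ℝ)) *ᵥ fun q => x q) p = _
  simp only [Matrix.mulVec, dotProduct, Fintype.sum_prod_type,
    Matrix.kroneckerMap_apply, Matrix.one_apply]
  rcases p with ⟨i, k⟩
  simp only [mul_ite, mul_one, mul_zero, ite_mul, zero_mul]
  rw [Finset.sum_congr rfl (fun j _ => Finset.sum_ite_eq (Finset.univ) k (fun l => Lap i j * x (j, l)) )]
  simp

lemma inner_lm_col (x y : EuclideanSpace ℝ (Fin N × Fin d)) :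
    ⟪x, Matrix.toEuclideanLin (Lap ⊗ₖ (1 : Matrix (Fin d) (Fin d) ℝ)) y⟫
      = ∑ k : Fin d, (fun i => x (i, k)) ⬝ᵥ Lap *ᵥ (fun i => y (i, k)) := by
  rw [PiLp.inner_apply]
  simp only [RCLike.inner_apply, conj_trivial, kron_apply]
  rw [Fintype.sum_prod_type]
  rw [Finset.sum_comm]
  refine Finset.sum_congr rfl fun k _ => ?_
  simp only [dotProduct, Matrix.mulVec]
  exact Finset.sum_congr rfl fun _ _ => mul_comm _ _

lemma lm_symm (hLsym : Lap.IsSymm) (x y : EuclideanSpace ℝ (Fin N × Fin d)) :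
    ⟪Matrix.toEuclideanLin (Lap ⊗ₖ (1 : Matrix (Fin d) (Fin d) ℝ)) x, y⟫
      = ⟪x, Matrix.toEuclideanLin (Lap ⊗ₖ (1 : Matrix (Fin d) (Fin d) ℝ)) y⟫ := by
  rw [real_inner_comm, inner_lm_col, inner_lm_col]
  refine Finset.sum_congr rfl fun k _ => ?_
  rw [Matrix.dotProduct_mulVec, ← Matrix.mulVec_transpose, hLsym.eq]
  exact (dotProduct_comm _ _)

lemma lm_consensus_zero (hL1 : Lap.mulVec (fun _ => 1) = 0) (u : EuclideanSpace ℝ (Fin d)) :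
    Matrix.toEuclideanLin (Lap ⊗ₖ (1 : Matrix (Fin d) (Fin d) ℝ))
      (WithLp.toLp 2 (fun p : Fin N × Fin d => u p.2) : EuclideanSpace ℝ (Fin N × Fin d)) = 0 := by
  ext p
  rw [kron_apply]
  have h0 : ∑ j, Lap p.1 j = 0 := by
    have := congrFun hL1 p.1
    simpa [Matrix.mulVec, dotProduct] using this
  show ∑ j, Lap p.1 j * u p.2 = (0 : EuclideanSpace ℝ (Fin N × Fin d)) p
  rw [← Finset.sum_mul, h0, zero_mul]
  rfl

lemma lm_psd (hLpsd : Lap.PosSemidef) (x : EuclideanSpace ℝ (Fin N × Fin d)) :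
    0 ≤ ⟪x, Matrix.toEuclideanLin (Lap ⊗ₖ (1 : Matrix (Fin d) (Fin d) ℝ)) x⟫ := by
  rw [inner_lm_col]
  apply Finset.sum_nonneg
  intro k _
  have := hLpsd.dotProduct_mulVec_nonneg (fun i => x (i, k))
  simpa using this

lemma lm_coercive {ρ₂ : ℝ}
    (hρ₂ : ∀ v : Fin N → ℝ, (∑ i, v i) = 0 → ρ₂ * (v ⬝ᵥ v) ≤ v ⬝ᵥ Lap.mulVec v)
    (x : EuclideanSpace ℝ (Fin N × Fin d)) (hx : ∀ k, ∑ i, x (i, k) = 0) :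
    ρ₂ * ‖x‖ ^ 2 ≤ ⟪x, Matrix.toEuclideanLin (Lap ⊗ₖ (1 : Matrix (Fin d) (Fin d) ℝ)) x⟫ := by
  rw [inner_lm_col]
  have hn : ‖x‖ ^ 2 = ∑ k : Fin d, (fun i => x (i, k)) ⬝ᵥ (fun i => x (i, k)) := by
    rw [← real_inner_self_eq_norm_sq, PiLp.inner_apply]
    simp only [RCLike.inner_apply, conj_trivial]
    rw [Fintype.sum_prod_type, Finset.sum_comm]
    rfl
  rw [hn, Finset.mul_sum]
  exact Finset.sum_le_sum fun k _ => hρ₂ _ (hx k)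

end lap

set_option maxHeartbeats 1000000 in
/-- **Distance of the penalized minimizer from consensus optimum** (core bound in the
proof of Eq. (30), Appendix B.II): the penalized Lyapunov function
`G(W) = f(W) + (γ/(2η))·Wᵀ𝐋̂W` has a unique stationary point `Ŵ` on `ℝ^{Nd}` (its
unique global minimizer) and `‖Ŵ − W*‖ ≤ (√N·∇*·L/(μρ₂))·(η/γ)`. -/
theorem stmt9 {N d : ℕ} (hN : 1 ≤ N) (hd : 1 ≤ d)
    {μ L ρ₂ gstar γ η : ℝ} (hμ : 0 < μ) (hμL : μ ≤ L) (hρ : 0 < ρ₂)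
    (hgstar : 0 ≤ gstar) (hγ : 0 < γ) (hη : 0 < η)
    (Lap : Matrix (Fin N) (Fin N) ℝ)
    (hLsym : Lap.IsSymm) (hLpsd : Lap.PosSemidef)
    (hL1 : Lap.mulVec (fun _ => 1) = 0)
    (hρ₂ : ∀ v : Fin N → ℝ, (∑ i, v i) = 0 → ρ₂ * (v ⬝ᵥ v) ≤ v ⬝ᵥ Lap.mulVec v)
    (f : EuclideanSpace ℝ (Fin N × Fin d) → ℝ) (hf : ContDiff ℝ 2 f)
    (hHess : ∀ W v, μ * ‖v‖ ^ 2 ≤ ⟪fderiv ℝ (gradient f) W v, v⟫ ∧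
      ⟪fderiv ℝ (gradient f) W v, v⟫ ≤ L * ‖v‖ ^ 2)
    (wstar : EuclideanSpace ℝ (Fin d))
    (Wstar : EuclideanSpace ℝ (Fin N × Fin d)) (hWstar : ∀ p, Wstar p = wstar p.2)
    (horth : ∀ u : EuclideanSpace ℝ (Fin d),
      ⟪gradient f Wstar, (WithLp.toLp 2 (fun p : Fin N × Fin d => u p.2) : EuclideanSpace ℝ (Fin N × Fin d))⟫ = 0)
    (hgrad : ‖gradient f Wstar‖ ≤ Real.sqrt N * gstar)
    (G : EuclideanSpace ℝ (Fin N × Fin d) → ℝ)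
    (hG : ∀ W, G W = f W + (γ / (2 * η)) *
      ⟪W, Matrix.toEuclideanLin (Lap ⊗ₖ (1 : Matrix (Fin d) (Fin d) ℝ)) W⟫) :
    ∃ What : EuclideanSpace ℝ (Fin N × Fin d),
      gradient G What = 0 ∧
      (∀ W, gradient G W = 0 → W = What) ∧
      (∀ W, G What ≤ G W) ∧
      ‖What - Wstar‖ ≤ (Real.sqrt N * gstar * L / (μ * ρ₂)) * (η / γ) := by
  classical
  set Lm : EuclideanSpace ℝ (Fin N × Fin d) →ₗ[ℝ] EuclideanSpace ℝ (Fin N × Fin d) :=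
    Matrix.toEuclideanLin (Lap ⊗ₖ (1 : Matrix (Fin d) (Fin d) ℝ)) with hLmdef
  set Mc : EuclideanSpace ℝ (Fin N × Fin d) →L[ℝ] EuclideanSpace ℝ (Fin N × Fin d) :=
    LinearMap.toContinuousLinearMap Lm with hMcdef
  have hMc : ∀ x, Mc x = Lm x := fun x => rfl
  set Φ : EuclideanSpace ℝ (Fin N × Fin d) → EuclideanSpace ℝ (Fin N × Fin d) :=
    fun W => gradient f W + (γ / η) • Lm W with hΦdef
  have hη' : (η : ℝ) ≠ 0 := ne_of_gt hη
  -- gradient of the quadratic form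
  have hq : ∀ W, HasFDerivAt
      (fun W : EuclideanSpace ℝ (Fin N × Fin d) => (γ / (2 * η)) * ⟪W, Lm W⟫)
      (InnerProductSpace.toDual ℝ _ ((γ / η) • Lm W)) W := by
    intro W
    have h := ((hasFDerivAt_id W).inner ℝ (Mc.hasFDerivAt (x := W))).const_mul (γ / (2 * η))
    have heq : (γ / (2 * η)) • ((fderivInnerCLM ℝ (id W, Mc W)).comp
        ((ContinuousLinearMap.id ℝ _).prod Mc))
          = InnerProductSpace.toDual ℝ _ ((γ / η) • Lm W) := by
      apply ContinuousLinearMap.ext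
      intro v
      simp only [ContinuousLinearMap.smul_apply, ContinuousLinearMap.comp_apply,
        ContinuousLinearMap.prod_apply, ContinuousLinearMap.id_apply, fderivInnerCLM_apply,
        id_eq, InnerProductSpace.toDual_apply_apply, hMc]
      have e1 : ⟪W, Lm v⟫ = ⟪Lm W, v⟫ := (lm_symm Lap hLsym W v).symm
      have e2 : ⟪v, Lm W⟫ = ⟪Lm W, v⟫ := real_inner_comm _ _
      rw [real_inner_smul_left, e1, e2]
      have : γ / (2 * η) * (⟪Lm W, v⟫ + ⟪Lm W, v⟫) = (γ / η) * ⟪Lm W, v⟫ := by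
        field_simp; ring
      simpa [smul_eq_mul] using this
    rw [← heq]
    exact h
  have hGgrad : ∀ W, HasGradientAt G (Φ W) W := by
    intro W
    rw [hasGradientAt_iff_hasFDerivAt]
    have hGfun : G = fun W => f W + (γ / (2 * η)) * ⟪W, Lm W⟫ := funext hG
    rw [hGfun]
    have h1 : HasFDerivAt f (InnerProductSpace.toDual ℝ _ (gradient f W)) W :=
      ((hf.differentiable (by norm_num) W).hasGradientAt).hasFDerivAt
    have h3 := h1.add (hq W)
    have heq2 : InnerProductSpace.toDual ℝ _ (gradient f W)
        + InnerProductSpace.toDual ℝ _ ((γ / η) • Lm W)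
          = InnerProductSpace.toDual ℝ _ (Φ W) := by
      rw [← map_add]
    rw [← heq2]
    exact h3
  have hgradG_eq : ∀ W, gradient G W = Φ W := fun W => (hGgrad W).gradient
  -- strong monotonicity of Φ
  have hsm := aux_strong_mono hf (fun W v => (hHess W v).1)
  have hmono : ∀ x y, μ * ‖x - y‖ ^ 2 ≤ ⟪Φ x - Φ y, x - y⟫ := by
    intro x y
    have h1 := hsm x y
    have h2 : 0 ≤ ⟪Lm (x - y), x - y⟫ := by
      rw [real_inner_comm]
      exact lm_psd Lap hLpsd _
    have hΦs : Φ x - Φ y = (gradient f x - gradient f y) + (γ / η) • Lm (x - y) := by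
      rw [hΦdef]
      simp only [map_sub, smul_sub]
      abel
    rw [hΦs, inner_add_left, real_inner_smul_left]
    have : 0 ≤ (γ / η) * ⟪Lm (x - y), x - y⟫ := mul_nonneg (by positivity) h2
    linarith
  -- Lipschitz bound for Φ
  have hlips := aux_grad_lipschitz hf hμ.le hμL hHess
  set K : ℝ := L + (γ / η) * ‖Mc‖ with hKdef
  have hKμ : μ ≤ K := by
    have : 0 ≤ (γ / η) * ‖Mc‖ := mul_nonneg (by positivity) (norm_nonneg _)
    rw [hKdef]; linarith
  have hlip : ∀ x y, ‖Φ x - Φ y‖ ≤ K * ‖x - y‖ := by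
    intro x y
    have hΦs : Φ x - Φ y = (gradient f x - gradient f y) + (γ / η) • Lm (x - y) := by
      rw [hΦdef]; simp only [map_sub, smul_sub]; abel
    rw [hΦs]
    calc ‖(gradient f x - gradient f y) + (γ / η) • Lm (x - y)‖
        ≤ ‖gradient f x - gradient f y‖ + ‖(γ / η) • Lm (x - y)‖ := norm_add_le _ _
      _ ≤ L * ‖x - y‖ + (γ / η) * (‖Mc‖ * ‖x - y‖) := by
          have h4 : ‖(γ / η) • Lm (x - y)‖ = (γ / η) * ‖Lm (x - y)‖ := by
            rw [norm_smul, Real.norm_eq_abs, abs_of_pos (by positivity)]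
          have h5 : ‖Lm (x - y)‖ ≤ ‖Mc‖ * ‖x - y‖ := by
            rw [← hMc]; exact Mc.le_opNorm _
          have h6 := hlips x y
          have := mul_le_mul_of_nonneg_left h5 (le_of_lt (by positivity : (0:ℝ) < γ / η))
          rw [h4]
          linarith
      _ = K * ‖x - y‖ := by rw [hKdef]; ring
  -- existence of the stationary point
  obtain ⟨What, hWhat0⟩ := aux_exists_zero Φ hμ hKμ hlip hmono
  refine ⟨What, ?_, ?_, ?_, ?_⟩
  · rw [hgradG_eq]; exact hWhat0
  · intro W hW
    rw [hgradG_eq] at hW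
    have h := hmono W What
    rw [hW, hWhat0, sub_zero, inner_zero_left] at h
    have h' : ‖W - What‖ ^ 2 ≤ 0 := by
      have h2 : μ * ‖W - What‖ ^ 2 ≤ μ * 0 := by simpa using h
      simpa using le_of_mul_le_mul_left h2 hμ
    have h'' : ‖W - What‖ = 0 :=
      (pow_eq_zero_iff (by norm_num)).1 (le_antisymm h' (sq_nonneg _))
    exact sub_eq_zero.1 (norm_eq_zero.1 h'')
  · exact aux_min G Φ hGgrad
      (fun x y => le_trans (mul_nonneg hμ.le (sq_nonneg _)) (hmono x y)) What hWhat0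
  · -- the distance bound
    set g : EuclideanSpace ℝ (Fin N × Fin d) := gradient f Wstar with hgdef
    set Δ : EuclideanSpace ℝ (Fin N × Fin d) := What - Wstar with hΔdef
    have hWcons : Wstar = (WithLp.toLp 2 (fun p : Fin N × Fin d => wstar p.2) : EuclideanSpace ℝ (Fin N × Fin d)) := by
      ext p; exact hWstar p
    have hMWstar : Lm Wstar = 0 := by
      rw [hWcons]; exact lm_consensus_zero Lap hL1 wstar
    set m : EuclideanSpace ℝ (Fin d) := WithLp.toLp 2 (fun k => (∑ i, Δ (i, k)) / N) with hmdef
    set Cm : EuclideanSpace ℝ (Fin N × Fin d) := WithLp.toLp 2 (fun p : Fin N × Fin d => m p.2) with hCmdef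
    set b : EuclideanSpace ℝ (Fin N × Fin d) := Δ - Cm with hbdef
    have hNne : (N : ℝ) ≠ 0 := Nat.cast_ne_zero.mpr (by omega)
    have hbsum : ∀ k : Fin d, ∑ i, b (i, k) = 0 := by
      intro k
      have hbp : ∀ i, b (i, k) = Δ (i, k) - m k := by
        intro i
        rfl
      rw [Finset.sum_congr rfl fun i _ => hbp i, Finset.sum_sub_distrib,
        Finset.sum_const, Finset.card_univ, Fintype.card_fin, hmdef]
      simp only [nsmul_eq_mul]
      field_simp
      ring
    have hLmCm : Lm Cm = 0 := lm_consensus_zero Lap hL1 m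
    have hLmΔ : Lm Δ = Lm What := by
      rw [hΔdef, map_sub, hMWstar, sub_zero]
    have hLmΔb : Lm Δ = Lm b := by
      rw [hbdef, show Lm (Δ - Cm) = Lm Δ - Lm Cm from map_sub Lm Δ Cm, hLmCm, sub_zero]
    -- stationarity
    have hstat : gradient f What = -((γ / η) • Lm Δ) := by
      have h : gradient f What + (γ / η) • Lm What = 0 := hWhat0
      rw [hLmΔ]
      exact eq_neg_of_add_eq_zero_left h
    set y : EuclideanSpace ℝ (Fin N × Fin d) := gradient f What - g with hydef
    have hy : y = -((γ / η) • Lm Δ) - g := by rw [hydef, hstat]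
    -- orthogonality facts
    have hgCm : ⟪g, Cm⟫ = 0 := horth m
    have hLmΔCm : ⟪Lm Δ, Cm⟫ = 0 := by
      rw [lm_symm Lap hLsym, hLmCm]
      exact inner_zero_right _
    have hyCm : ⟪y, Cm⟫ = 0 := by
      rw [hy, inner_sub_left, inner_neg_left, real_inner_smul_left, hLmΔCm, hgCm]
      ring
    have hΔbCm : Δ = b + Cm := by rw [hbdef]; abel
    have hyΔ : ⟪y, Δ⟫ = ⟪y, b⟫ := by
      rw [hΔbCm, inner_add_right, hyCm, add_zero]
    -- strong monotonicity and Lipschitz at the pair (What, Wstar)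
    have hSM : μ * ‖Δ‖ ^ 2 ≤ ⟪y, Δ⟫ := by
      have := hsm What Wstar
      rw [← hΔdef, ← hgdef, ← hydef] at this
      exact this
    have hynorm : ‖y‖ ≤ L * ‖Δ‖ := by
      have := hlips What Wstar
      rw [← hΔdef, ← hgdef, ← hydef] at this
      exact this
    -- step 1 : μ‖Δ‖² ≤ L‖Δ‖‖b‖
    have step1 : μ * ‖Δ‖ ^ 2 ≤ L * ‖Δ‖ * ‖b‖ := by
      have h1 : ⟪y, b⟫ ≤ ‖y‖ * ‖b‖ := real_inner_le_norm _ _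
      have h2 : ‖y‖ * ‖b‖ ≤ (L * ‖Δ‖) * ‖b‖ :=
        mul_le_mul_of_nonneg_right hynorm (norm_nonneg _)
      rw [hyΔ] at hSM
      linarith
    -- step 2 : (γ/η)ρ₂‖b‖² ≤ ‖g‖‖b‖
    have hcoer : ρ₂ * ‖b‖ ^ 2 ≤ ⟪b, Lm b⟫ := lm_coercive Lap hρ₂ b hbsum
    have hLmbCm : ⟪Lm b, Cm⟫ = 0 := by rw [← hLmΔb]; exact hLmΔCm
    have hLmΔΔ : ⟪Lm Δ, Δ⟫ = ⟪b, Lm b⟫ := by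
      rw [hLmΔb, hΔbCm, inner_add_right, hLmbCm, add_zero, real_inner_comm]
    have hyinner : ⟪y, Δ⟫ = -((γ / η) * ⟪Lm Δ, Δ⟫) - ⟪g, Δ⟫ := by
      rw [hy, inner_sub_left, inner_neg_left, real_inner_smul_left]
    have hgΔ : ⟪g, Δ⟫ = ⟪g, b⟫ := by
      rw [hΔbCm, inner_add_right, hgCm, add_zero]
    have hgb : -⟪g, b⟫ ≤ ‖g‖ * ‖b‖ := by
      calc -⟪g, b⟫ ≤ |⟪g, b⟫| := neg_le_abs _
        _ ≤ ‖g‖ * ‖b‖ := abs_real_inner_le_norm g b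
    have step2 : (γ / η) * (ρ₂ * ‖b‖ ^ 2) ≤ ‖g‖ * ‖b‖ := by
      have h1 : μ * ‖Δ‖ ^ 2 + (γ / η) * ⟪Lm Δ, Δ⟫ ≤ -⟪g, b⟫ := by
        rw [hgΔ] at hyinner
        linarith [hSM]
      have h2 : (γ / η) * (ρ₂ * ‖b‖ ^ 2) ≤ (γ / η) * ⟪Lm Δ, Δ⟫ := by
        rw [hLmΔΔ]
        exact mul_le_mul_of_nonneg_left hcoer (by positivity)
      have h3 : 0 ≤ μ * ‖Δ‖ ^ 2 := mul_nonneg hμ.le (sq_nonneg _)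
      linarith [hgb]
    clear_value b y Cm m g Δ K Φ Mc Lm
    -- conclude
    have hL0 : (0:ℝ) < L := lt_of_lt_of_le hμ hμL
    have hRHS0 : 0 ≤ Real.sqrt N * gstar * L / (μ * ρ₂) * (η / γ) :=
      mul_nonneg (div_nonneg (mul_nonneg (mul_nonneg (Real.sqrt_nonneg _) hgstar) hL0.le)
        (by positivity)) (by positivity)
    by_cases hb0 : ‖b‖ = 0
    · have h2 : μ * ‖Δ‖ ^ 2 ≤ μ * 0 := by
        rw [hb0] at step1
        simpa using step1
      have h' : ‖Δ‖ ^ 2 ≤ 0 := by simpa using le_of_mul_le_mul_left h2 hμ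
      have hΔ0 : ‖Δ‖ = 0 :=
        (pow_eq_zero_iff (two_ne_zero)).1 (le_antisymm h' (sq_nonneg _))
      exact hΔ0.le.trans hRHS0
    · have hbpos : 0 < ‖b‖ := lt_of_le_of_ne (norm_nonneg _) (Ne.symm hb0)
      have h1 : μ * ‖Δ‖ ≤ L * ‖b‖ := by
        rcases eq_or_lt_of_le (norm_nonneg Δ) with hΔ0 | hΔpos
        · rw [← hΔ0, mul_zero]; positivity
        · refine le_of_mul_le_mul_right ?_ hΔpos
          calc μ * ‖Δ‖ * ‖Δ‖ = μ * ‖Δ‖ ^ 2 := by ring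
            _ ≤ L * ‖Δ‖ * ‖b‖ := step1
            _ = L * ‖b‖ * ‖Δ‖ := by ring
      have h2 : ρ₂ * ‖b‖ ≤ (η / γ) * ‖g‖ := by
        have h2a : ((γ / η) * (ρ₂ * ‖b‖)) * ‖b‖ ≤ ‖g‖ * ‖b‖ := by
          calc ((γ / η) * (ρ₂ * ‖b‖)) * ‖b‖ = (γ / η) * (ρ₂ * ‖b‖ ^ 2) := by ring
            _ ≤ ‖g‖ * ‖b‖ := step2
        have h2b : (γ / η) * (ρ₂ * ‖b‖) ≤ ‖g‖ := le_of_mul_le_mul_right h2a hbpos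
        have := mul_le_mul_of_nonneg_left h2b (le_of_lt (by positivity : (0:ℝ) < η / γ))
        calc ρ₂ * ‖b‖ = (η / γ) * ((γ / η) * (ρ₂ * ‖b‖)) := by
              rw [show (η / γ) * ((γ / η) * (ρ₂ * ‖b‖)) = ((η / γ) * (γ / η)) * (ρ₂ * ‖b‖) from by
                ring]
              rw [div_mul_div_comm, mul_comm η γ, div_self (by positivity), one_mul]
          _ ≤ (η / γ) * ‖g‖ := this
      have hgN : ‖g‖ ≤ Real.sqrt N * gstar := hgrad
      have hform : Real.sqrt N * gstar * L / (μ * ρ₂) * (η / γ)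
          = (Real.sqrt N * gstar * L * η) / (μ * ρ₂ * γ) := by
        field_simp
      rw [hform, le_div_iff₀ (by positivity : (0:ℝ) < μ * ρ₂ * γ)]
      have c1 : μ * ‖Δ‖ * (ρ₂ * γ) ≤ L * ‖b‖ * (ρ₂ * γ) :=
        mul_le_mul_of_nonneg_right h1 (by positivity)
      have c2 : L * γ * (ρ₂ * ‖b‖) ≤ L * γ * ((η / γ) * ‖g‖) :=
        mul_le_mul_of_nonneg_left h2 (by positivity)
      have c3 : L * γ * ((η / γ) * ‖g‖) = L * η * ‖g‖ := by field_simp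
      have c4 : L * η * ‖g‖ ≤ L * η * (Real.sqrt N * gstar) :=
        mul_le_mul_of_nonneg_left hgN (by positivity)
      linarith only [c1, c2, c3, c4]
end

section
/- Let N, d ≥ 1 and 0 < μ ≤ L. Let 𝐋 be a symmetric positive semidefinite N×N real matrix with 𝐋·𝟏_N = 0, let ρ₂ > 0 satisfy vᵀ𝐋v ≥ ρ₂‖v‖² for every v ∈ ℝ^N orthogonal to 𝟏_N, and set 𝐋̂ = 𝐋 ⊗ I_d. Let f : ℝ^{Nd} → ℝ be twice continuously differentiable with μ·I ⪯ ∇²f(W) ⪯ L·I for all W. Fix w* ∈ ℝ^d, set W* = 𝟏_N ⊗ w*, and assume ⟨∇f(W*), 𝟏_N ⊗ u⟩ = 0 for every u ∈ ℝ^d and ‖∇f(W*)‖ ≤ √N·∇* with ∇* > 0. Let 𝒲 ⊆ ℝ^d be a nonempty closed bounded convex set with w* in its interior and ζ = dist(w*, ∂𝒲) > 0, and let 𝒲^N ⊆ ℝ^{Nd} be the set of vectors whose N consecutive d-dimensional blocks all lie in 𝒲. Let γ, η > 0 define G(W) = f(W) + (γ/(2η))·Wᵀ𝐋̂W and let Ŵ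 be its unique unconstrained minimizer. If η/γ ≤ ζ·μ·ρ₂/(√N·∇*·L), then Ŵ ∈ 𝒲^N; consequently Ŵ is also the minimizer of G over 𝒲^N, ∇G(Ŵ) = 0, and (1/√N)·‖Ŵ − W*‖ ≤ (∇*·L/(μ·ρ₂))·(η/γ). -/
open Matrix
open scoped Kronecker RealInnerProductSpace
open InnerProductSpace

section Aux

variable {E : Type*} [NormedAddCommGroup E] [InnerProductSpace ℝ E] [CompleteSpace E]

lemma grad_inner (f : E → ℝ) (x u : E) : ⟪gradient f x, u⟫ = fderiv ℝ f x u :=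
  toDual_symm_apply

lemma hess_apply (f : E → ℝ) (hf : ContDiff ℝ 2 f) (W v u : E) :
    ⟪fderiv ℝ (gradient f) W v, u⟫ = fderiv ℝ (fderiv ℝ f) W v u := by
  have hdf' : Differentiable ℝ (fderiv ℝ f) :=
    (hf.fderiv_right (m := 1) (by norm_num)).differentiable (by norm_num)
  have hdg : DifferentiableAt ℝ (gradient f) W := by
    have : DifferentiableAt ℝ (fun x => (toDual ℝ E).symm (fderiv ℝ f x)) W :=
      ((toDual ℝ E).symm.toContinuousLinearEquiv.differentiableAt).comp W (hdf' W)
    exact this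
  -- compute fderiv of h x = ⟪gradient f x, u⟫ two ways
  have ha : HasFDerivAt (fun x => ⟪gradient f x, u⟫)
      ((innerSL ℝ u).comp (fderiv ℝ (gradient f) W)) W := by
    have h1 : HasFDerivAt (gradient f) (fderiv ℝ (gradient f) W) W := hdg.hasFDerivAt
    have h2 := (innerSL ℝ u).hasFDerivAt.comp W h1
    refine h2.congr_of_eventuallyEq (Filter.Eventually.of_forall fun x => ?_)
    exact real_inner_comm _ _
  have hb : HasFDerivAt (fun x => ⟪gradient f x, u⟫)
      ((ContinuousLinearMap.apply ℝ ℝ u).comp (fderiv ℝ (fderiv ℝ f) W)) W := by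
    have h1 : HasFDerivAt (fderiv ℝ f) (fderiv ℝ (fderiv ℝ f) W) W := (hdf' W).hasFDerivAt
    have h2 := (ContinuousLinearMap.apply ℝ ℝ u).hasFDerivAt.comp W h1
    refine h2.congr_of_eventuallyEq (Filter.Eventually.of_forall fun x => ?_)
    exact grad_inner f x u
  have := ha.unique hb
  calc ⟪fderiv ℝ (gradient f) W v, u⟫
      = ((innerSL ℝ u).comp (fderiv ℝ (gradient f) W)) v := (real_inner_comm _ _)
    _ = ((ContinuousLinearMap.apply ℝ ℝ u).comp (fderiv ℝ (fderiv ℝ f) W)) v := by rw [this]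
    _ = fderiv ℝ (fderiv ℝ f) W v u := rfl

lemma hess_symm (f : E → ℝ) (hf : ContDiff ℝ 2 f) (W v u : E) :
    ⟪fderiv ℝ (gradient f) W v, u⟫ = ⟪fderiv ℝ (gradient f) W u, v⟫ := by
  have hdf : Differentiable ℝ f := hf.differentiable (by norm_num)
  have hdf' : Differentiable ℝ (fderiv ℝ f) :=
    (hf.fderiv_right (m := 1) (by norm_num)).differentiable (by norm_num)
  rw [hess_apply f hf, hess_apply f hf]
  exact second_derivative_symmetric (fun y => (hdf y).hasFDerivAt) ((hdf' W).hasFDerivAt) v u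

variable {E : Type*} [NormedAddCommGroup E] [InnerProductSpace ℝ E] [CompleteSpace E]

lemma norm_le_of_symm (B : E →L[ℝ] E) (L : ℝ) (hL0 : 0 ≤ L)
    (hsym : ∀ v u, ⟪B v, u⟫ = ⟪B u, v⟫)
    (h0 : ∀ v, 0 ≤ ⟪B v, v⟫) (hL : ∀ v, ⟪B v, v⟫ ≤ L * ‖v‖ ^ 2) (v : E) :
    ‖B v‖ ≤ L * ‖v‖ := by
  rcases eq_or_ne (B v) 0 with h | h
  · rw [h, norm_zero]; positivity
  rcases eq_or_ne v 0 with rfl | hv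
  · simp at h
  set u := (‖v‖ / ‖B v‖) • B v with hu
  have hBvu : ⟪B v, u⟫ = ‖v‖ * ‖B v‖ := by
    rw [hu, real_inner_smul_right, real_inner_self_eq_norm_sq]
    field_simp
  have hnu : ‖u‖ = ‖v‖ := by
    rw [hu, norm_smul]
    simp [abs_of_nonneg (div_nonneg (norm_nonneg v) (norm_nonneg (B v))),
      div_mul_cancel₀ _ (norm_ne_zero_iff.2 h)]
  have hexp : ⟪B (v + u), v + u⟫ - ⟪B (v - u), v - u⟫ = 4 * ⟪B v, u⟫ := by
    have h1 := hsym v u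
    simp only [map_add, map_sub, inner_add_left, inner_add_right, inner_sub_left,
      inner_sub_right]
    linarith [hsym u v]
  have hub : ⟪B (v + u), v + u⟫ ≤ L * (2 * ‖v‖) ^ 2 := by
    refine le_trans (hL _) ?_
    have : ‖v + u‖ ≤ 2 * ‖v‖ := by
      calc ‖v + u‖ ≤ ‖v‖ + ‖u‖ := norm_add_le _ _
        _ = 2 * ‖v‖ := by rw [hnu]; ring
    have h2 : ‖v + u‖ ^ 2 ≤ (2 * ‖v‖) ^ 2 := by
      apply pow_le_pow_left₀ (norm_nonneg _) this
    nlinarith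
  have hkey : 4 * (‖v‖ * ‖B v‖) ≤ 4 * (L * ‖v‖ ^ 2) := by
    rw [← hBvu, ← hexp]
    have := h0 (v - u)
    nlinarith
  have hvpos : 0 < ‖v‖ := norm_pos_iff.2 hv
  nlinarith

lemma grad_lipschitz (f : E → ℝ) (hf : ContDiff ℝ 2 f) {L : ℝ} (hL0 : 0 ≤ L)
    (h0 : ∀ W v, 0 ≤ ⟪fderiv ℝ (gradient f) W v, v⟫)
    (hL : ∀ W v, ⟪fderiv ℝ (gradient f) W v, v⟫ ≤ L * ‖v‖ ^ 2) (x y : E) :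
    ‖gradient f x - gradient f y‖ ≤ L * ‖x - y‖ := by
  have hdg : Differentiable ℝ (gradient f) := by
    intro W
    have hdf' : Differentiable ℝ (fderiv ℝ f) :=
      (hf.fderiv_right (m := 1) (by norm_num)).differentiable (by norm_num)
    exact ((toDual ℝ E).symm.toContinuousLinearEquiv.differentiableAt).comp W (hdf' W)
  have hbound : ∀ W : E, W ∈ (Set.univ : Set E) → ‖fderiv ℝ (gradient f) W‖ ≤ L := by
    intro W _
    apply ContinuousLinearMap.opNorm_le_bound _ hL0
    intro v
    exact norm_le_of_symm _ L hL0 (hess_symm f hf W) (h0 W) (hL W) v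
  exact (convex_univ).norm_image_sub_le_of_norm_fderiv_le
    (fun W _ => (hdg W)) (by simpa using hbound) trivial trivial
lemma grad_strong_mono (f : E → ℝ) (hf : ContDiff ℝ 2 f) {μ : ℝ}
    (hμ : ∀ W v, μ * ‖v‖ ^ 2 ≤ ⟪fderiv ℝ (gradient f) W v, v⟫) (x y : E) :
    μ * ‖x - y‖ ^ 2 ≤ ⟪gradient f x - gradient f y, x - y⟫ := by
  have hdg : Differentiable ℝ (gradient f) := by
    intro W
    have hdf' : Differentiable ℝ (fderiv ℝ f) :=
      (hf.fderiv_right (m := 1) (by norm_num)).differentiable (by norm_num)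
    exact ((toDual ℝ E).symm.toContinuousLinearEquiv.differentiableAt).comp W (hdf' W)
  set v := x - y with hv
  set φ : ℝ → ℝ := fun t => ⟪gradient f (y + t • v), v⟫ with hφ
  have hder : ∀ t : ℝ, HasDerivAt φ
      ⟪fderiv ℝ (gradient f) (y + t • v) v, v⟫ t := by
    intro t
    have hc : HasDerivAt (fun t : ℝ => y + t • v) v t := by
      simpa using ((hasDerivAt_id t).smul_const v).const_add y
    have h1 : HasDerivAt (fun t : ℝ => gradient f (y + t • v))
        (fderiv ℝ (gradient f) (y + t • v) v) t :=
      HasFDerivAt.comp_hasDerivAt (l := gradient f) t (hdg (y + t • v)).hasFDerivAt hc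
    have h2 := (h1.inner ℝ (hasDerivAt_const t v))
    simpa [hφ] using h2
  obtain ⟨c, hc, hceq⟩ := exists_hasDerivAt_eq_slope φ _ (by norm_num : (0:ℝ) < 1)
    (fun t _ => (hder t).continuousAt.continuousWithinAt) (fun t _ => hder t)
  have h1 : φ 1 - φ 0 = ⟪fderiv ℝ (gradient f) (y + c • v) v, v⟫ := by
    rw [hceq]; norm_num
  have h2 : φ 1 - φ 0 = ⟪gradient f x - gradient f y, v⟫ := by
    simp only [hφ, one_smul, zero_smul, add_zero, inner_sub_left]
    rw [hv]
    ring_nf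
    rw [add_sub_cancel]
    ring
  rw [← h2] at *
  rw [h1]
  exact hμ _ _

lemma closedBall_subset_of_closed {F : Type*} [NormedAddCommGroup F] [NormedSpace ℝ F]
    [FiniteDimensional ℝ F] {𝒲 : Set F} (hcl : IsClosed 𝒲) {w : F} (hw : w ∈ 𝒲)
    (hne : 𝒲 ≠ Set.univ) :
    Metric.closedBall w (Metric.infDist w (frontier 𝒲)) ⊆ 𝒲 := by
  obtain ⟨y, hyf, hyd⟩ := exists_mem_frontier_infDist_compl_eq_dist hw hne
  have h1 : Metric.infDist w (frontier 𝒲) ≤ Metric.infDist w 𝒲ᶜ :=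
    hyd ▸ Metric.infDist_le_dist_of_mem hyf
  calc Metric.closedBall w (Metric.infDist w (frontier 𝒲))
      ⊆ Metric.closedBall w (Metric.infDist w 𝒲ᶜ) := Metric.closedBall_subset_closedBall h1
    _ ⊆ closure 𝒲 := Metric.closedBall_infDist_compl_subset_closure hw
    _ = 𝒲 := hcl.closure_eq

lemma quad_hasGradient {E : Type*} [NormedAddCommGroup E] [InnerProductSpace ℝ E]
    [CompleteSpace E] (K : E →L[ℝ] E) (hsym : ∀ v w, ⟪K v, w⟫ = ⟪v, K w⟫) (W : E) :
    HasGradientAt (fun W => ⟪W, K W⟫) ((2:ℝ) • K W) W := by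
  have h1 : HasFDerivAt (fun W : E => ⟪W, K W⟫)
      ((fderivInnerCLM ℝ (W, K W)).comp <|
        (ContinuousLinearMap.id ℝ E).prod K) W :=
    (hasFDerivAt_id W).inner ℝ K.hasFDerivAt
  have h2 : (toDual ℝ E) ((2:ℝ) • K W)
      = (fderivInnerCLM ℝ (W, K W)).comp ((ContinuousLinearMap.id ℝ E).prod K) := by
    apply ContinuousLinearMap.ext
    intro v
    simp only [ContinuousLinearMap.coe_comp', Function.comp_apply,
      ContinuousLinearMap.prod_apply, ContinuousLinearMap.coe_id', id_eq,
      fderivInnerCLM_apply, toDual_apply_apply]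
    rw [inner_smul_left]
    have := hsym W v
    have h3 := real_inner_comm (K W) v
    simp only [RCLike.star_def, conj_trivial]
    rw [← hsym W v, real_inner_comm (K W) v]
    ring
  unfold HasGradientAt HasGradientAtFilter
  rw [h2]
  exact h1

variable {N d : ℕ}


lemma euc_inner (x y : EuclideanSpace ℝ (Fin N × Fin d)) :
    ⟪x, y⟫ = ∑ p, x p * y p := by
  simp [PiLp.inner_apply, RCLike.inner_apply, conj_trivial]
  exact Finset.sum_congr rfl fun _ _ => mul_comm _ _

lemma Kapply (Lap : Matrix (Fin N) (Fin N) ℝ) (v : EuclideanSpace ℝ (Fin N × Fin d))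
    (p : Fin N × Fin d) :
    Matrix.toEuclideanLin (Lap ⊗ₖ (1 : Matrix (Fin d) (Fin d) ℝ)) v p
      = ∑ n, Lap p.1 n * v (n, p.2) := by
  rcases p with ⟨m, i⟩
  simp only [Matrix.toEuclideanLin_apply, Matrix.mulVec, dotProduct,
    Matrix.kroneckerMap_apply, Matrix.one_apply, Fintype.sum_prod_type]
  simp [mul_ite, Finset.sum_ite_eq, Finset.sum_ite_eq']

lemma Ksym (Lap : Matrix (Fin N) (Fin N) ℝ) (hLsym : Lap.IsSymm)
    (v w : EuclideanSpace ℝ (Fin N × Fin d)) :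
    ⟪Matrix.toEuclideanLin (Lap ⊗ₖ (1 : Matrix (Fin d) (Fin d) ℝ)) v, w⟫
      = ⟪v, Matrix.toEuclideanLin (Lap ⊗ₖ (1 : Matrix (Fin d) (Fin d) ℝ)) w⟫ := by
  have swap1 : ∀ (g : Fin N → Fin d → Fin N → ℝ),
      ∑ m, ∑ i, ∑ n, g m i n = ∑ n, ∑ m, ∑ i, g m i n := by
    intro g
    calc ∑ m, ∑ i, ∑ n, g m i n = ∑ m, ∑ n, ∑ i, g m i n :=
          Finset.sum_congr rfl fun m _ => Finset.sum_comm
      _ = ∑ n, ∑ m, ∑ i, g m i n := Finset.sum_comm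
  simp only [euc_inner, Kapply, Finset.sum_mul, Finset.mul_sum, Fintype.sum_prod_type]
  rw [swap1 (fun m i n => Lap m n * v (n, i) * w (m, i))]
  refine Finset.sum_congr rfl fun m _ => ?_
  rw [Finset.sum_comm]
  refine Finset.sum_congr rfl fun i _ => Finset.sum_congr rfl fun n _ => ?_
  have hs : Lap n m = Lap m n := by
    conv_lhs => rw [← hLsym]
    rfl
  rw [hs]
  ring

lemma Kconsensus (Lap : Matrix (Fin N) (Fin N) ℝ)
    (hL1 : Lap.mulVec (fun _ => 1) = 0) (u : EuclideanSpace ℝ (Fin d)) :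
    Matrix.toEuclideanLin (Lap ⊗ₖ (1 : Matrix (Fin d) (Fin d) ℝ))
      (WithLp.toLp 2 (fun p : Fin N × Fin d => u p.2) : EuclideanSpace ℝ (Fin N × Fin d)) = 0 := by
  ext p
  rw [Kapply]
  have h1 : Lap.mulVec (fun _ => 1) p.1 = 0 := by rw [hL1]; rfl
  simp only [Matrix.mulVec, dotProduct, mul_one] at h1
  have : ∑ n, Lap p.1 n * u p.2 = (∑ n, Lap p.1 n) * u p.2 := by
    rw [Finset.sum_mul]
  rw [this, h1, zero_mul]
  rfl

lemma Kquad (Lap : Matrix (Fin N) (Fin N) ℝ) {ρ₂ : ℝ}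
    (hρ₂ : ∀ v : Fin N → ℝ, (∑ i, v i) = 0 → ρ₂ * (v ⬝ᵥ v) ≤ v ⬝ᵥ Lap.mulVec v)
    (v : EuclideanSpace ℝ (Fin N × Fin d)) (hv : ∀ i, ∑ m, v (m, i) = 0) :
    ρ₂ * ⟪v, v⟫ ≤ ⟪v, Matrix.toEuclideanLin (Lap ⊗ₖ (1 : Matrix (Fin d) (Fin d) ℝ)) v⟫ := by
  simp only [euc_inner, Kapply]
  rw [Fintype.sum_prod_type, Fintype.sum_prod_type, Finset.sum_comm, Finset.sum_comm
    (s := Finset.univ) (t := Finset.univ) (f := fun m i => v (m,i) * ∑ n, Lap m n * v (n, i)),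
    Finset.mul_sum]
  apply Finset.sum_le_sum
  intro i _
  have := hρ₂ (fun m => v (m, i)) (hv i)
  simpa [dotProduct, Matrix.mulVec, Finset.mul_sum] using this

end Aux

set_option maxHeartbeats 1000000 in
/-- **Bound (30) of Theorem 1 with the interiority argument** (Appendix B.II): under the
stepsize condition `η/γ ≤ ζμρ₂/(√N·∇*·L)`, the unconstrained minimizer `Ŵ` of the
penalized Lyapunov function `G(W) = f(W) + (γ/(2η))Wᵀ𝐋̂W` lies in `𝒲^N`, hence is also
the constrained minimizer, is stationary, and satisfies
`(1/√N)‖Ŵ − W*‖ ≤ (∇*·L/(μρ₂))·(η/γ)`. -/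
theorem stmt10 {N d : ℕ} (hN : 1 ≤ N) (hd : 1 ≤ d)
    {μ L ρ₂ gstar γ η ζ : ℝ} (hμ : 0 < μ) (hμL : μ ≤ L) (hρ : 0 < ρ₂)
    (hgstar : 0 < gstar) (hγ : 0 < γ) (hη : 0 < η)
    (Lap : Matrix (Fin N) (Fin N) ℝ)
    (hLsym : Lap.IsSymm) (hLpsd : Lap.PosSemidef)
    (hL1 : Lap.mulVec (fun _ => 1) = 0)
    (hρ₂ : ∀ v : Fin N → ℝ, (∑ i, v i) = 0 → ρ₂ * (v ⬝ᵥ v) ≤ v ⬝ᵥ Lap.mulVec v)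
    (f : EuclideanSpace ℝ (Fin N × Fin d) → ℝ) (hf : ContDiff ℝ 2 f)
    (hHess : ∀ W v, μ * ‖v‖ ^ 2 ≤ ⟪fderiv ℝ (gradient f) W v, v⟫ ∧
      ⟪fderiv ℝ (gradient f) W v, v⟫ ≤ L * ‖v‖ ^ 2)
    (wstar : EuclideanSpace ℝ (Fin d))
    (Wstar : EuclideanSpace ℝ (Fin N × Fin d)) (hWstar : ∀ p, Wstar p = wstar p.2)
    (horth : ∀ u : EuclideanSpace ℝ (Fin d),
      ⟪gradient f Wstar, (WithLp.toLp 2 (fun p : Fin N × Fin d => u p.2) : EuclideanSpace ℝ (Fin N × Fin d))⟫ = 0)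
    (hgrad : ‖gradient f Wstar‖ ≤ Real.sqrt N * gstar)
    (𝒲 : Set (EuclideanSpace ℝ (Fin d))) (h𝒲ne : 𝒲.Nonempty)
    (h𝒲cl : IsClosed 𝒲) (h𝒲bd : Bornology.IsBounded 𝒲) (h𝒲cv : Convex ℝ 𝒲)
    (hwint : wstar ∈ interior 𝒲)
    (hζ : ζ = Metric.infDist wstar (frontier 𝒲)) (hζpos : 0 < ζ)
    (WN : Set (EuclideanSpace ℝ (Fin N × Fin d)))
    (hWN : ∀ W, W ∈ WN ↔ ∀ m : Fin N,
      (WithLp.toLp 2 (fun i : Fin d => W (m, i)) : EuclideanSpace ℝ (Fin d)) ∈ 𝒲)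
    (G : EuclideanSpace ℝ (Fin N × Fin d) → ℝ)
    (hG : ∀ W, G W = f W + (γ / (2 * η)) *
      ⟪W, Matrix.toEuclideanLin (Lap ⊗ₖ (1 : Matrix (Fin d) (Fin d) ℝ)) W⟫)
    (What : EuclideanSpace ℝ (Fin N × Fin d))
    (hmin : ∀ W, G What ≤ G W)
    (hratio : η / γ ≤ ζ * μ * ρ₂ / (Real.sqrt N * gstar * L)) :
    What ∈ WN ∧
    (∀ W ∈ WN, G What ≤ G W) ∧
    gradient G What = 0 ∧
    (1 / Real.sqrt N) * ‖What - Wstar‖ ≤ (gstar * L / (μ * ρ₂)) * (η / γ) := by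

  classical
  have hL0 : 0 < L := lt_of_lt_of_le hμ hμL
  have hNpos : (0:ℝ) < N := by exact_mod_cast Nat.lt_of_lt_of_le Nat.zero_lt_one hN
  have hsN : (0:ℝ) < Real.sqrt N := Real.sqrt_pos.2 hNpos
  -- the continuous linear version of the penalty operator
  set K' : EuclideanSpace ℝ (Fin N × Fin d) →L[ℝ] EuclideanSpace ℝ (Fin N × Fin d) :=
    LinearMap.toContinuousLinearMap
      (Matrix.toEuclideanLin (Lap ⊗ₖ (1 : Matrix (Fin d) (Fin d) ℝ))) with hK'
  have hK'app : ∀ v : EuclideanSpace ℝ (Fin N × Fin d),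
      K' v = Matrix.toEuclideanLin (Lap ⊗ₖ (1 : Matrix (Fin d) (Fin d) ℝ)) v :=
    fun v => rfl
  have hKsym' : ∀ v w : EuclideanSpace ℝ (Fin N × Fin d), ⟪K' v, w⟫ = ⟪v, K' w⟫ := by
    intro v w; rw [hK'app, hK'app]; exact Ksym Lap hLsym v w
  have hdf : Differentiable ℝ f := hf.differentiable (by norm_num)
  -- gradient of G
  have hGgrad : ∀ W : EuclideanSpace ℝ (Fin N × Fin d),
      HasGradientAt G (gradient f W + (γ / η) • K' W) W := by
    intro W
    have h1 : HasFDerivAt f (toDual ℝ _ (gradient f W)) W := (hdf W).hasGradientAt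
    have h2 : HasFDerivAt (fun W : EuclideanSpace ℝ (Fin N × Fin d) => ⟪W, K' W⟫)
        (toDual ℝ _ ((2:ℝ) • K' W)) W := quad_hasGradient K' hKsym' W
    have h3 : HasFDerivAt G
        (toDual ℝ _ (gradient f W) + (γ / (2*η)) • toDual ℝ _ ((2:ℝ) • K' W)) W := by
      have hfun : G = fun W => f W + (γ / (2*η)) * ⟪W, K' W⟫ := by
        funext W; rw [hG W]; rfl
      rw [hfun]
      exact h1.add (h2.const_mul (γ / (2*η)))
    have h4 : toDual ℝ (EuclideanSpace ℝ (Fin N × Fin d)) (gradient f W + (γ / η) • K' W)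
        = toDual ℝ _ (gradient f W) + (γ / (2*η)) • toDual ℝ _ ((2:ℝ) • K' W) := by
      apply ContinuousLinearMap.ext
      intro v
      simp only [ContinuousLinearMap.add_apply, ContinuousLinearMap.smul_apply, toDual_apply_apply,
        inner_add_left, real_inner_smul_left, smul_eq_mul]
      field_simp
    show HasFDerivAt G (toDual ℝ _ (gradient f W + (γ / η) • K' W)) W
    rw [h4]; exact h3
  -- stationarity
  have hloc : IsLocalMin G What := Filter.Eventually.of_forall hmin
  have hfd0 : toDual ℝ (EuclideanSpace ℝ (Fin N × Fin d))
      (gradient f What + (γ / η) • K' What) = 0 :=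
    hloc.hasFDerivAt_eq_zero (hGgrad What)
  have hstat : gradient f What + (γ / η) • K' What = 0 := by
    apply (toDual ℝ (EuclideanSpace ℝ (Fin N × Fin d))).injective
    rw [hfd0, map_zero]
  have hgradG0 : gradient G What = 0 := by
    have h5 := hGgrad What
    rw [hstat] at h5
    exact h5.gradient
  -- error decomposition
  set e : EuclideanSpace ℝ (Fin N × Fin d) := What - Wstar with he
  set ebar : EuclideanSpace ℝ (Fin d) := WithLp.toLp 2 (fun i => (∑ m, e (m, i)) / N) with hebar
  set epar : EuclideanSpace ℝ (Fin N × Fin d) := WithLp.toLp 2 (fun p : Fin N × Fin d => ebar p.2) with hepar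
  set eperp : EuclideanSpace ℝ (Fin N × Fin d) := e - epar with heperp
  have heapp : ∀ p : Fin N × Fin d, e p = What p - Wstar p := fun p => rfl
  have heperpapp : ∀ p : Fin N × Fin d, eperp p = e p - ebar p.2 := fun p => rfl
  have hsumperp : ∀ i, ∑ m, eperp (m, i) = 0 := by
    intro i
    simp only [heperpapp]
    rw [Finset.sum_sub_distrib, Finset.sum_const, Finset.card_univ, Fintype.card_fin]
    rw [hebar]
    simp only [nsmul_eq_mul]
    field_simp
    ring
  have hdecomp : e = epar + eperp := by rw [heperp]; abel
  -- operator facts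
  have hKepar : K' epar = 0 := by
    rw [hK'app, hepar]
    exact Kconsensus Lap hL1 ebar
  have hKWstar : K' Wstar = 0 := by
    have hWs : Wstar = (WithLp.toLp 2 (fun p : Fin N × Fin d => wstar p.2) : EuclideanSpace ℝ (Fin N × Fin d)) := by
      ext p; exact hWstar p
    rw [hK'app, hWs]
    exact Kconsensus Lap hL1 wstar
  have hKe : K' What = K' e := by
    rw [he, map_sub, hKWstar, sub_zero]
  have hKeperp : K' e = K' eperp := by
    rw [hdecomp, map_add, hKepar, zero_add]
  -- orthogonality facts for the gradient at the optimum
  have hgWepar : ⟪gradient f Wstar, epar⟫ = 0 := by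
    rw [hepar]; exact horth ebar
  -- stationarity in explicit form
  have hgWhat : gradient f What = -((γ / η) • K' e) := by
    rw [← hKe]
    have h6 : gradient f What + (γ / η) • K' What - (γ / η) • K' What
        = 0 - (γ / η) • K' What := by rw [hstat]
    simpa using h6
  -- (I) : ⟪Δ, epar⟫ = 0
  set Δ : EuclideanSpace ℝ (Fin N × Fin d) := gradient f What - gradient f Wstar with hΔ
  have hΔpar : ⟪Δ, epar⟫ = 0 := by
    rw [hΔ, inner_sub_left, hgWepar, hgWhat]
    have h7 : ⟪K' e, epar⟫ = 0 := by
      rw [hKsym', hKepar, inner_zero_right]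
    rw [inner_neg_left, real_inner_smul_left, h7]
    ring
  -- quadratic form bounds
  have hQ : ρ₂ * ‖eperp‖ ^ 2 ≤ ⟪eperp, K' eperp⟫ := by
    rw [hK'app]
    have h8 := Kquad Lap hρ₂ eperp hsumperp
    rwa [real_inner_self_eq_norm_sq] at h8
  have hKee : ⟪e, K' e⟫ = ⟪eperp, K' eperp⟫ := by
    rw [hKeperp]
    conv_lhs => rw [hdecomp]
    rw [inner_add_left, ← hKsym' epar eperp, hKepar]
    simp
  -- strong monotonicity
  have hmono : μ * ‖e‖ ^ 2 ≤ ⟪Δ, e⟫ := by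
    rw [hΔ, he]
    exact grad_strong_mono f hf (fun W v => (hHess W v).1) What Wstar
  -- key identity
  have hsum2 : ⟪Δ, e⟫ + (γ / η) * ⟪e, K' e⟫ = -⟪gradient f Wstar, eperp⟫ := by
    rw [hΔ, inner_sub_left, hgWhat, inner_neg_left, real_inner_smul_left,
      real_inner_comm (K' e) e]
    have h9 : ⟪gradient f Wstar, e⟫ = ⟪gradient f Wstar, eperp⟫ := by
      conv_lhs => rw [hdecomp]
      rw [inner_add_right, hgWepar, zero_add]
    rw [h9]
    ring
  -- Cauchy-Schwarz on the right side
  have hCS : -⟪gradient f Wstar, eperp⟫ ≤ Real.sqrt N * gstar * ‖eperp‖ := by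
    have h10 : |⟪gradient f Wstar, eperp⟫| ≤ ‖gradient f Wstar‖ * ‖eperp‖ :=
      abs_real_inner_le_norm _ _
    have h11 : ‖gradient f Wstar‖ * ‖eperp‖ ≤ Real.sqrt N * gstar * ‖eperp‖ :=
      mul_le_mul_of_nonneg_right hgrad (norm_nonneg _)
    have := neg_abs_le ⟪gradient f Wstar, eperp⟫
    linarith [abs_nonneg ⟪gradient f Wstar, eperp⟫]
  -- main inequality (II)
  have hIIa : μ * ‖e‖ ^ 2 + (γ / η) * (ρ₂ * ‖eperp‖ ^ 2) ≤ Real.sqrt N * gstar * ‖eperp‖ := by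
    have h12 : (γ / η) * (ρ₂ * ‖eperp‖ ^ 2) ≤ (γ / η) * ⟪e, K' e⟫ := by
      rw [hKee]
      exact mul_le_mul_of_nonneg_left hQ (le_of_lt (div_pos hγ hη))
    linarith
  -- bound on the orthogonal component
  have hbb : γ * ρ₂ * ‖eperp‖ ≤ Real.sqrt N * gstar * η := by
    rcases eq_or_lt_of_le (norm_nonneg eperp) with hb0 | hb0
    · rw [← hb0]
      have : (0:ℝ) ≤ Real.sqrt N * gstar * η := by positivity
      linarith
    · have h13 : γ * ρ₂ * ‖eperp‖ * ‖eperp‖ ≤ Real.sqrt N * gstar * η * ‖eperp‖ := by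
        have h14 : (γ / η) * (ρ₂ * ‖eperp‖ ^ 2) ≤ Real.sqrt N * gstar * ‖eperp‖ := by
          have h14a : (0:ℝ) ≤ μ * ‖e‖ ^ 2 := mul_nonneg hμ.le (sq_nonneg _)
          linarith
        have h15 := mul_le_mul_of_nonneg_right h14 hη.le
        have hη' : η ≠ 0 := ne_of_gt hη
        calc γ * ρ₂ * ‖eperp‖ * ‖eperp‖ = (γ / η) * (ρ₂ * ‖eperp‖ ^ 2) * η := by
              field_simp
          _ ≤ Real.sqrt N * gstar * ‖eperp‖ * η := h15
          _ = Real.sqrt N * gstar * η * ‖eperp‖ := by ring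
      exact (mul_le_mul_iff_of_pos_right hb0).1 h13
  -- (III) : Lipschitz step
  have hΔe : ⟪Δ, e⟫ = ⟪Δ, eperp⟫ := by
    conv_lhs => rw [hdecomp]
    rw [inner_add_right, hΔpar, zero_add]
  have hlip : ‖Δ‖ ≤ L * ‖e‖ := by
    rw [hΔ, he]
    exact grad_lipschitz f hf hL0.le
      (fun W v => le_trans (by positivity) (hHess W v).1)
      (fun W v => (hHess W v).2) What Wstar
  have hIII : μ * ‖e‖ ^ 2 ≤ L * ‖e‖ * ‖eperp‖ := by
    have h16 : ⟪Δ, eperp⟫ ≤ ‖Δ‖ * ‖eperp‖ := real_inner_le_norm _ _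
    have h17 : ‖Δ‖ * ‖eperp‖ ≤ L * ‖e‖ * ‖eperp‖ :=
      mul_le_mul_of_nonneg_right hlip (norm_nonneg _)
    rw [hΔe] at hmono
    linarith
  -- final distance bound
  have hfinal : ‖e‖ ≤ Real.sqrt N * gstar * L * η / (μ * ρ₂ * γ) := by
    rcases eq_or_lt_of_le (norm_nonneg e) with he0 | he0
    · rw [← he0]; positivity
    · rw [le_div_iff₀ (by positivity)]
      have h18 : μ * ‖e‖ ≤ L * ‖eperp‖ := by
        have h18a : μ * ‖e‖ * ‖e‖ ≤ L * ‖eperp‖ * ‖e‖ := by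
          have h18b : μ * ‖e‖ * ‖e‖ = μ * ‖e‖ ^ 2 := by ring
          have h18c : L * ‖eperp‖ * ‖e‖ = L * ‖e‖ * ‖eperp‖ := by ring
          rw [h18b, h18c]; exact hIII
        exact le_of_mul_le_mul_right h18a he0
      calc ‖e‖ * (μ * ρ₂ * γ) = (μ * ‖e‖) * (ρ₂ * γ) := by ring
        _ ≤ (L * ‖eperp‖) * (ρ₂ * γ) := mul_le_mul_of_nonneg_right h18 (by positivity)
        _ = L * (γ * ρ₂ * ‖eperp‖) := by ring
        _ ≤ L * (Real.sqrt N * gstar * η) := mul_le_mul_of_nonneg_left hbb hL0.le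
        _ = Real.sqrt N * gstar * L * η := by ring
  -- interiority
  have hζbound : Real.sqrt N * gstar * L * η / (μ * ρ₂ * γ) ≤ ζ := by
    rw [div_le_iff₀ (by positivity)]
    rw [div_le_div_iff₀ hγ (by positivity)] at hratio
    nlinarith [hratio]
  have heζ : ‖e‖ ≤ ζ := le_trans hfinal hζbound
  have hneuniv : 𝒲 ≠ Set.univ := by
    intro hU
    rw [hU, frontier_univ, Metric.infDist_empty] at hζ
    linarith
  have hWhatWN : What ∈ WN := by
    rw [hWN]
    intro m
    have hball := closedBall_subset_of_closed h𝒲cl (interior_subset hwint) hneuniv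
    apply hball
    rw [Metric.mem_closedBall, dist_eq_norm, ← hζ]
    have key : ∀ x : EuclideanSpace ℝ (Fin d), (∀ i, x i = e (m, i)) →
        ‖x‖ ≤ ‖e‖ := by
      intro x hx
      rw [EuclideanSpace.norm_eq, EuclideanSpace.norm_eq]
      apply Real.sqrt_le_sqrt
      calc ∑ i, ‖x i‖ ^ 2 = ∑ i, ‖e (m, i)‖ ^ 2 :=
            Finset.sum_congr rfl fun i _ => by rw [hx]
        _ ≤ ∑ p : Fin N × Fin d, ‖e p‖ ^ 2 := by
            rw [Fintype.sum_prod_type]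
            exact Finset.single_le_sum (f := fun m' => ∑ i, ‖e (m', i)‖ ^ 2)
              (fun m' _ => by positivity) (Finset.mem_univ m)
    refine le_trans (key _ fun i => ?_) heζ
    show What (m, i) - wstar i = e (m, i)
    rw [heapp, hWstar]
  refine ⟨hWhatWN, fun W _ => hmin W, hgradG0, ?_⟩
  rw [one_div, inv_mul_le_iff₀ hsN]
  refine le_trans hfinal (le_of_eq ?_)
  field_simp
end

section
/- Let D ≥ 1, let 𝒞 ⊆ ℝ^D be a nonempty closed convex set with metric projection Π, let 0 < μ ≤ L_G, let G : ℝ^D → ℝ be twice continuously differentiable with μ·I ⪯ ∇²G(z) ⪯ L_G·I for all z, and let η, γ > 0 satisfy η(μ + L_G) ≤ 2. On a probability space with a sub-σ-algebra 𝒢, let u and ū be 𝒢-measurable ℝ^D-valued random vectors, and let ε₁, ε₂ be square-integrable ℝ^D-valued random vectors with E[ε₁ | 𝒢] = 0, E[ε₂ | 𝒢] = 0, E[‖ε₁‖² | 𝒢] ≤ S₁, E[‖ε₂‖² | 𝒢] ≤ S₂, and E[⟨ε₁, ε₂⟩ | 𝒢] = 0 almost surely, for constants S₁, S₂ ≥ 0.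 Then, almost surely, E[ ‖Π(u − η∇G(u) + γε₁ − ηε₂) − Π(ū − η∇G(ū))‖² | 𝒢 ] ≤ (1 − μη)²·‖u − ū‖² + γ²·S₁ + η²·S₂. -/
open MeasureTheory
open scoped RealInnerProductSpace

open InnerProductSpace
set_option maxHeartbeats 1000000

section Aux
variable {E : Type*} [NormedAddCommGroup E] [InnerProductSpace ℝ E]

/-- Metric projection onto a nonempty closed convex set is nonexpansive. -/
lemma proj_nonexpansive [CompleteSpace E] {C : Set E} (hCne : C.Nonempty) (hCcv : Convex ℝ C)
    (proj : E → E) (hproj : ∀ x, proj x ∈ C ∧ ∀ y ∈ C, ‖x - proj x‖ ≤ ‖x - y‖) :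
    ∀ x y, ‖proj x - proj y‖ ≤ ‖x - y‖ := by
  have hne : Nonempty C := hCne.to_subtype
  have key : ∀ x, ∀ w ∈ C, ⟪x - proj x, w - proj x⟫ ≤ 0 := by
    intro x
    have h1 : ‖x - proj x‖ = ⨅ w : C, ‖x - w‖ := by
      apply le_antisymm
      · exact le_ciInf fun w => (hproj x).2 w w.2
      · exact ciInf_le ⟨0, fun r hr => by
          obtain ⟨w, rfl⟩ := hr; exact norm_nonneg _⟩ (⟨proj x, (hproj x).1⟩ : C)
    exact (norm_eq_iInf_iff_real_inner_le_zero hCcv (hproj x).1).mp h1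
  intro x y
  have h1 : ⟪x - proj x, proj y - proj x⟫ ≤ 0 := key x (proj y) (hproj y).1
  have h2 : ⟪y - proj y, proj x - proj y⟫ ≤ 0 := key y (proj x) (hproj x).1
  have h1' : 0 ≤ ⟪x - proj x, proj x - proj y⟫ := by
    have h := h1
    rw [show proj y - proj x = -(proj x - proj y) by abel, inner_neg_right] at h
    linarith
  have h3 : ‖proj x - proj y‖ ^ 2 ≤ ⟪x - y, proj x - proj y⟫ := by
    have hdecomp : x - y = (x - proj x) - (y - proj y) + (proj x - proj y) := by abel
    rw [hdecomp, inner_add_left, inner_sub_left, real_inner_self_eq_norm_sq]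
    linarith
  have h4 : ⟪x - y, proj x - proj y⟫ ≤ ‖x - y‖ * ‖proj x - proj y‖ := real_inner_le_norm _ _
  rcases eq_or_lt_of_le (norm_nonneg (proj x - proj y)) with h0 | h0
  · rw [← h0]; exact norm_nonneg _
  · nlinarith

/-- A symmetric operator whose quadratic form is bounded by `c‖v‖²` has norm at most `c`. -/
lemma symm_op_norm_bound (A : E →L[ℝ] E) (hsymm : ∀ v w, ⟪A v, w⟫ = ⟪A w, v⟫)
    {c : ℝ} (hc : 0 ≤ c) (hq : ∀ v, |⟪A v, v⟫| ≤ c * ‖v‖ ^ 2) :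
    ∀ x, ‖A x‖ ≤ c * ‖x‖ := by
  have polar : ∀ x y : E, 4 * ⟪A x, y⟫ = ⟪A (x + y), x + y⟫ - ⟪A (x - y), x - y⟫ := by
    intro x y
    simp only [map_add, map_sub, inner_add_left, inner_add_right, inner_sub_left,
      inner_sub_right]
    have := hsymm x y
    have := hsymm y x
    linarith
  have bound : ∀ x y : E, 4 * ⟪A x, y⟫ ≤ 2 * c * (‖x‖ ^ 2 + ‖y‖ ^ 2) := by
    intro x y
    have hp := polar x y
    have q1 := (abs_le.mp (hq (x + y))).2
    have q2 := (abs_le.mp (hq (x - y))).1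
    have hpar : ‖x + y‖ ^ 2 + ‖x - y‖ ^ 2 = 2 * (‖x‖ ^ 2 + ‖y‖ ^ 2) := by
      have := parallelogram_law_with_norm ℝ x y
      nlinarith [this]
    nlinarith
  intro x
  rcases eq_or_ne (A x) 0 with hAx | hAx
  · rw [hAx, norm_zero]; positivity
  rcases eq_or_ne x 0 with rfl | hx
  · simp at hAx
  have hAxn : 0 < ‖A x‖ := norm_pos_iff.mpr hAx
  have hxn : 0 < ‖x‖ := norm_pos_iff.mpr hx
  have := bound x ((‖x‖ / ‖A x‖) • A x)
  rw [real_inner_smul_right, real_inner_self_eq_norm_sq, norm_smul] at this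
  have habs : ‖‖x‖ / ‖A x‖‖ = ‖x‖ / ‖A x‖ := by
    rw [Real.norm_eq_abs, abs_of_pos (by positivity)]
  rw [habs] at this
  have hkey : 4 * (‖x‖ / ‖A x‖ * ‖A x‖ ^ 2) = 4 * ‖x‖ * ‖A x‖ := by
    field_simp
  have h2 : (‖x‖ / ‖A x‖ * ‖A x‖) ^ 2 = ‖x‖ ^ 2 := by field_simp
  rw [hkey, h2] at this
  nlinarith

end Aux

section Contraction
variable {E : Type*} [NormedAddCommGroup E] [InnerProductSpace ℝ E] [CompleteSpace E]

lemma gradient_eq_comp (G : E → ℝ) :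
    gradient G = fun x => (toDual ℝ E).symm.toContinuousLinearEquiv.toContinuousLinearMap
      (fderiv ℝ G x) := rfl

/-- symmetry of `fderiv ℝ (gradient G)` for `C²` functions. -/
lemma hessian_symm {G : E → ℝ} (hG : ContDiff ℝ 2 G) (z : E) (v w : E) :
    ⟪fderiv ℝ (gradient G) z v, w⟫ = ⟪fderiv ℝ (gradient G) z w, v⟫ := by
  set L := (toDual ℝ E).symm.toContinuousLinearEquiv.toContinuousLinearMap with hL
  have hG1 : ContDiff ℝ 1 (fderiv ℝ G) := hG.fderiv_right (le_refl 2)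
  have hdiff : DifferentiableAt ℝ (fderiv ℝ G) z := hG1.differentiable (by norm_num) z
  have hcomp : fderiv ℝ (gradient G) z = L.comp (fderiv ℝ (fderiv ℝ G) z) := by
    rw [gradient_eq_comp]
    rw [show (fun x => L (fderiv ℝ G x)) = L ∘ fderiv ℝ G from rfl]
    rw [fderiv_comp z L.differentiableAt hdiff, L.fderiv]
  have hsymm : ∀ v w, fderiv ℝ (fderiv ℝ G) z v w = fderiv ℝ (fderiv ℝ G) z w v := by
    intro v w
    exact second_derivative_symmetric
      (f := G) (f' := fderiv ℝ G) (f'' := fderiv ℝ (fderiv ℝ G) z)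
      (fun y => ((hG.differentiable (by norm_num)) y).hasFDerivAt)
      hdiff.hasFDerivAt v w
  have happ : ∀ v w, (⟪L ((fderiv ℝ (fderiv ℝ G) z) v), w⟫ : ℝ)
      = fderiv ℝ (fderiv ℝ G) z v w := by
    intro v w
    rw [hL]
    simp only [LinearIsometryEquiv.coe_toContinuousLinearEquiv,
      ContinuousLinearEquiv.coe_coe, LinearIsometryEquiv.coe_toContinuousLinearEquiv]
    exact toDual_symm_apply
  rw [hcomp]
  simp only [ContinuousLinearMap.coe_comp', Function.comp_apply]
  rw [happ, happ, hsymm]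


/-- One-step gradient descent contraction for a strongly convex smooth map. -/
lemma grad_step_contraction {G : E → ℝ} (hG : ContDiff ℝ 2 G)
    {μ LG η : ℝ} (hμ : 0 < μ) (hμL : μ ≤ LG) (hη : 0 < η) (hstep : η * (μ + LG) ≤ 2)
    (hHess : ∀ z v, μ * ‖v‖ ^ 2 ≤ ⟪fderiv ℝ (gradient G) z v, v⟫ ∧
      ⟪fderiv ℝ (gradient G) z v, v⟫ ≤ LG * ‖v‖ ^ 2)
    (x y : E) :
    ‖(x - η • gradient G x) - (y - η • gradient G y)‖ ≤ (1 - μ * η) * ‖x - y‖ := by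
  have hημ : η * μ ≤ 1 := by nlinarith
  have hc : (0:ℝ) ≤ 1 - μ * η := by nlinarith
  set T : E → E := fun z => z - η • gradient G z with hT
  have hgdiff : Differentiable ℝ (gradient G) := by
    rw [gradient_eq_comp]
    exact ((toDual ℝ E).symm.toContinuousLinearEquiv.toContinuousLinearMap.differentiable).comp
      ((hG.fderiv_right (m := 1) (le_refl 2)).differentiable (by norm_num))
  set A : E → E →L[ℝ] E := fun z =>
    ContinuousLinearMap.id ℝ E - η • fderiv ℝ (gradient G) z with hA
  have hTderiv : ∀ z, HasFDerivAt T (A z) z := by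
    intro z
    exact (hasFDerivAt_id z).sub (((hgdiff z).hasFDerivAt).const_smul η)
  have hAsymm : ∀ z v w, ⟪A z v, w⟫ = ⟪A z w, v⟫ := by
    intro z v w
    simp only [hA, ContinuousLinearMap.sub_apply, ContinuousLinearMap.id_apply,
      ContinuousLinearMap.smul_apply, inner_sub_left, inner_smul_left,
      RCLike.conj_to_real]
    rw [hessian_symm hG z v w, real_inner_comm v w]
  have hAq : ∀ z v, |⟪A z v, v⟫| ≤ (1 - μ * η) * ‖v‖ ^ 2 := by
    intro z v
    have h1 := (hHess z v).1
    have h2 := (hHess z v).2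
    have : ⟪A z v, v⟫ = ‖v‖ ^ 2 - η * ⟪fderiv ℝ (gradient G) z v, v⟫ := by
      simp only [hA, ContinuousLinearMap.sub_apply, ContinuousLinearMap.id_apply,
        ContinuousLinearMap.smul_apply, inner_sub_left, inner_smul_left,
        RCLike.conj_to_real, real_inner_self_eq_norm_sq]
    rw [this, abs_le]
    constructor <;> nlinarith [norm_nonneg v, sq_nonneg ‖v‖]
  have hAnorm : ∀ z, ‖A z‖ ≤ 1 - μ * η := by
    intro z
    exact ContinuousLinearMap.opNorm_le_bound _ hc
      (symm_op_norm_bound (A z) (hAsymm z) hc (hAq z))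
  have := Convex.norm_image_sub_le_of_norm_hasFDerivWithin_le
    (f := T) (f' := A) (s := Set.univ) (C := 1 - μ * η)
    (fun z _ => (hTderiv z).hasFDerivWithinAt)
    (fun z _ => hAnorm z) convex_univ (Set.mem_univ y) (Set.mem_univ x)
  simpa using this

end Contraction

section CE
variable {α : Type*} {m m0 : MeasurableSpace α} {μ : Measure α}
variable {E F : Type*} [NormedAddCommGroup E] [NormedSpace ℝ E] [CompleteSpace E]
  [NormedAddCommGroup F] [NormedSpace ℝ F] [CompleteSpace F]

/-- Conditional expectation commutes with continuous linear maps. -/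
lemma condexp_clm (hm : m ≤ m0) [SigmaFinite (μ.trim hm)] (L : E →L[ℝ] F)
    {f : α → E} (hf : Integrable f μ) :
    μ[fun a => L (f a)|m] =ᵐ[μ] fun a => L ((μ[f|m]) a) := by
  refine (ae_eq_condExp_of_forall_setIntegral_eq hm (L.integrable_comp hf)
    (fun s _ _ => (L.integrable_comp integrable_condExp).integrableOn)
    (fun s hs hμs => ?_)
    (StronglyMeasurable.aestronglyMeasurable
      (L.continuous.comp_stronglyMeasurable stronglyMeasurable_condExp))).symm
  rw [L.integral_comp_comm integrable_condExp.integrableOn,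
    L.integral_comp_comm hf.integrableOn, setIntegral_condExp hm hf hs]

/-- Conditional expectation pulls out real constants (function form). -/
lemma condexp_const_mul {α : Type*} {m m0 : MeasurableSpace α} {μ : Measure α}
    (r : ℝ) (f : α → ℝ) :
    μ[fun a => r * f a|m] =ᵐ[μ] fun a => r * (μ[f|m]) a := by
  have h : (fun a => r * f a) = r • f := by funext a; simp [smul_eq_mul]
  rw [h]
  filter_upwards [condExp_smul (μ := μ) (m := m) r f] with a ha
  rw [ha]
  simp [smul_eq_mul]

end CE

lemma euclidean_coord_le {D : ℕ} (x : EuclideanSpace ℝ (Fin D)) (i : Fin D) : ‖x i‖ ≤ ‖x‖ := by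
  rw [EuclideanSpace.norm_eq]
  calc ‖x i‖ = Real.sqrt (‖x i‖ ^ 2) := by rw [Real.sqrt_sq (norm_nonneg _)]
  _ ≤ Real.sqrt (∑ j, ‖x j‖ ^ 2) := Real.sqrt_le_sqrt (Finset.single_le_sum
      (fun j _ => sq_nonneg ‖x j‖) (Finset.mem_univ i))

section Zero
variable {D : ℕ} {α : Type*} {m m0 : MeasurableSpace α} {μ : Measure α} [IsFiniteMeasure μ]

/-- Conditionally-zero-mean noise is conditionally orthogonal to bounded measurable vectors. -/
lemma condexp_inner_zero (hm : m ≤ m0) [SigmaFinite (μ.trim hm)]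
    {c ε : α → EuclideanSpace ℝ (Fin D)}
    (hc : StronglyMeasurable[m] c) {B : ℝ} (hcB : ∀ a, ‖c a‖ ≤ B)
    (hε : Integrable ε μ) (hεmean : μ[ε|m] =ᵐ[μ] 0) :
    μ[fun a => (⟪c a, ε a⟫ : ℝ)|m] =ᵐ[μ] 0 := by
  have hrw : (fun a => (⟪c a, ε a⟫ : ℝ)) = fun a => ∑ i, c a i * ε a i := by
    funext a
    simp [PiLp.inner_apply, RCLike.inner_apply, mul_comm]
  have hεi : ∀ i : Fin D, Integrable (fun a => ε a i) μ := fun i =>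
    (EuclideanSpace.proj i : EuclideanSpace ℝ (Fin D) →L[ℝ] ℝ).integrable_comp hε
  have hci : ∀ i : Fin D, StronglyMeasurable[m] (fun a => c a i) := fun i =>
    (EuclideanSpace.proj i :
      EuclideanSpace ℝ (Fin D) →L[ℝ] ℝ).continuous.comp_stronglyMeasurable hc
  have hint : ∀ i : Fin D, Integrable (fun a => c a i * ε a i) μ := fun i =>
    (hεi i).bdd_mul ((hci i).mono hm).aestronglyMeasurable
      (Filter.Eventually.of_forall fun a => le_trans (euclidean_coord_le (c a) i) (hcB a))
  have hεi0 : ∀ i : Fin D, μ[fun a => ε a i|m] =ᵐ[μ] 0 := by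
    intro i
    refine (condexp_clm hm (EuclideanSpace.proj i) hε).trans ?_
    filter_upwards [hεmean] with a ha
    simp [ha]
  have hrw2 : (fun a => ∑ i, c a i * ε a i)
      = ∑ i : Fin D, (fun a => c a i * ε a i) := by
    funext a; simp [Finset.sum_apply]
  rw [hrw, hrw2]
  refine (condExp_finsetSum (fun i _ => hint i) m).trans ?_
  have hterm : ∀ i : Fin D, μ[fun a => c a i * ε a i|m] =ᵐ[μ] 0 := by
    intro i
    refine (condExp_stronglyMeasurable_mul_of_bound hm (hci i) (hεi i) B
      (Filter.Eventually.of_forall fun a =>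
        le_trans (euclidean_coord_le (c a) i) (hcB a))).trans ?_
    filter_upwards [hεi0 i] with a ha
    simp [ha]
  have : ∀ᵐ a ∂μ, ∀ i : Fin D, (μ[fun a => c a i * ε a i|m]) a = 0 :=
    (ae_all_iff).mpr fun i => hterm i
  filter_upwards [this] with a ha
  simp only [Finset.sum_apply, Pi.zero_apply]
  exact Finset.sum_eq_zero fun i _ => ha i

end Zero

section Key
variable {D : ℕ}

local notation "E" => EuclideanSpace ℝ (Fin D)

lemma key_step {μ LG η γ S₁ S₂ : ℝ} (hμ : 0 < μ) (hμL : μ ≤ LG)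
    (hη : 0 < η) (hγ : 0 < γ) (hstep : η * (μ + LG) ≤ 2)
    (hS₁ : 0 ≤ S₁) (hS₂ : 0 ≤ S₂)
    {C : Set E} (hCne : C.Nonempty) (hCcv : Convex ℝ C)
    (proj : E → E)
    (hproj : ∀ x, proj x ∈ C ∧ ∀ y ∈ C, ‖x - proj x‖ ≤ ‖x - y‖)
    {G : E → ℝ} (hG : ContDiff ℝ 2 G)
    (hHess : ∀ z v, μ * ‖v‖ ^ 2 ≤ ⟪fderiv ℝ (gradient G) z v, v⟫ ∧
      ⟪fderiv ℝ (gradient G) z v, v⟫ ≤ LG * ‖v‖ ^ 2)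
    {Ω : Type*} {m0 : MeasurableSpace Ω} (P : Measure Ω) [IsProbabilityMeasure P]
    (m : MeasurableSpace Ω) (hm : m ≤ m0)
    (v vbar : Ω → E)
    (hv : StronglyMeasurable[m] v) (hvbar : StronglyMeasurable[m] vbar)
    (k : ℝ) (hk : ∀ ω, ‖v ω - vbar ω‖ ≤ k)
    (ε₁ ε₂ : Ω → E)
    (hε₁2 : MemLp ε₁ 2 P) (hε₂2 : MemLp ε₂ 2 P)
    (hε₁mean : P[ε₁|m] =ᵐ[P] 0)
    (hε₂mean : P[ε₂|m] =ᵐ[P] 0)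
    (hε₁var : P[fun ω => ‖ε₁ ω‖ ^ 2|m] ≤ᵐ[P] fun _ => S₁)
    (hε₂var : P[fun ω => ‖ε₂ ω‖ ^ 2|m] ≤ᵐ[P] fun _ => S₂)
    (huncorr : P[fun ω => (⟪ε₁ ω, ε₂ ω⟫ : ℝ)|m] =ᵐ[P] 0) :
    Integrable (fun ω => ‖proj (v ω - η • gradient G (v ω) + γ • ε₁ ω - η • ε₂ ω)
          - proj (vbar ω - η • gradient G (vbar ω))‖ ^ 2) P ∧
    P[fun ω => ‖proj (v ω - η • gradient G (v ω) + γ • ε₁ ω - η • ε₂ ω)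
          - proj (vbar ω - η • gradient G (vbar ω))‖ ^ 2|m]
      ≤ᵐ[P] fun ω => (1 - μ * η) ^ 2 * ‖v ω - vbar ω‖ ^ 2 + γ ^ 2 * S₁ + η ^ 2 * S₂ := by
  have hημ : η * μ ≤ 1 := by nlinarith
  have hc1 : (0:ℝ) ≤ 1 - μ * η := by nlinarith
  -- nonemptiness of Ω and nonnegativity of k
  have hΩ : Nonempty Ω := by
    by_contra h
    rw [not_nonempty_iff] at h
    have h1 : P Set.univ = 1 := measure_univ
    rw [Set.univ_eq_empty_iff.mpr h, measure_empty] at h1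
    exact zero_ne_one h1
  have hk0 : (0:ℝ) ≤ k := le_trans (norm_nonneg _) (hk (Classical.arbitrary Ω))
  -- abbreviations
  set T : E → E := fun z => z - η • gradient G z with hT
  set n : Ω → E := fun ω => γ • ε₁ ω - η • ε₂ ω with hn
  set c : Ω → E := fun ω => T (v ω) - T (vbar ω) with hc
  have hform : ∀ (x : E) (ω : Ω), x - η • gradient G x + γ • ε₁ ω - η • ε₂ ω
      = T x + n ω := by intro x ω; simp only [hT, hn]; abel
  -- contraction
  have hcontr : ∀ ω, ‖c ω‖ ≤ (1 - μ * η) * ‖v ω - vbar ω‖ := fun ω =>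
    grad_step_contraction hG hμ hμL hη hstep hHess (v ω) (vbar ω)
  have hcB : ∀ ω, ‖c ω‖ ≤ k := by
    intro ω
    refine (hcontr ω).trans ?_
    calc (1 - μ * η) * ‖v ω - vbar ω‖ ≤ 1 * ‖v ω - vbar ω‖ :=
        mul_le_mul_of_nonneg_right (by nlinarith) (norm_nonneg _)
    _ ≤ k := by rw [one_mul]; exact hk ω
  -- continuity / measurability
  have hgradcont : Continuous (gradient G) := by
    rw [gradient_eq_comp]
    have hG1 : ContDiff ℝ 1 (fderiv ℝ G) := hG.fderiv_right (le_refl 2)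
    exact ((toDual ℝ (EuclideanSpace ℝ (Fin D))).symm.toContinuousLinearEquiv.toContinuousLinearMap.continuous).comp
      hG1.continuous
  have hTcont : Continuous T := continuous_id.sub (hgradcont.const_smul η)
  have hprojne := proj_nonexpansive hCne hCcv proj hproj
  have hprojcont : Continuous proj := by
    refine (LipschitzWith.of_dist_le_mul (K := 1) fun x y => ?_).continuous
    rw [dist_eq_norm, dist_eq_norm]
    simpa using hprojne x y
  have hc_meas : StronglyMeasurable[m] c :=
    (hTcont.comp_stronglyMeasurable hv).sub (hTcont.comp_stronglyMeasurable hvbar)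
  -- noise integrability
  have hε₁int : Integrable ε₁ P := hε₁2.integrable one_le_two
  have hε₂int : Integrable ε₂ P := hε₂2.integrable one_le_two
  have hn2 : MemLp n 2 P := (hε₁2.const_smul γ).sub (hε₂2.const_smul η)
  have hnint : Integrable n P := hn2.integrable one_le_two
  have hn_sq_int : Integrable (fun ω => ‖n ω‖ ^ 2) P := hn2.norm.integrable_sq
  have hε₁sq_int : Integrable (fun ω => ‖ε₁ ω‖ ^ 2) P := hε₁2.norm.integrable_sq
  have hε₂sq_int : Integrable (fun ω => ‖ε₂ ω‖ ^ 2) P := hε₂2.norm.integrable_sq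
  have hc_aesm : AEStronglyMeasurable[m0] c P := (hc_meas.mono hm).aestronglyMeasurable
  have hinner_int : ∀ (w : Ω → E), MemLp w 2 P → Integrable w P →
      Integrable (fun ω => (⟪c ω, w ω⟫ : ℝ)) P := by
    intro w hw2 hwint
    refine (hwint.norm.const_mul k).mono' (hc_aesm.inner hw2.aestronglyMeasurable) ?_
    refine Filter.Eventually.of_forall fun ω => ?_
    rw [Real.norm_eq_abs]
    calc |⟪c ω, w ω⟫| ≤ ‖c ω‖ * ‖w ω‖ := abs_real_inner_le_norm _ _
    _ ≤ k * ‖w ω‖ := by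
        have := hcB ω; have := norm_nonneg (w ω); nlinarith [norm_nonneg (c ω)]
  have hcn_int : Integrable (fun ω => (⟪c ω, n ω⟫ : ℝ)) P := hinner_int n hn2 hnint
  have hcε₁_int : Integrable (fun ω => (⟪c ω, ε₁ ω⟫ : ℝ)) P := hinner_int ε₁ hε₁2 hε₁int
  have hcε₂_int : Integrable (fun ω => (⟪c ω, ε₂ ω⟫ : ℝ)) P := hinner_int ε₂ hε₂2 hε₂int
  have hcsq_meas : StronglyMeasurable[m] (fun ω => ‖c ω‖ ^ 2) := hc_meas.norm.pow 2
  have hc_sq_int : Integrable (fun ω => ‖c ω‖ ^ 2) P := by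
    refine (integrable_const (k ^ 2)).mono' (hcsq_meas.mono hm).aestronglyMeasurable ?_
    refine Filter.Eventually.of_forall fun ω => ?_
    rw [Real.norm_eq_abs, abs_of_nonneg (by positivity)]
    nlinarith [hcB ω, norm_nonneg (c ω)]
  -- the dominating function Y
  set Y : Ω → ℝ := fun ω => ‖c ω‖ ^ 2 + (2 * ⟪c ω, n ω⟫ + ‖n ω‖ ^ 2) with hY
  have hY_int : Integrable Y P := hc_sq_int.add ((hcn_int.const_mul 2).add hn_sq_int)
  -- pointwise domination
  set X' : Ω → ℝ := fun ω => ‖proj (v ω - η • gradient G (v ω) + γ • ε₁ ω - η • ε₂ ω)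
          - proj (vbar ω - η • gradient G (vbar ω))‖ ^ 2 with hX'
  have hpt : ∀ ω, X' ω ≤ Y ω := by
    intro ω
    have h1 : ‖proj (v ω - η • gradient G (v ω) + γ • ε₁ ω - η • ε₂ ω)
        - proj (vbar ω - η • gradient G (vbar ω))‖
        ≤ ‖c ω + n ω‖ := by
      have := hprojne (v ω - η • gradient G (v ω) + γ • ε₁ ω - η • ε₂ ω)
        (vbar ω - η • gradient G (vbar ω))
      refine this.trans (le_of_eq ?_)
      rw [hform (v ω) ω]
      congr 1
      simp only [hc, hT]
      abel
    have h2 : ‖c ω + n ω‖ ^ 2 = ‖c ω‖ ^ 2 + 2 * ⟪c ω, n ω⟫ + ‖n ω‖ ^ 2 :=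
      norm_add_sq_real _ _
    have h3 : X' ω ≤ ‖c ω + n ω‖ ^ 2 := by
      have h0 := norm_nonneg (proj (v ω - η • gradient G (v ω) + γ • ε₁ ω - η • ε₂ ω)
        - proj (vbar ω - η • gradient G (vbar ω)))
      simp only [hX']
      nlinarith
    simp only [hY]
    nlinarith
  have hX'_meas : AEStronglyMeasurable[m0] X' P := by
    have ha : AEStronglyMeasurable[m0] (fun ω => v ω - η • gradient G (v ω) + γ • ε₁ ω - η • ε₂ ω) P := by
      have h1 : AEStronglyMeasurable[m0] (fun ω => T (v ω)) P :=
        ((hTcont.comp_stronglyMeasurable hv).mono hm).aestronglyMeasurable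
      have h2 : AEStronglyMeasurable[m0] n P := hn2.aestronglyMeasurable
      have := h1.add h2
      refine this.congr (Filter.Eventually.of_forall fun ω => ?_)
      simp only [Pi.add_apply]
      exact (hform (v ω) ω).symm
    have hb : AEStronglyMeasurable[m0] (fun ω => vbar ω - η • gradient G (vbar ω)) P :=
      ((hTcont.comp_stronglyMeasurable hvbar).mono hm).aestronglyMeasurable
    have hd : AEStronglyMeasurable[m0] (fun ω =>
        ‖proj (v ω - η • gradient G (v ω) + γ • ε₁ ω - η • ε₂ ω)
          - proj (vbar ω - η • gradient G (vbar ω))‖) P :=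
      ((hprojcont.comp_aestronglyMeasurable ha).sub
        (hprojcont.comp_aestronglyMeasurable hb)).norm
    have : X' = fun ω => ‖proj (v ω - η • gradient G (v ω) + γ • ε₁ ω - η • ε₂ ω)
          - proj (vbar ω - η • gradient G (vbar ω))‖ *
        ‖proj (v ω - η • gradient G (v ω) + γ • ε₁ ω - η • ε₂ ω)
          - proj (vbar ω - η • gradient G (vbar ω))‖ := by
      funext ω; simp only [hX']; ring
    rw [this]
    exact hd.mul hd
  have hX'_int : Integrable X' P := by
    refine hY_int.mono' hX'_meas (Filter.Eventually.of_forall fun ω => ?_)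
    rw [Real.norm_eq_abs, abs_of_nonneg (by positivity)]
    exact hpt ω
  refine ⟨hX'_int, ?_⟩
  -- conditional expectation computations
  have step1 : P[X'|m] ≤ᵐ[P] P[Y|m] :=
    condExp_mono hX'_int hY_int (Filter.Eventually.of_forall hpt)
  have step2 : P[Y|m] =ᵐ[P] P[fun ω => ‖c ω‖ ^ 2|m]
      + (P[fun ω => 2 * ⟪c ω, n ω⟫|m] + P[fun ω => ‖n ω‖ ^ 2|m]) := by
    refine (condExp_add hc_sq_int ((hcn_int.const_mul 2).add hn_sq_int) m).trans ?_
    filter_upwards [condExp_add (hcn_int.const_mul 2) hn_sq_int m] with ω hω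
    simp only [Pi.add_apply] at hω ⊢
    rw [hω]
  have stepA : P[fun ω => ‖c ω‖ ^ 2|m] = fun ω => ‖c ω‖ ^ 2 :=
    condExp_of_stronglyMeasurable hm hcsq_meas hc_sq_int
  have stepB : P[fun ω => (⟪c ω, n ω⟫ : ℝ)|m] =ᵐ[P] 0 := by
    have hsplit : (fun ω => (⟪c ω, n ω⟫ : ℝ))
        = fun ω => γ * ⟪c ω, ε₁ ω⟫ - η * ⟪c ω, ε₂ ω⟫ := by
      funext ω
      simp only [hn]
      rw [inner_sub_right, real_inner_smul_right, real_inner_smul_right]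
    rw [hsplit]
    have h1 : P[fun ω => (⟪c ω, ε₁ ω⟫ : ℝ)|m] =ᵐ[P] 0 :=
      condexp_inner_zero hm hc_meas hcB hε₁int hε₁mean
    have h2 : P[fun ω => (⟪c ω, ε₂ ω⟫ : ℝ)|m] =ᵐ[P] 0 :=
      condexp_inner_zero hm hc_meas hcB hε₂int hε₂mean
    have hsub : P[fun ω => γ * ⟪c ω, ε₁ ω⟫ - η * ⟪c ω, ε₂ ω⟫|m]
        =ᵐ[P] P[fun ω => γ * ⟪c ω, ε₁ ω⟫|m] - P[fun ω => η * ⟪c ω, ε₂ ω⟫|m] :=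
      condExp_sub (hcε₁_int.const_mul γ) (hcε₂_int.const_mul η) m
    have hm1 : P[fun ω => γ * ⟪c ω, ε₁ ω⟫|m]
        =ᵐ[P] fun ω => γ * (P[fun ω => (⟪c ω, ε₁ ω⟫ : ℝ)|m]) ω :=
      condexp_const_mul γ _
    have hm2 : P[fun ω => η * ⟪c ω, ε₂ ω⟫|m]
        =ᵐ[P] fun ω => η * (P[fun ω => (⟪c ω, ε₂ ω⟫ : ℝ)|m]) ω :=
      condexp_const_mul η _
    filter_upwards [hsub, hm1, hm2, h1, h2] with ω e1 e2 e3 e4 e5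
    simp only [Pi.sub_apply, Pi.zero_apply] at *
    rw [e1, e2, e3, e4, e5]
    ring
  have stepB2 : P[fun ω => 2 * ⟪c ω, n ω⟫|m] =ᵐ[P] 0 := by
    have h := condexp_const_mul (μ := P) (m := m) 2 (fun ω => (⟪c ω, n ω⟫ : ℝ))
    filter_upwards [h, stepB] with ω e1 e2
    simp only [Pi.zero_apply] at *
    rw [e1, e2]
    ring
  have stepC : P[fun ω => ‖n ω‖ ^ 2|m] ≤ᵐ[P] fun _ => γ ^ 2 * S₁ + η ^ 2 * S₂ := by
    have hns : (fun ω => ‖n ω‖ ^ 2) = fun ω =>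
        γ ^ 2 * ‖ε₁ ω‖ ^ 2 - 2 * γ * η * ⟪ε₁ ω, ε₂ ω⟫ + η ^ 2 * ‖ε₂ ω‖ ^ 2 := by
      funext ω
      simp only [hn]
      rw [norm_sub_sq_real, norm_smul, norm_smul, real_inner_smul_left,
        real_inner_smul_right]
      simp only [Real.norm_eq_abs, mul_pow, sq_abs]
      ring
    rw [hns]
    have h12_int : Integrable (fun ω => (⟪ε₁ ω, ε₂ ω⟫ : ℝ)) P := by
      refine ((hε₁sq_int.add hε₂sq_int).div_const 2).mono'
        (hε₁2.aestronglyMeasurable.inner hε₂2.aestronglyMeasurable)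
        (Filter.Eventually.of_forall fun ω => ?_)
      rw [Real.norm_eq_abs]
      simp only [Pi.add_apply]
      have h1 := abs_real_inner_le_norm (ε₁ ω) (ε₂ ω)
      nlinarith [sq_nonneg (‖ε₁ ω‖ - ‖ε₂ ω‖), norm_nonneg (ε₁ ω), norm_nonneg (ε₂ ω)]
    have hadd : P[fun ω => γ ^ 2 * ‖ε₁ ω‖ ^ 2 - 2 * γ * η * ⟪ε₁ ω, ε₂ ω⟫
          + η ^ 2 * ‖ε₂ ω‖ ^ 2|m]
        =ᵐ[P] P[fun ω => γ ^ 2 * ‖ε₁ ω‖ ^ 2 - 2 * γ * η * ⟪ε₁ ω, ε₂ ω⟫|m]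
          + P[fun ω => η ^ 2 * ‖ε₂ ω‖ ^ 2|m] :=
      condExp_add ((hε₁sq_int.const_mul _).sub (h12_int.const_mul _)) (hε₂sq_int.const_mul _) m
    have hsub : P[fun ω => γ ^ 2 * ‖ε₁ ω‖ ^ 2 - 2 * γ * η * ⟪ε₁ ω, ε₂ ω⟫|m]
        =ᵐ[P] P[fun ω => γ ^ 2 * ‖ε₁ ω‖ ^ 2|m] - P[fun ω => 2 * γ * η * ⟪ε₁ ω, ε₂ ω⟫|m] :=
      condExp_sub (hε₁sq_int.const_mul _) (h12_int.const_mul _) m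
    have hsm1 : P[fun ω => γ ^ 2 * ‖ε₁ ω‖ ^ 2|m]
        =ᵐ[P] fun ω => γ ^ 2 * (P[fun ω => ‖ε₁ ω‖ ^ 2|m]) ω := condexp_const_mul _ _
    have hsm2 : P[fun ω => 2 * γ * η * ⟪ε₁ ω, ε₂ ω⟫|m]
        =ᵐ[P] fun ω => 2 * γ * η * (P[fun ω => (⟪ε₁ ω, ε₂ ω⟫ : ℝ)|m]) ω :=
      condexp_const_mul _ _
    have hsm3 : P[fun ω => η ^ 2 * ‖ε₂ ω‖ ^ 2|m]
        =ᵐ[P] fun ω => η ^ 2 * (P[fun ω => ‖ε₂ ω‖ ^ 2|m]) ω := condexp_const_mul _ _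
    filter_upwards [hadd, hsub, hsm1, hsm2, hsm3, hε₁var, hε₂var, huncorr]
      with ω e1 e2 e3 e4 e5 b1 b2 b3
    simp only [Pi.add_apply, Pi.sub_apply, Pi.zero_apply] at *
    rw [e1, e2, e3, e4, e5, b3]
    have hb1 : γ ^ 2 * (P[fun ω => ‖ε₁ ω‖ ^ 2|m]) ω ≤ γ ^ 2 * S₁ :=
      mul_le_mul_of_nonneg_left b1 (by positivity)
    have hb2 : η ^ 2 * (P[fun ω => ‖ε₂ ω‖ ^ 2|m]) ω ≤ η ^ 2 * S₂ :=
      mul_le_mul_of_nonneg_left b2 (by positivity)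
    linarith
  -- combine
  filter_upwards [step1, step2, stepB2, stepC] with ω e1 e2 e3 e4
  have e5 : (P[fun ω => ‖c ω‖ ^ 2|m]) ω = ‖c ω‖ ^ 2 := by rw [stepA]
  simp only [Pi.add_apply, Pi.zero_apply] at *
  have hfinal : ‖c ω‖ ^ 2 ≤ (1 - μ * η) ^ 2 * ‖v ω - vbar ω‖ ^ 2 := by
    nlinarith [hcontr ω, norm_nonneg (c ω), norm_nonneg (v ω - vbar ω)]
  calc (P[X'|m]) ω ≤ (P[Y|m]) ω := e1
  _ = ‖c ω‖ ^ 2 + ((P[fun ω => 2 * ⟪c ω, n ω⟫|m]) ω + (P[fun ω => ‖n ω‖ ^ 2|m]) ω) := by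
      rw [e2, e5]
  _ ≤ (1 - μ * η) ^ 2 * ‖v ω - vbar ω‖ ^ 2 + (0 + (γ ^ 2 * S₁ + η ^ 2 * S₂)) := by
      rw [e3]; exact add_le_add hfinal (add_le_add le_rfl e4)
  _ = (1 - μ * η) ^ 2 * ‖v ω - vbar ω‖ ^ 2 + γ ^ 2 * S₁ + η ^ 2 * S₂ := by ring

end Key


/-- **One-step contraction with noisy consensus and noisy gradients** (proof of bound
(27) of Theorem 1, Appendix B.I): for `𝒢`-measurable `u, ū`, conditionally zero-mean,
variance-bounded, conditionally uncorrelated noises `ε₁, ε₂`, and a projected gradient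
step on a `μ`-strongly convex, `L_G`-smooth `G` with `η(μ + L_G) ≤ 2`,
`E[‖Π(u − η∇G(u) + γε₁ − ηε₂) − Π(ū − η∇G(ū))‖² | 𝒢]
  ≤ (1 − μη)²‖u − ū‖² + γ²S₁ + η²S₂` almost surely. -/
theorem stmt11 {D : ℕ} (hD : 1 ≤ D)
    {μ LG η γ S₁ S₂ : ℝ} (hμ : 0 < μ) (hμL : μ ≤ LG)
    (hη : 0 < η) (hγ : 0 < γ) (hstep : η * (μ + LG) ≤ 2)
    (hS₁ : 0 ≤ S₁) (hS₂ : 0 ≤ S₂)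
    (C : Set (EuclideanSpace ℝ (Fin D))) (hCne : C.Nonempty)
    (hCcl : IsClosed C) (hCcv : Convex ℝ C)
    (proj : EuclideanSpace ℝ (Fin D) → EuclideanSpace ℝ (Fin D))
    (hproj : ∀ x, proj x ∈ C ∧ ∀ y ∈ C, ‖x - proj x‖ ≤ ‖x - y‖)
    (G : EuclideanSpace ℝ (Fin D) → ℝ) (hG : ContDiff ℝ 2 G)
    (hHess : ∀ z v, μ * ‖v‖ ^ 2 ≤ ⟪fderiv ℝ (gradient G) z v, v⟫ ∧
      ⟪fderiv ℝ (gradient G) z v, v⟫ ≤ LG * ‖v‖ ^ 2)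
    {Ω : Type*} {m0 : MeasurableSpace Ω} (P : Measure Ω) [IsProbabilityMeasure P]
    (m : MeasurableSpace Ω) (hm : m ≤ m0)
    (u ubar : Ω → EuclideanSpace ℝ (Fin D))
    (hu : StronglyMeasurable[m] u) (hubar : StronglyMeasurable[m] ubar)
    (ε₁ ε₂ : Ω → EuclideanSpace ℝ (Fin D))
    (hε₁2 : MemLp ε₁ 2 P) (hε₂2 : MemLp ε₂ 2 P)
    (hε₁mean : P[ε₁|m] =ᵐ[P] 0)
    (hε₂mean : P[ε₂|m] =ᵐ[P] 0)
    (hε₁var : P[fun ω => ‖ε₁ ω‖ ^ 2|m] ≤ᵐ[P] fun _ => S₁)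
    (hε₂var : P[fun ω => ‖ε₂ ω‖ ^ 2|m] ≤ᵐ[P] fun _ => S₂)
    (huncorr : P[fun ω => (⟪ε₁ ω, ε₂ ω⟫ : ℝ)|m] =ᵐ[P] 0) :
    P[fun ω => ‖proj (u ω - η • gradient G (u ω) + γ • ε₁ ω - η • ε₂ ω)
          - proj (ubar ω - η • gradient G (ubar ω))‖ ^ 2|m]
      ≤ᵐ[P] fun ω => (1 - μ * η) ^ 2 * ‖u ω - ubar ω‖ ^ 2 + γ ^ 2 * S₁ + η ^ 2 * S₂ := by
  set X : Ω → ℝ := fun ω => ‖proj (u ω - η • gradient G (u ω) + γ • ε₁ ω - η • ε₂ ω)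
          - proj (ubar ω - η • gradient G (ubar ω))‖ ^ 2 with hX
  by_cases hXint : Integrable X P
  swap
  · rw [condExp_of_not_integrable hXint]
    exact Filter.Eventually.of_forall fun ω => by positivity
  -- for each k, the inequality holds a.e. on the set where ‖u - ubar‖ ≤ k
  have hkey : ∀ k : ℕ, ∀ᵐ ω ∂P, ‖u ω - ubar ω‖ ≤ (k : ℝ) →
      (P[X|m]) ω ≤ (1 - μ * η) ^ 2 * ‖u ω - ubar ω‖ ^ 2 + γ ^ 2 * S₁ + η ^ 2 * S₂ := by
    intro k
    set A : Set Ω := (fun ω => ‖u ω - ubar ω‖) ⁻¹' Set.Iic (k : ℝ) with hA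
    have hAm : MeasurableSet[m] A :=
      ((hu.sub hubar).norm.measurable) measurableSet_Iic
    set u' : Ω → EuclideanSpace ℝ (Fin D) := A.indicator u with hu'd
    set ubar' : Ω → EuclideanSpace ℝ (Fin D) := A.indicator ubar with hubar'd
    have hu' : StronglyMeasurable[m] u' := hu.indicator hAm
    have hubar' : StronglyMeasurable[m] ubar' := hubar.indicator hAm
    have hkb : ∀ ω, ‖u' ω - ubar' ω‖ ≤ (k : ℝ) := by
      intro ω
      by_cases hω : ω ∈ A
      · rw [hu'd, hubar'd, Set.indicator_of_mem hω, Set.indicator_of_mem hω]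
        exact hω
      · rw [hu'd, hubar'd, Set.indicator_of_notMem hω, Set.indicator_of_notMem hω]
        simp
    obtain ⟨hX'int, hX'le⟩ := key_step hμ hμL hη hγ hstep hS₁ hS₂ hCne hCcv proj hproj hG
      hHess P m hm u' ubar' hu' hubar' (k : ℝ) hkb ε₁ ε₂ hε₁2 hε₂2 hε₁mean hε₂mean
      hε₁var hε₂var huncorr
    set X' : Ω → ℝ := fun ω => ‖proj (u' ω - η • gradient G (u' ω) + γ • ε₁ ω - η • ε₂ ω)
          - proj (ubar' ω - η • gradient G (ubar' ω))‖ ^ 2 with hX'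
    -- the difference has conditional expectation vanishing on A
    have hsub : P[X - X'|m] =ᵐ[P] P[X|m] - P[X'|m] := condExp_sub hXint hX'int m
    have hindrw : (X - X') = Aᶜ.indicator (X - X') := by
      funext ω
      by_cases hω : ω ∈ A
      · have h1 : X ω = X' ω := by
          simp only [hX, hX', hu'd, hubar'd, Set.indicator_of_mem hω]
        have : ω ∉ Aᶜ := fun hc => hc hω
        rw [Set.indicator_of_notMem this]
        simp [Pi.sub_apply, h1]
      · rw [Set.indicator_of_mem (Set.mem_compl hω)]
    have hind : P[X - X'|m] =ᵐ[P] Aᶜ.indicator (P[X - X'|m]) := by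
      nth_rewrite 1 [hindrw]
      exact condExp_indicator (hXint.sub hX'int) hAm.compl
    filter_upwards [hsub, hind, hX'le] with ω e1 e2 e3
    intro hωk
    have hωA : ω ∈ A := hωk
    have hz : (P[X - X'|m]) ω = 0 := by
      rw [e2, Set.indicator_of_notMem (Set.notMem_compl_iff.mpr hωA)]
    have e1' : (P[X|m]) ω - (P[X'|m]) ω = 0 := by
      rw [← Pi.sub_apply (P[X|m]) (P[X'|m]), ← e1, hz]
    have hval : ‖u' ω - ubar' ω‖ = ‖u ω - ubar ω‖ := by
      simp only [hu'd, hubar'd, Set.indicator_of_mem hωA]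
    have := e3
    rw [hval] at this
    linarith
  have hae : ∀ᵐ ω ∂P, ∀ k : ℕ, ‖u ω - ubar ω‖ ≤ (k : ℝ) →
      (P[X|m]) ω ≤ (1 - μ * η) ^ 2 * ‖u ω - ubar ω‖ ^ 2 + γ ^ 2 * S₁ + η ^ 2 * S₂ :=
    ae_all_iff.mpr hkey
  filter_upwards [hae] with ω hω
  obtain ⟨k, hk⟩ := exists_nat_ge ‖u ω - ubar ω‖
  exact hω k hk
end

section
/- Let D ≥ 1, let 𝒞 ⊆ ℝ^D be a nonempty closed convex set with metric projection Π, let 0 < μ, and let κ̄ ≥ 0 be an integer. On a filtered probability space (Ω, (ℱ_k)_{k≥κ̄}, P), let (W_k)_{k≥κ̄} and (W̄_k)_{k≥κ̄} be square-integrable ℝ^D-valued adapted processes with W_κ̄ = W̄_κ̄. For each k ≥ κ̄, let G_k : ℝ^D → ℝ be twice continuously differentiable with μ·I ⪯ ∇²G_k(z) ⪯ L_k·I for all z, let η_k, γ_k > 0 satisfy η_k(μ + L_k) ≤ 2, and suppose W_{k+1} = Π(W_k − η_k∇G_k(W_k) + γ_k ε_k^{(1)} − η_k ε_k^{(2)})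 and W̄_{k+1} = Π(W̄_k − η_k∇G_k(W̄_k)), where ε_k^{(1)}, ε_k^{(2)} are ℱ_{k+1}-measurable, square-integrable, and satisfy almost surely E[ε_k^{(1)} | ℱ_k] = 0, E[ε_k^{(2)} | ℱ_k] = 0, E[‖ε_k^{(1)}‖² | ℱ_k] ≤ S₁, E[‖ε_k^{(2)}‖² | ℱ_k] ≤ S₂, and E[⟨ε_k^{(1)}, ε_k^{(2)}⟩ | ℱ_k] = 0, for constants S₁, S₂ ≥ 0. Then for every k ≥ κ̄: E[‖W_k − W̄_k‖²] ≤ Σ_{t=κ̄}^{k−1} P_{tk}²·(γ_t²·S₁ + η_t²·S₂), where P_{tk} = Π_{j=t+1}^{k−1}(1 − μη_j). -/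
open MeasureTheory
open scoped RealInnerProductSpace

section OpBound
variable {E : Type*} [NormedAddCommGroup E] [InnerProductSpace ℝ E]

lemma sym_op_bound (A : E →L[ℝ] E)
    (hsym : ∀ u v : E, ⟪A u, v⟫ = ⟪A v, u⟫) {c : ℝ} (hc : 0 ≤ c)
    (hb : ∀ v : E, |⟪A v, v⟫| ≤ c * ‖v‖ ^ 2) (u : E) : ‖A u‖ ≤ c * ‖u‖ := by
  by_cases hAu : A u = 0
  · rw [hAu, norm_zero]; positivity
  have hAu' : (0:ℝ) < ‖A u‖ := norm_pos_iff.mpr hAu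
  have key : ∀ w : E, ⟪A u, w⟫ ≤ c * (‖u‖ ^ 2 + ‖w‖ ^ 2) / 2 := by
    intro w
    have h1 : ⟪A (u + w), u + w⟫ - ⟪A (u - w), u - w⟫ = 4 * ⟪A u, w⟫ := by
      have h2 := hsym w u
      simp only [map_add, map_sub, inner_add_left, inner_add_right, inner_sub_left,
        inner_sub_right]
      linarith
    have h3 := (abs_le.mp (hb (u + w))).2
    have h4 := (abs_le.mp (hb (u - w))).1
    have h5 : ‖u + w‖ ^ 2 + ‖u - w‖ ^ 2 = 2 * (‖u‖ ^ 2 + ‖w‖ ^ 2) := by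
      rw [norm_add_sq_real, norm_sub_sq_real]; ring
    nlinarith
  have hkey := key ((‖u‖ / ‖A u‖) • A u)
  rw [real_inner_smul_right, real_inner_self_eq_norm_sq, norm_smul, Real.norm_eq_abs,
    abs_of_nonneg (by positivity)] at hkey
  have h6 : ‖u‖ / ‖A u‖ * ‖A u‖ ^ 2 = ‖u‖ * ‖A u‖ := by field_simp
  have h7 : ‖u‖ / ‖A u‖ * ‖A u‖ = ‖u‖ := by field_simp
  rw [h6, h7] at hkey
  by_cases hu : ‖u‖ = 0
  · rw [norm_eq_zero] at hu
    exact absurd (by rw [hu]; simp) hAu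
  have hu' : 0 < ‖u‖ := lt_of_le_of_ne (norm_nonneg _) (Ne.symm hu)
  nlinarith

end OpBound

section Grad
variable {E : Type*} [NormedAddCommGroup E] [InnerProductSpace ℝ E] [CompleteSpace E]
variable {f : E → ℝ}

lemma gradient_contDiff (hf : ContDiff ℝ 2 f) : ContDiff ℝ 1 (gradient f) := by
  have hfd : ContDiff ℝ 1 (fderiv ℝ f) := hf.fderiv_right (by norm_num)
  exact ((InnerProductSpace.toDual ℝ E).symm.contDiff).comp hfd

lemma fderiv_gradient_symm (hf : ContDiff ℝ 2 f) (z u v : E) :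
    ⟪fderiv ℝ (gradient f) z u, v⟫ = ⟪fderiv ℝ (gradient f) z v, u⟫ := by
  have hfd : ContDiff ℝ 1 (fderiv ℝ f) := hf.fderiv_right (by norm_num)
  have hdiff : DifferentiableAt ℝ (fderiv ℝ f) z := hfd.differentiable one_ne_zero z
  have hgdiff : DifferentiableAt ℝ (gradient f) z :=
    (gradient_contDiff hf).differentiable one_ne_zero z
  have hkey : ∀ a b : E, ⟪fderiv ℝ (gradient f) z a, b⟫ = fderiv ℝ (fderiv ℝ f) z a b := by
    intro a b
    have h1 : HasFDerivAt (fun w => ⟪b, gradient f w⟫)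
        ((innerSL ℝ b).comp (fderiv ℝ (gradient f) z)) z :=
      (innerSL ℝ b).hasFDerivAt.comp z hgdiff.hasFDerivAt
    have h2 : HasFDerivAt (fun w => (fderiv ℝ f w) b)
        ((ContinuousLinearMap.apply ℝ ℝ b).comp (fderiv ℝ (fderiv ℝ f) z)) z :=
      (ContinuousLinearMap.apply ℝ ℝ b).hasFDerivAt.comp z hdiff.hasFDerivAt
    have heq : (fun w => ⟪b, gradient f w⟫) = fun w => (fderiv ℝ f w) b := by
      funext w
      rw [real_inner_comm]
      exact InnerProductSpace.toDual_symm_apply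
    rw [heq] at h1
    have h3 := h1.unique h2
    calc ⟪fderiv ℝ (gradient f) z a, b⟫
        = ((innerSL ℝ b).comp (fderiv ℝ (gradient f) z)) a := by
          simp [real_inner_comm]
      _ = ((ContinuousLinearMap.apply ℝ ℝ b).comp (fderiv ℝ (fderiv ℝ f) z)) a := by rw [h3]
      _ = fderiv ℝ (fderiv ℝ f) z a b := rfl
  have hsymm : IsSymmSndFDerivAt ℝ f z := hf.contDiffAt.isSymmSndFDerivAt (by simp)
  rw [hkey u v, hkey v u]
  exact hsymm.eq u v
lemma grad_step_contract (hf : ContDiff ℝ 2 f)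
    {μ L ηk : ℝ} (hμ : 0 < μ) (hμL : μ ≤ L) (hη : 0 < ηk) (hstep : ηk * (μ + L) ≤ 2)
    (hHess : ∀ z v : E, μ * ‖v‖ ^ 2 ≤ ⟪fderiv ℝ (gradient f) z v, v⟫ ∧
      ⟪fderiv ℝ (gradient f) z v, v⟫ ≤ L * ‖v‖ ^ 2)
    (x y : E) :
    ‖(x - ηk • gradient f x) - (y - ηk • gradient f y)‖ ≤ (1 - μ * ηk) * ‖x - y‖ := by
  have hρ : 0 ≤ 1 - μ * ηk := by nlinarith [mul_nonneg hη.le (sub_nonneg.mpr hμL)]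
  have hgrad : ContDiff ℝ 1 (gradient f) := gradient_contDiff hf
  set F : E → E := fun z => z - ηk • gradient f z with hF
  have hFd : ∀ z : E, HasFDerivAt F
      (ContinuousLinearMap.id ℝ E - ηk • fderiv ℝ (gradient f) z) z := by
    intro z
    exact (hasFDerivAt_id z).sub
      (((hgrad.differentiable one_ne_zero) z).hasFDerivAt.const_smul ηk)
  have hbound : ∀ z : E, ‖fderiv ℝ F z‖ ≤ 1 - μ * ηk := by
    intro z
    rw [(hFd z).fderiv]
    refine ContinuousLinearMap.opNorm_le_bound _ hρ ?_
    refine sym_op_bound _ ?_ hρ ?_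
    · intro a b
      simp only [ContinuousLinearMap.sub_apply, ContinuousLinearMap.id_apply,
        ContinuousLinearMap.smul_apply, inner_sub_left, inner_smul_left,
        RCLike.conj_to_real]
      rw [fderiv_gradient_symm hf z a b, real_inner_comm a b]
    · intro v
      have h1 := (hHess z v).1
      have h2 := (hHess z v).2
      simp only [ContinuousLinearMap.sub_apply, ContinuousLinearMap.id_apply,
        ContinuousLinearMap.smul_apply, inner_sub_left, inner_smul_left,
        RCLike.conj_to_real, real_inner_self_eq_norm_sq]
      rw [abs_le]
      constructor
      · nlinarith [mul_le_mul_of_nonneg_left h2 hη.le, sq_nonneg ‖v‖]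
      · nlinarith [mul_le_mul_of_nonneg_left h1 hη.le, sq_nonneg ‖v‖]
  have hlip := Convex.norm_image_sub_le_of_norm_fderiv_le
    (fun z _ => (hFd z).differentiableAt) (fun z _ => hbound z) convex_univ
    (Set.mem_univ y) (Set.mem_univ x)
  exact hlip

end Grad

section Proj
variable {E : Type*} [NormedAddCommGroup E] [InnerProductSpace ℝ E]

lemma proj_nonexp {C : Set E} (hCne : C.Nonempty) (hCcv : Convex ℝ C)
    (proj : E → E) (hproj : ∀ x, proj x ∈ C ∧ ∀ y ∈ C, ‖x - proj x‖ ≤ ‖x - y‖)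
    (x y : E) : ‖proj x - proj y‖ ≤ ‖x - y‖ := by
  have hVI : ∀ a : E, ∀ w ∈ C, ⟪a - proj a, w - proj a⟫ ≤ 0 := by
    intro a w hw
    haveI : Nonempty C := hCne.to_subtype
    have hmin : ‖a - proj a‖ = ⨅ w : C, ‖a - w‖ := by
      refine le_antisymm (le_ciInf fun w => (hproj a).2 w w.2) ?_
      have hbb : BddBelow (Set.range fun w : C => ‖a - ↑w‖) := by
        refine ⟨0, ?_⟩
        rintro r ⟨w, rfl⟩
        exact norm_nonneg _
      exact ciInf_le hbb ⟨proj a, (hproj a).1⟩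
    exact ((norm_eq_iInf_iff_real_inner_le_zero hCcv (hproj a).1).mp hmin) w hw
  have h1 := hVI x (proj y) (hproj y).1
  have h2 := hVI y (proj x) (hproj x).1
  set d := proj x - proj y with hd
  have key : ‖d‖ ^ 2 ≤ ⟪x - y, d⟫ := by
    have e1 : ⟪x - proj x, d⟫ = -⟪x - proj x, proj y - proj x⟫ := by
      rw [← inner_neg_right]
      congr 1
      rw [hd]
      abel
    have e2 : ⟪x - y, d⟫ - ⟪d, d⟫ = ⟪x - proj x, d⟫ - ⟪y - proj y, d⟫ := by
      rw [← inner_sub_left, ← inner_sub_left]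
      congr 1
      rw [hd]
      abel
    have e3 : ⟪d, d⟫ = ‖d‖ ^ 2 := real_inner_self_eq_norm_sq d
    linarith
  have h4 : ⟪x - y, d⟫ ≤ ‖x - y‖ * ‖d‖ := real_inner_le_norm _ _
  by_cases hdz : ‖d‖ = 0
  · rw [hdz]; positivity
  have : 0 < ‖d‖ := lt_of_le_of_ne (norm_nonneg _) (Ne.symm hdz)
  nlinarith

end Proj

section Prob
variable {Ω : Type*} {m0 : MeasurableSpace Ω} {P : Measure Ω} [IsProbabilityMeasure P]
variable {E : Type*} [NormedAddCommGroup E] [InnerProductSpace ℝ E]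

lemma integrable_mul_of_L2 {f g : Ω → ℝ} (hf : MemLp f 2 P) (hg : MemLp g 2 P) :
    Integrable (fun ω => f ω * g ω) P := by
  have hfi : Integrable (fun ω => ‖f ω‖ ^ 2) P :=
    (memLp_two_iff_integrable_sq_norm hf.aestronglyMeasurable).mp hf
  have hgi : Integrable (fun ω => ‖g ω‖ ^ 2) P :=
    (memLp_two_iff_integrable_sq_norm hg.aestronglyMeasurable).mp hg
  refine (hfi.add hgi).mono' (hf.aestronglyMeasurable.mul hg.aestronglyMeasurable) ?_
  filter_upwards with ω
  simp only [Pi.add_apply, Real.norm_eq_abs, abs_mul, sq_abs]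
  nlinarith [sq_nonneg (|f ω| - |g ω|), abs_nonneg (f ω), abs_nonneg (g ω), sq_abs (f ω), sq_abs (g ω)]

lemma integrable_inner_of_L2 {f g : Ω → E} (hf : MemLp f 2 P) (hg : MemLp g 2 P) :
    Integrable (fun ω => ⟪f ω, g ω⟫) P := by
  have hfi : Integrable (fun ω => ‖f ω‖ ^ 2) P :=
    (memLp_two_iff_integrable_sq_norm hf.aestronglyMeasurable).mp hf
  have hgi : Integrable (fun ω => ‖g ω‖ ^ 2) P :=
    (memLp_two_iff_integrable_sq_norm hg.aestronglyMeasurable).mp hg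
  refine (hfi.add hgi).mono' (hf.aestronglyMeasurable.inner hg.aestronglyMeasurable) ?_
  filter_upwards with ω
  simp only [Pi.add_apply]
  rw [Real.norm_eq_abs]
  refine (abs_real_inner_le_norm _ _).trans ?_
  nlinarith [sq_nonneg (‖f ω‖ - ‖g ω‖), norm_nonneg (f ω), norm_nonneg (g ω)]

lemma integral_sq_norm_le {m : MeasurableSpace Ω} (hm : m ≤ m0) {ε : Ω → E}
    (hε2 : MemLp ε 2 P) {S : ℝ}
    (hvar : P[fun ω => ‖ε ω‖ ^ 2|m] ≤ᵐ[P] fun _ => S) : ∫ ω, ‖ε ω‖ ^ 2 ∂P ≤ S := by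
  haveI : SigmaFinite (P.trim hm) := by infer_instance
  calc ∫ ω, ‖ε ω‖ ^ 2 ∂P = ∫ ω, (P[fun ω => ‖ε ω‖ ^ 2|m]) ω ∂P := (integral_condExp hm).symm
    _ ≤ ∫ _ω, S ∂P := integral_mono_ae integrable_condExp (integrable_const S) hvar
    _ = S := by simp

lemma integral_eq_zero_of_condexp_zero {m : MeasurableSpace Ω} (hm : m ≤ m0) {f : Ω → ℝ}
    (h : P[f|m] =ᵐ[P] 0) : ∫ ω, f ω ∂P = 0 := by
  haveI : SigmaFinite (P.trim hm) := by infer_instance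
  calc ∫ ω, f ω ∂P = ∫ ω, (P[f|m]) ω ∂P := (integral_condExp hm).symm
    _ = ∫ _ω, (0:ℝ) ∂P := integral_congr_ae h
    _ = 0 := by simp

end Prob

section Prob2
variable {Ω : Type*} {m0 : MeasurableSpace Ω} {P : Measure Ω} [IsProbabilityMeasure P]
variable {E : Type*} [NormedAddCommGroup E] [InnerProductSpace ℝ E]

lemma coord_integrable {D : ℕ} {μ : Measure Ω} {ε : Ω → EuclideanSpace ℝ (Fin D)}
    (h : Integrable ε μ) (i : Fin D) : Integrable (fun ω => ε ω i) μ :=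
  (EuclideanSpace.proj (𝕜 := ℝ) i).integrable_comp h

lemma coord_integral {D : ℕ} {μ : Measure Ω} {ε : Ω → EuclideanSpace ℝ (Fin D)}
    (h : Integrable ε μ) (i : Fin D) : ∫ ω, ε ω i ∂μ = (∫ ω, ε ω ∂μ) i := by
  have h2 := (EuclideanSpace.proj (𝕜 := ℝ) i).integral_comp_comm h
  simpa using h2

lemma coord_memLp {D : ℕ} {μ : Measure Ω} {ε : Ω → EuclideanSpace ℝ (Fin D)}
    (h : MemLp ε 2 μ) (i : Fin D) : MemLp (fun ω => ε ω i) 2 μ :=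
  (EuclideanSpace.proj (𝕜 := ℝ) i).comp_memLp' h

lemma condexp_coord_zero {D : ℕ} {m : MeasurableSpace Ω} (hm : m ≤ m0)
    {ε : Ω → EuclideanSpace ℝ (Fin D)} (hεi : Integrable ε P)
    (hmean : P[ε|m] =ᵐ[P] 0) (i : Fin D) :
    P[fun ω => ε ω i|m] =ᵐ[P] 0 := by
  haveI : SigmaFinite (P.trim hm) := by infer_instance
  have hεii : Integrable (fun ω => ε ω i) P := coord_integrable hεi i
  refine (ae_eq_condExp_of_forall_setIntegral_eq hm hεii ?_ ?_ ?_).symm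
  · intro s _ _
    exact integrable_zero Ω ℝ (P.restrict s)
  · intro s hs _
    have h0 : ∫ ω in s, ε ω ∂P = 0 := by
      rw [← setIntegral_condExp hm hεi hs]
      rw [integral_congr_ae (ae_restrict_of_ae hmean)]
      simp
    have h1 := coord_integral (μ := P.restrict s) (hεi.mono_measure Measure.restrict_le_self) i
    rw [h1, h0]
    simp
  · exact (stronglyMeasurable_zero : StronglyMeasurable[m] (0 : Ω → ℝ)).aestronglyMeasurable

lemma integral_inner_zero {D : ℕ} {m : MeasurableSpace Ω} (hm : m ≤ m0)
    {u ε : Ω → EuclideanSpace ℝ (Fin D)} (hum : StronglyMeasurable[m] u)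
    (hu2 : MemLp u 2 P) (hε2 : MemLp ε 2 P) (hmean : P[ε|m] =ᵐ[P] 0) :
    ∫ ω, ⟪u ω, ε ω⟫ ∂P = 0 := by
  haveI : SigmaFinite (P.trim hm) := by infer_instance
  have hui2 : ∀ i : Fin D, MemLp (fun ω => u ω i) 2 P := fun i => coord_memLp hu2 i
  have hεi2 : ∀ i : Fin D, MemLp (fun ω => ε ω i) 2 P := fun i => coord_memLp hε2 i
  have hprod : ∀ i : Fin D, Integrable (fun ω => u ω i * ε ω i) P := fun i =>
    integrable_mul_of_L2 (hui2 i) (hεi2 i)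
  have hcoord : ∀ i : Fin D, ∫ ω, u ω i * ε ω i ∂P = 0 := by
    intro i
    have humi : StronglyMeasurable[m] (fun ω => u ω i) :=
      (EuclideanSpace.proj (𝕜 := ℝ) i).continuous.comp_stronglyMeasurable hum
    have hz := condexp_coord_zero hm (hε2.integrable one_le_two) hmean i
    have hpull := condExp_mul_of_stronglyMeasurable_left humi (hprod i) ((hεi2 i).integrable one_le_two)
    have hzero : P[(fun ω => u ω i) * fun ω => ε ω i|m] =ᵐ[P] 0 := by
      refine hpull.trans ?_
      filter_upwards [hz] with ω h
      simp only [Pi.mul_apply, Pi.zero_apply] at h ⊢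
      rw [h, mul_zero]
    calc ∫ ω, u ω i * ε ω i ∂P
        = ∫ ω, (P[(fun ω => u ω i) * fun ω => ε ω i|m]) ω ∂P := (integral_condExp hm).symm
      _ = ∫ _ω, (0:ℝ) ∂P := integral_congr_ae hzero
      _ = 0 := by simp
  have hexp : ∀ ω, ⟪u ω, ε ω⟫ = ∑ i : Fin D, u ω i * ε ω i := by
    intro ω
    simp [PiLp.inner_apply, RCLike.inner_apply, conj_trivial, mul_comm]
  calc ∫ ω, ⟪u ω, ε ω⟫ ∂P = ∫ ω, ∑ i : Fin D, u ω i * ε ω i ∂P := by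
        refine integral_congr_ae ?_
        filter_upwards with ω
        exact hexp ω
    _ = ∑ i : Fin D, ∫ ω, u ω i * ε ω i ∂P := integral_finset_sum _ (fun i _ => hprod i)
    _ = 0 := by simp [hcoord]

end Prob2


set_option maxHeartbeats 1000000 in
/-- **Bound (27) of Theorem 1**: the expected squared distance between the noisy
projected DGD iterates `W_k` and the noise-free dynamics `W̄_k` (started from the same
point at iteration `κ̄`) satisfies
`E‖W_k − W̄_k‖² ≤ Σ_{t=κ̄}^{k−1} P_{tk}²(γ_t²S₁ + η_t²S₂)` with
`P_{tk} = Π_{j=t+1}^{k−1}(1 − μη_j)`. -/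
theorem stmt12 {D : ℕ} (hD : 1 ≤ D)
    {μ S₁ S₂ : ℝ} (hμ : 0 < μ) (hS₁ : 0 ≤ S₁) (hS₂ : 0 ≤ S₂)
    (C : Set (EuclideanSpace ℝ (Fin D))) (hCne : C.Nonempty)
    (hCcl : IsClosed C) (hCcv : Convex ℝ C)
    (proj : EuclideanSpace ℝ (Fin D) → EuclideanSpace ℝ (Fin D))
    (hproj : ∀ x, proj x ∈ C ∧ ∀ y ∈ C, ‖x - proj x‖ ≤ ‖x - y‖)
    (κ : ℕ)
    {Ω : Type*} {m0 : MeasurableSpace Ω} (P : Measure Ω) [IsProbabilityMeasure P]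
    (ℱ : Filtration ℕ m0)
    (W Wbar : ℕ → Ω → EuclideanSpace ℝ (Fin D))
    (hW2 : ∀ k, κ ≤ k → MemLp (W k) 2 P)
    (hWbar2 : ∀ k, κ ≤ k → MemLp (Wbar k) 2 P)
    (hWad : ∀ k, κ ≤ k → StronglyMeasurable[ℱ k] (W k))
    (hWbarad : ∀ k, κ ≤ k → StronglyMeasurable[ℱ k] (Wbar k))
    (hinit : W κ = Wbar κ)
    (G : ℕ → EuclideanSpace ℝ (Fin D) → ℝ)
    (Lsm η γ : ℕ → ℝ)
    (hG : ∀ k, κ ≤ k → ContDiff ℝ 2 (G k))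
    (hμL : ∀ k, κ ≤ k → μ ≤ Lsm k)
    (hHess : ∀ k, κ ≤ k → ∀ z v,
      μ * ‖v‖ ^ 2 ≤ ⟪fderiv ℝ (gradient (G k)) z v, v⟫ ∧
      ⟪fderiv ℝ (gradient (G k)) z v, v⟫ ≤ Lsm k * ‖v‖ ^ 2)
    (hη : ∀ k, κ ≤ k → 0 < η k) (hγ : ∀ k, κ ≤ k → 0 < γ k)
    (hstep : ∀ k, κ ≤ k → η k * (μ + Lsm k) ≤ 2)
    (ε₁ ε₂ : ℕ → Ω → EuclideanSpace ℝ (Fin D))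
    (hε₁meas : ∀ k, κ ≤ k → StronglyMeasurable[ℱ (k+1)] (ε₁ k))
    (hε₂meas : ∀ k, κ ≤ k → StronglyMeasurable[ℱ (k+1)] (ε₂ k))
    (hε₁2 : ∀ k, κ ≤ k → MemLp (ε₁ k) 2 P)
    (hε₂2 : ∀ k, κ ≤ k → MemLp (ε₂ k) 2 P)
    (hε₁mean : ∀ k, κ ≤ k → P[ε₁ k|ℱ k] =ᵐ[P] 0)
    (hε₂mean : ∀ k, κ ≤ k → P[ε₂ k|ℱ k] =ᵐ[P] 0)
    (hε₁var : ∀ k, κ ≤ k → P[fun ω => ‖ε₁ k ω‖ ^ 2|ℱ k] ≤ᵐ[P] fun _ => S₁)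
    (hε₂var : ∀ k, κ ≤ k → P[fun ω => ‖ε₂ k ω‖ ^ 2|ℱ k] ≤ᵐ[P] fun _ => S₂)
    (huncorr : ∀ k, κ ≤ k → P[fun ω => (⟪ε₁ k ω, ε₂ k ω⟫ : ℝ)|ℱ k] =ᵐ[P] 0)
    (hWrec : ∀ k, κ ≤ k → ∀ ω, W (k+1) ω
      = proj (W k ω - η k • gradient (G k) (W k ω) + γ k • ε₁ k ω - η k • ε₂ k ω))
    (hWbarrec : ∀ k, κ ≤ k → ∀ ω, Wbar (k+1) ω
      = proj (Wbar k ω - η k • gradient (G k) (Wbar k ω))) :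
    ∀ k, κ ≤ k →
      ∫ ω, ‖W k ω - Wbar k ω‖ ^ 2 ∂P
        ≤ ∑ t ∈ Finset.Ico κ k,
            (∏ j ∈ Finset.Ico (t+1) k, (1 - μ * η j)) ^ 2
              * ((γ t) ^ 2 * S₁ + (η t) ^ 2 * S₂) := by
  intro k hk
  induction k, hk using Nat.le_induction with
  | base => simp [hinit]
  | succ k hk ih =>
    have hk1 : κ ≤ k + 1 := hk.trans (Nat.le_succ k)
    have hρ : 0 ≤ 1 - μ * η k := by
      nlinarith [mul_nonneg (hη k hk).le (sub_nonneg.mpr (hμL k hk)), hstep k hk]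
    set Fk : EuclideanSpace ℝ (Fin D) → EuclideanSpace ℝ (Fin D) :=
      fun z => z - η k • gradient (G k) z with hFk
    set u : Ω → EuclideanSpace ℝ (Fin D) := fun ω => Fk (W k ω) - Fk (Wbar k ω) with hud
    set e : Ω → EuclideanSpace ℝ (Fin D) := fun ω => γ k • ε₁ k ω - η k • ε₂ k ω with hed
    have hcontr : ∀ x y, ‖Fk x - Fk y‖ ≤ (1 - μ * η k) * ‖x - y‖ := by
      intro x y
      simp only [hFk]
      exact grad_step_contract (hG k hk) hμ (hμL k hk) (hη k hk) (hstep k hk) (hHess k hk) x y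
    have hgradc : Continuous (gradient (G k)) := (gradient_contDiff (hG k hk)).continuous
    have hFkc : Continuous Fk := by
      simp only [hFk]
      exact continuous_id.sub (hgradc.const_smul (η k))
    have hum : StronglyMeasurable[ℱ k] u := by
      simp only [hud]
      exact (hFkc.comp_stronglyMeasurable (hWad k hk)).sub
        (hFkc.comp_stronglyMeasurable (hWbarad k hk))
    have hΔ2 : MemLp (fun ω => W k ω - Wbar k ω) 2 P := (hW2 k hk).sub (hWbar2 k hk)
    have hu2 : MemLp u 2 P := by
      refine MemLp.of_le ((hΔ2.norm).const_mul (1 - μ * η k))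
        ((hum.mono (ℱ.le k)).aestronglyMeasurable) ?_
      filter_upwards with ω
      rw [Real.norm_eq_abs]
      exact (hcontr (W k ω) (Wbar k ω)).trans (le_abs_self _)
    have he2 : MemLp e 2 P := by
      have h1 := ((hε₁2 k hk).const_smul (γ k)).sub ((hε₂2 k hk).const_smul (η k))
      exact h1
    have hΔint : Integrable (fun ω => ‖W k ω - Wbar k ω‖ ^ 2) P :=
      (memLp_two_iff_integrable_sq_norm hΔ2.aestronglyMeasurable).mp hΔ2
    have hΔ2' : MemLp (fun ω => W (k+1) ω - Wbar (k+1) ω) 2 P :=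
      (hW2 _ hk1).sub (hWbar2 _ hk1)
    have hΔint' : Integrable (fun ω => ‖W (k+1) ω - Wbar (k+1) ω‖ ^ 2) P :=
      (memLp_two_iff_integrable_sq_norm hΔ2'.aestronglyMeasurable).mp hΔ2'
    have hue2 : MemLp (fun ω => u ω + e ω) 2 P := hu2.add he2
    have hueint : Integrable (fun ω => ‖u ω + e ω‖ ^ 2) P :=
      (memLp_two_iff_integrable_sq_norm hue2.aestronglyMeasurable).mp hue2
    have huint : Integrable (fun ω => ‖u ω‖ ^ 2) P :=
      (memLp_two_iff_integrable_sq_norm hu2.aestronglyMeasurable).mp hu2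
    have heint : Integrable (fun ω => ‖e ω‖ ^ 2) P :=
      (memLp_two_iff_integrable_sq_norm he2.aestronglyMeasurable).mp he2
    have hiue : Integrable (fun ω => ⟪u ω, e ω⟫) P := integrable_inner_of_L2 hu2 he2
    have hiue1 : Integrable (fun ω => ⟪u ω, ε₁ k ω⟫) P :=
      integrable_inner_of_L2 hu2 (hε₁2 k hk)
    have hiue2 : Integrable (fun ω => ⟪u ω, ε₂ k ω⟫) P :=
      integrable_inner_of_L2 hu2 (hε₂2 k hk)
    have hiε12 : Integrable (fun ω => ⟪ε₁ k ω, ε₂ k ω⟫) P :=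
      integrable_inner_of_L2 (hε₁2 k hk) (hε₂2 k hk)
    have hiε1n : Integrable (fun ω => ‖ε₁ k ω‖ ^ 2) P :=
      (memLp_two_iff_integrable_sq_norm (hε₁2 k hk).aestronglyMeasurable).mp (hε₁2 k hk)
    have hiε2n : Integrable (fun ω => ‖ε₂ k ω‖ ^ 2) P :=
      (memLp_two_iff_integrable_sq_norm (hε₂2 k hk).aestronglyMeasurable).mp (hε₂2 k hk)
    have hpt : ∀ ω, ‖W (k+1) ω - Wbar (k+1) ω‖ ≤ ‖u ω + e ω‖ := by
      intro ω
      rw [hWrec k hk ω, hWbarrec k hk ω]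
      have hne := proj_nonexp hCne hCcv proj hproj
        (W k ω - η k • gradient (G k) (W k ω) + γ k • ε₁ k ω - η k • ε₂ k ω)
        (Wbar k ω - η k • gradient (G k) (Wbar k ω))
      have harg : (W k ω - η k • gradient (G k) (W k ω) + γ k • ε₁ k ω - η k • ε₂ k ω) -
          (Wbar k ω - η k • gradient (G k) (Wbar k ω)) = u ω + e ω := by
        simp only [hud, hed, hFk]
        abel
      rw [← harg]
      exact hne
    have step1 : ∫ ω, ‖W (k+1) ω - Wbar (k+1) ω‖ ^ 2 ∂P ≤ ∫ ω, ‖u ω + e ω‖ ^ 2 ∂P := by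
      refine integral_mono_ae hΔint' hueint ?_
      filter_upwards with ω
      exact pow_le_pow_left₀ (norm_nonneg _) (hpt ω) 2
    have step2 : ∫ ω, ‖u ω + e ω‖ ^ 2 ∂P
        = ∫ ω, ‖u ω‖ ^ 2 ∂P + 2 * ∫ ω, ⟪u ω, e ω⟫ ∂P + ∫ ω, ‖e ω‖ ^ 2 ∂P := by
      have hpw : (fun ω => ‖u ω + e ω‖ ^ 2)
          = fun ω => ‖u ω‖ ^ 2 + 2 * ⟪u ω, e ω⟫ + ‖e ω‖ ^ 2 := by
        funext ω
        exact norm_add_sq_real _ _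
      have ha : Integrable (fun ω => ‖u ω‖ ^ 2 + 2 * ⟪u ω, e ω⟫) P :=
        huint.add (hiue.const_mul 2)
      rw [hpw, integral_add ha heint, integral_add huint (hiue.const_mul 2),
        integral_const_mul]
    have hcross : ∫ ω, ⟪u ω, e ω⟫ ∂P = 0 := by
      have hpw : (fun ω => ⟪u ω, e ω⟫)
          = fun ω => γ k * ⟪u ω, ε₁ k ω⟫ - η k * ⟪u ω, ε₂ k ω⟫ := by
        funext ω
        simp only [hed]
        rw [inner_sub_right, real_inner_smul_right, real_inner_smul_right]
      rw [hpw, integral_sub (hiue1.const_mul (γ k)) (hiue2.const_mul (η k)),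
        integral_const_mul, integral_const_mul,
        integral_inner_zero (ℱ.le k) hum hu2 (hε₁2 k hk) (hε₁mean k hk),
        integral_inner_zero (ℱ.le k) hum hu2 (hε₂2 k hk) (hε₂mean k hk)]
      ring
    have hnoise : ∫ ω, ‖e ω‖ ^ 2 ∂P ≤ γ k ^ 2 * S₁ + η k ^ 2 * S₂ := by
      have hpw : (fun ω => ‖e ω‖ ^ 2) = fun ω =>
          γ k ^ 2 * ‖ε₁ k ω‖ ^ 2 - 2 * (γ k * η k) * ⟪ε₁ k ω, ε₂ k ω⟫
            + η k ^ 2 * ‖ε₂ k ω‖ ^ 2 := by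
        funext ω
        simp only [hed]
        rw [norm_sub_sq_real, norm_smul, norm_smul, real_inner_smul_left,
          real_inner_smul_right]
        simp only [Real.norm_eq_abs, mul_pow, sq_abs]
        ring
      have ha : Integrable (fun ω =>
          γ k ^ 2 * ‖ε₁ k ω‖ ^ 2 - 2 * (γ k * η k) * ⟪ε₁ k ω, ε₂ k ω⟫) P :=
        (hiε1n.const_mul _).sub (hiε12.const_mul _)
      rw [hpw, integral_add ha (hiε2n.const_mul _),
        integral_sub (hiε1n.const_mul _) (hiε12.const_mul _), integral_const_mul,
        integral_const_mul, integral_const_mul]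
      have h1 := integral_sq_norm_le (ℱ.le k) (hε₁2 k hk) (hε₁var k hk)
      have h2 := integral_sq_norm_le (ℱ.le k) (hε₂2 k hk) (hε₂var k hk)
      have h3 : ∫ ω, ⟪ε₁ k ω, ε₂ k ω⟫ ∂P = 0 :=
        integral_eq_zero_of_condexp_zero (ℱ.le k) (huncorr k hk)
      rw [h3]
      have hb1 := mul_le_mul_of_nonneg_left h1 (sq_nonneg (γ k))
      have hb2 := mul_le_mul_of_nonneg_left h2 (sq_nonneg (η k))
      linarith
    have hcontr2 : ∫ ω, ‖u ω‖ ^ 2 ∂P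
        ≤ (1 - μ * η k) ^ 2 * ∫ ω, ‖W k ω - Wbar k ω‖ ^ 2 ∂P := by
      rw [← integral_const_mul]
      refine integral_mono_ae huint (hΔint.const_mul _) ?_
      filter_upwards with ω
      have hb := hcontr (W k ω) (Wbar k ω)
      calc ‖u ω‖ ^ 2 ≤ ((1 - μ * η k) * ‖W k ω - Wbar k ω‖) ^ 2 :=
            pow_le_pow_left₀ (norm_nonneg _) hb 2
        _ = (1 - μ * η k) ^ 2 * ‖W k ω - Wbar k ω‖ ^ 2 := by ring
    have hsum : ∑ t ∈ Finset.Ico κ (k+1),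
        (∏ j ∈ Finset.Ico (t+1) (k+1), (1 - μ * η j)) ^ 2 * ((γ t) ^ 2 * S₁ + (η t) ^ 2 * S₂)
        = (1 - μ * η k) ^ 2 * ∑ t ∈ Finset.Ico κ k,
            (∏ j ∈ Finset.Ico (t+1) k, (1 - μ * η j)) ^ 2 * ((γ t) ^ 2 * S₁ + (η t) ^ 2 * S₂)
          + ((γ k) ^ 2 * S₁ + (η k) ^ 2 * S₂) := by
      rw [Finset.sum_Ico_succ_top hk, Finset.mul_sum]
      congr 1
      · refine Finset.sum_congr rfl ?_
        intro t ht
        have ht' : t + 1 ≤ k := (Finset.mem_Ico.mp ht).2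
        rw [Finset.prod_Ico_succ_top ht']
        ring
      · simp
    rw [hsum]
    have hmul := mul_le_mul_of_nonneg_left ih (sq_nonneg (1 - μ * η k))
    linarith [step1, step2, hcross, hnoise, hcontr2]
end
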